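/- arXiv:1808.08996 — 12 statements merged into one kernel-verified Lean document; each statement's English description precedes it below -/
import Mathlib

section
/- For every n ≥ 5, the graph G_n obtained from a complete graph on n−1 vertices by adding a new vertex v joined by edges to exactly three vertices of the complete graph has no orientation of diameter two. -/
/-- `D` is an orientation of the simple graph `G`: every arc lies on an edge of `G`,
and every edge of `G` gets exactly one direction. -/
def IsOrientation {V : Type*} (G : SimpleGraph V) (D : V → V → Prop) : Prop :=
  (∀ u v, D u v → G.Adj u v) ∧ (∀ u v, G.Adj u v → (D u v ↔ ¬ D v u))

/-- The directed distance from `u` to `v` in the digraph `D` is at most 2. -/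
def DistLE2 {V : Type*} (D : V → V → Prop) (u v : V) : Prop :=
  D u v ∨ ∃ w, D u w ∧ D w v

/-- `D` is an orientation of the subgraph of `G` induced by `W`. -/
def IsOrientationOn {V : Type*} (G : SimpleGraph V) (W : Set V) (D : V → V → Prop) : Prop :=
  (∀ u v, D u v → u ∈ W ∧ v ∈ W ∧ G.Adj u v) ∧
  (∀ u v, u ∈ W → v ∈ W → G.Adj u v → (D u v ↔ ¬ D v u))

/-!
If a vertex `v` of an oriented graph of diameter two has at most one out-neighbour `x`, then
every vertex other than `v` and `x` is reached from `v` only through `x`, so `x` dominates it;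
such a vertex can then reach `x` only through `v`, hence is an in-neighbour of `v`. Thus a vertex
that is not adjacent to all others has two out-neighbours and, reversing the orientation, two
in-neighbours. In `G_n` with `n ≥ 5` the extra vertex misses a clique vertex but has only three
neighbours.
-/

section DiameterTwo

variable {V : Type*} {D : V → V → Prop}

theorem distLE2_flip {u v : V} : DistLE2 (flip D) u v ↔ DistLE2 D v u := by
  simp only [DistLE2, flip, and_comm]

theorem arc_or_arc_of_outNeighbor_subsingleton (hanti : ∀ u w, D u w → ¬ D w u)
    (hdiam : ∀ u w, u ≠ w → DistLE2 D u w) {v : V} (hv : ∀ w w', D v w → D v w' → w = w')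
    {u : V} (huv : u ≠ v) : D v u ∨ D u v := by
  have hirrefl : ∀ y, ¬ D y y := fun y h => hanti y y h h
  rcases hdiam v u huv.symm with hvu | ⟨x, hvx, hxu⟩
  · exact .inl hvu
  have hdom : ∀ y, y ≠ v → y ≠ x → D x y := by
    intro y hyv hyx
    rcases hdiam v y hyv.symm with hvy | ⟨z, hvz, hzy⟩
    · exact absurd (hv y x hvy hvx) hyx
    · rwa [hv z x hvz hvx] at hzy
  have hux : u ≠ x := by rintro rfl; exact hirrefl u hxu
  rcases hdiam u x hux with hux' | ⟨y, huy, hyx⟩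
  · exact absurd hux' (hanti x u hxu)
  by_cases hyv : y = v
  · exact .inr (hyv ▸ huy)
  · have hyx' : y ≠ x := by rintro rfl; exact hirrefl y hyx
    exact absurd hyx (hanti x y (hdom y hyv hyx'))

theorem exists_two_outNeighbors_of_not_arc (hanti : ∀ u w, D u w → ¬ D w u)
    (hdiam : ∀ u w, u ≠ w → DistLE2 D u w) {u v : V} (huv : u ≠ v) (hvu : ¬ D v u)
    (huv' : ¬ D u v) : ∃ a b, a ≠ b ∧ D v a ∧ D v b := by
  by_contra! h
  exact (arc_or_arc_of_outNeighbor_subsingleton hanti hdiam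
    (fun a b ha hb => by_contra fun hab => h a b hab ha hb) huv).elim hvu huv'

end DiameterTwo

/-- For every `n ≥ 5`, the graph obtained from `K_{n-1}` by adding a vertex joined
to exactly three clique vertices has no orientation of diameter two. -/
theorem stmt0 (n : ℕ) (hn : 5 ≤ n) (G : SimpleGraph (Fin n))
    (hG : ∀ u v : Fin n, G.Adj u v ↔ u ≠ v ∧
      (((u : ℕ) < n - 1 ∧ (v : ℕ) < n - 1) ∨
       ((u : ℕ) = n - 1 ∧ (v : ℕ) < 3) ∨ ((v : ℕ) = n - 1 ∧ (u : ℕ) < 3))) :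
    ¬ ∃ D : Fin n → Fin n → Prop, IsOrientation G D ∧
      ∀ u v, u ≠ v → DistLE2 D u v := by
  rintro ⟨D, ⟨harc, horient⟩, hdiam⟩
  have hanti : ∀ u w, D u w → ¬ D w u := fun u w h => (horient u w (harc u w h)).mp h
  set v : Fin n := ⟨n - 1, by omega⟩
  set u : Fin n := ⟨3, by omega⟩
  have huv : u ≠ v := Fin.ne_of_val_ne (by simp [u, v]; omega)
  have hnadj : ¬ G.Adj u v := by rw [hG]; simp [u, v]; omega
  have hnbr : ∀ w, G.Adj v w → (w : ℕ) < 3 := by intro w; rw [hG]; simp [v]; omega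
  obtain ⟨a, b, hab, hva, hvb⟩ := exists_two_outNeighbors_of_not_arc hanti hdiam huv
    (fun h => hnadj (harc _ _ h).symm) (fun h => hnadj (harc _ _ h))
  obtain ⟨c, d, hcd, hcv, hdv⟩ := exists_two_outNeighbors_of_not_arc (D := flip D)
    (fun x y h => hanti y x h) (fun x y h => distLE2_flip.2 (hdiam y x h.symm)) huv
    (fun h => hnadj (harc _ _ h)) (fun h => hnadj (harc _ _ h).symm)
  have hout_in : ∀ x y, D v x → D y v → (x : ℕ) ≠ y := by
    rintro x y hx hy hxy; exact hanti _ _ hx (Fin.ext hxy ▸ hy)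
  -- `a, b, c, d` would be four distinct neighbours of `v`
  have := Fin.val_ne_iff.2 hab; have := Fin.val_ne_iff.2 hcd
  have := hnbr a (harc _ _ hva); have := hnbr b (harc _ _ hvb)
  have := hnbr c (harc _ _ hcv).symm; have := hnbr d (harc _ _ hdv).symm
  have := hout_in a c hva hcv; have := hout_in a d hva hdv
  have := hout_in b c hvb hcv; have := hout_in b d hvb hdv
  omega
end

section
/- Let a, b be integers with 2 ≤ a ≤ b ≤ C(a, ⌊a/2⌋). Then the complete bipartite graph K_{a,b} has an orientation D such that for any two vertices x, y lying in the same partite set, the directed distance from x to y in D is at most 2, and moreover every vertex has at least one in-neighbor and at least one out-neighbor. -/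
open Finset Function

section BipartiteOrientation

variable {α β : Type*}

def bipartiteOrientation (r : α → β → Prop) : α ⊕ β → α ⊕ β → Prop
  | .inl x, .inr j => r x j
  | .inr j, .inl x => ¬ r x j
  | _, _ => False

variable (r : α → β → Prop)

lemma isOrientation_bipartiteOrientation :
    IsOrientation (completeBipartiteGraph α β) (bipartiteOrientation r) := by
  constructor
  · rintro (x | j) (y | j') h <;> simp_all [bipartiteOrientation]
  · rintro (x | j) (y | j') h <;> simp_all [bipartiteOrientation]

lemma distLE2_bipartiteOrientation
    (hα : ∀ x y, x ≠ y → ∃ j, r x j ∧ ¬ r y j)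
    (hβ : ∀ j j', j ≠ j' → ∃ x, ¬ r x j ∧ r x j')
    {u v : α ⊕ β} (huv : u ≠ v)
    (hside : (u.isLeft ∧ v.isLeft) ∨ (u.isRight ∧ v.isRight)) :
    DistLE2 (bipartiteOrientation r) u v := by
  right
  rcases u with x | j <;> rcases v with y | j'
  · obtain ⟨j, hxj, hyj⟩ := hα x y (by rintro rfl; exact huv rfl)
    exact ⟨.inr j, hxj, hyj⟩
  · simp at hside
  · simp at hside
  · obtain ⟨x, hxj, hxj'⟩ := hβ j j' (by rintro rfl; exact huv rfl)
    exact ⟨.inl x, hxj, hxj'⟩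

lemma exists_in_out_bipartiteOrientation
    (hα : ∀ x, (∃ j, r x j) ∧ ∃ j, ¬ r x j)
    (hβ : ∀ j, (∃ x, r x j) ∧ ∃ x, ¬ r x j) (u : α ⊕ β) :
    (∃ v, bipartiteOrientation r v u) ∧ ∃ v, bipartiteOrientation r u v := by
  rcases u with x | j
  · obtain ⟨⟨j, hj⟩, ⟨j', hj'⟩⟩ := hα x
    exact ⟨⟨.inr j', hj'⟩, ⟨.inr j, hj⟩⟩
  · obtain ⟨⟨x, hx⟩, ⟨x', hx'⟩⟩ := hβ j
    exact ⟨⟨.inl x, hx⟩, ⟨.inl x', hx'⟩⟩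

end BipartiteOrientation

section CyclicInterval

variable {n : ℕ} [NeZero n]

def cyclicInterval (k : ℕ) (i : Fin n) : Finset (Fin n) :=
  ({d : Fin n | (d : ℕ) < k} : Finset (Fin n)).map (Equiv.addRight i).toEmbedding

lemma mem_cyclicInterval {k : ℕ} {i z : Fin n} :
    z ∈ cyclicInterval k i ↔ ((z - i : Fin n) : ℕ) < k := by
  simp [cyclicInterval, mem_map_equiv, sub_eq_add_neg]

lemma card_cyclicInterval {k : ℕ} (hk : k ≤ n) (i : Fin n) : #(cyclicInterval k i) = k := by
  rw [cyclicInterval, card_map, Fin.card_filter_val_lt, min_eq_right hk]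

lemma exists_mem_cyclicInterval_notMem {k : ℕ} (hk : 0 < k) (hkn : 2 * k ≤ n + 1) {x y : Fin n}
    (hxy : x ≠ y) : ∃ i, x ∈ cyclicInterval k i ∧ y ∉ cyclicInterval k i := by
  simp only [mem_cyclicInterval, not_lt]
  have hyx : ((y - x : Fin n) : ℕ) ≠ 0 := by
    simpa [Fin.val_eq_zero_iff, sub_eq_zero] using hxy.symm
  by_cases hfar : k ≤ ((y - x : Fin n) : ℕ)
  · exact ⟨x, by simpa using hk, hfar⟩
  · -- `y` is less than `k` steps after `x`; the interval ending at `x` is too short to wrap to `y`.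
    let c : Fin n := ⟨k - 1, by omega⟩
    have hc : (c : ℕ) = k - 1 := rfl
    refine ⟨x - c, by rw [sub_sub_cancel]; omega, ?_⟩
    rw [show y - (x - c) = (y - x) + c by abel, Fin.val_add_eq_of_add_lt] <;> omega

end CyclicInterval

theorem exists_separating_uniform_family {a b k : ℕ} (hk : 0 < k) (hka : 2 * k ≤ a + 1)
    (hab : a ≤ b) (hb : b ≤ a.choose k) :
    ∃ f : Fin b → Finset (Fin a), Injective f ∧ (∀ j, #(f j) = k) ∧
      ∀ x y, x ≠ y → ∃ j, x ∈ f j ∧ y ∉ f j := by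
  have : NeZero a := ⟨by omega⟩
  have hintervals : univ.image (cyclicInterval k) ⊆ powersetCard k (univ : Finset (Fin a)) :=
    image_subset_iff.mpr fun i _ =>
      mem_powersetCard.mpr ⟨subset_univ _, card_cyclicInterval (by omega) i⟩
  obtain ⟨𝓕, hI𝓕, h𝓕, hcard⟩ := exists_subsuperset_card_eq (n := b) hintervals
    (card_image_le.trans (by simpa using hab)) (by simpa using hb)
  let e : Fin b ≃ 𝓕 := (𝓕.equivFin.trans (finCongr hcard)).symm
  refine ⟨fun j => e j, Subtype.val_injective.comp e.injective,
    fun j => (mem_powersetCard.mp (h𝓕 (e j).2)).2, fun x y hxy => ?_⟩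
  obtain ⟨i, hxi, hyi⟩ := exists_mem_cyclicInterval_notMem hk hka hxy
  have hi : cyclicInterval k i ∈ 𝓕 := hI𝓕 (mem_image_of_mem _ (mem_univ i))
  exact ⟨e.symm ⟨_, hi⟩, by simpa using hxi, by simpa using hyi⟩

lemma Finset.exists_mem_notMem_of_card_eq_of_ne {α : Type*} {s t : Finset α} (hst : #s = #t)
    (hne : s ≠ t) : ∃ x, x ∉ s ∧ x ∈ t := by
  obtain ⟨x, hxt, hxs⟩ := not_subset.mp fun hts => hne (eq_of_subset_of_card_le hts hst.le).symm
  exact ⟨x, hxs, hxt⟩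

theorem exists_orientation_of_separating_uniform_family {α β : Type*} [Fintype α]
    {f : β → Finset α} {k : ℕ} (hf : Injective f) (hcard : ∀ j, #(f j) = k) (hk : 0 < k)
    (hkα : k < Fintype.card α) (hsep : ∀ x y, x ≠ y → ∃ j, x ∈ f j ∧ y ∉ f j) :
    ∃ D : α ⊕ β → α ⊕ β → Prop,
      IsOrientation (completeBipartiteGraph α β) D ∧
      (∀ u v : α ⊕ β, u ≠ v →
        ((u.isLeft ∧ v.isLeft) ∨ (u.isRight ∧ v.isRight)) → DistLE2 D u v) ∧
      (∀ u, (∃ v, D v u) ∧ (∃ v, D u v)) := by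
  refine ⟨bipartiteOrientation (fun x j => x ∈ f j), isOrientation_bipartiteOrientation _,
    fun u v huv hside => distLE2_bipartiteOrientation _ hsep (fun j j' hjj' => ?_) huv hside,
    exists_in_out_bipartiteOrientation _ (fun x => ?_) (fun j => ⟨?_, ?_⟩)⟩
  · exact exists_mem_notMem_of_card_eq_of_ne ((hcard j).trans (hcard j').symm) (hf.ne hjj')
  · obtain ⟨y, hyx⟩ := Fintype.exists_ne_of_one_lt_card (by omega) x
    obtain ⟨j, hxj, -⟩ := hsep x y hyx.symm
    obtain ⟨j', -, hxj'⟩ := hsep y x hyx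
    exact ⟨⟨j, hxj⟩, ⟨j', hxj'⟩⟩
  · exact card_pos.mp (hcard j ▸ hk)
  · obtain ⟨x, -, hx⟩ := exists_mem_notMem_of_card_lt_card (s := f j) (t := univ)
      (by rwa [card_univ, hcard])
    exact ⟨x, hx⟩

/-- `K_{a,b}` with `2 ≤ a ≤ b ≤ C(a, ⌊a/2⌋)` has an orientation in which vertices of the
same partite set are at directed distance at most 2, and every vertex has an in-neighbor
and an out-neighbor. -/
theorem stmt2 (a b : ℕ) (h2 : 2 ≤ a) (hab : a ≤ b) (hb : b ≤ a.choose (a / 2)) :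
    ∃ D : (Fin a ⊕ Fin b) → (Fin a ⊕ Fin b) → Prop,
      IsOrientation (completeBipartiteGraph (Fin a) (Fin b)) D ∧
      (∀ x y : Fin a ⊕ Fin b, x ≠ y →
        ((x.isLeft ∧ y.isLeft) ∨ (x.isRight ∧ y.isRight)) → DistLE2 D x y) ∧
      (∀ x, (∃ y, D y x) ∧ (∃ y, D x y)) := by
  obtain ⟨f, hf, hcard, hsep⟩ :=
    exists_separating_uniform_family (k := a / 2) (by omega) (by omega) hab hb
  exact exists_orientation_of_separating_uniform_family hf hcard (by omega)
    (by rw [Fintype.card_fin]; omega) hsep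
end

section
/- Let a, b be integers with 3 ≤ a ≤ b ≤ 2a. Let G be a graph on vertex set X ∪ Y with |X| = a, |Y| = b, X and Y disjoint, such that G contains all edges between X and Y (i.e., G contains K_{a,b} with partite sets X and Y as a spanning subgraph), and the complement of G restricted to Y is a subgraph of the graph K_a ⊞ K_{b−a}. Then G has an orientation in which any two vertices both in X or both in Y are at directed distance at most 2 from each other, and every vertex has an in-neighbor and an out-neighbor. -/
/-- The explicit orientation used in the proof of `stmt3`. -/
def orientD {V : Type*} [DecidableEq V] (G : SimpleGraph V) (X A C : Finset V)
    (f : V → V) {a : ℕ} [NeZero a] (iX iA : V → Fin a) (r : V → ℕ) : V → V → Prop :=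
  fun u v =>
    if u ∈ X ∧ v ∈ A then (iA v = iX u ∨ iA v = iX u + 1)
    else if u ∈ A ∧ v ∈ X then ¬(iA u = iX v ∨ iA u = iX v + 1)
    else if u ∈ X ∧ v ∈ C then iX u = iA (f v) + 1
    else if u ∈ C ∧ v ∈ X then ¬(iX v = iA (f u) + 1)
    else if u ∈ A ∧ v ∈ C ∧ u ≠ f v then True
    else if u ∈ C ∧ v ∈ A ∧ v ≠ f u then False
    else G.Adj u v ∧ r u < r v

section Branches

variable {V : Type*} [DecidableEq V] {G : SimpleGraph V} {X A C : Finset V}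
  {f : V → V} {a : ℕ} [NeZero a] {iX iA : V → Fin a} {r : V → ℕ} {u v : V}

lemma orientD_XA (hu : u ∈ X) (hv : v ∈ A) :
    orientD G X A C f iX iA r u v ↔ (iA v = iX u ∨ iA v = iX u + 1) := by
  simp only [orientD]; rw [if_pos ⟨hu, hv⟩]

lemma orientD_AX (hu : u ∈ A) (hv : v ∈ X) (huX : u ∉ X) :
    orientD G X A C f iX iA r u v ↔ ¬(iA u = iX v ∨ iA u = iX v + 1) := by
  simp only [orientD]
  rw [if_neg (fun h => huX h.1), if_pos ⟨hu, hv⟩]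

lemma orientD_XC (hu : u ∈ X) (hv : v ∈ C) (hvA : v ∉ A) (huA : u ∉ A) :
    orientD G X A C f iX iA r u v ↔ iX u = iA (f v) + 1 := by
  simp only [orientD]
  rw [if_neg (fun h => hvA h.2), if_neg (fun h => huA h.1), if_pos ⟨hu, hv⟩]

lemma orientD_CX (hu : u ∈ C) (hv : v ∈ X) (huX : u ∉ X) (huA : u ∉ A) :
    orientD G X A C f iX iA r u v ↔ ¬(iX v = iA (f u) + 1) := by
  simp only [orientD]
  rw [if_neg (fun h => huX h.1), if_neg (fun h => huA h.1), if_neg (fun h => huX h.1),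
    if_pos ⟨hu, hv⟩]

lemma orientD_AC (hu : u ∈ A) (hv : v ∈ C) (hne : u ≠ f v)
    (huX : u ∉ X) (hvX : v ∉ X) (hvA : v ∉ A) :
    orientD G X A C f iX iA r u v ↔ True := by
  simp only [orientD]
  rw [if_neg (fun h => hvA h.2), if_neg (fun h => hvX h.2), if_neg (fun h => huX h.1),
    if_neg (fun h => hvX h.2), if_pos ⟨hu, hv, hne⟩]

lemma orientD_CA (hu : u ∈ C) (hv : v ∈ A) (hne : v ≠ f u)
    (huX : u ∉ X) (hvX : v ∉ X) (huA : u ∉ A) :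
    orientD G X A C f iX iA r u v ↔ False := by
  simp only [orientD]
  rw [if_neg (fun h => huX h.1), if_neg (fun h => hvX h.2), if_neg (fun h => huX h.1),
    if_neg (fun h => hvX h.2), if_neg (fun h => huA h.1), if_pos ⟨hu, hv, hne⟩]

lemma orientD_AC' (hu : u ∈ A) (hv : v ∈ C) (heq : u = f v)
    (huX : u ∉ X) (hvX : v ∉ X) (hvA : v ∉ A) (huC : u ∉ C) :
    orientD G X A C f iX iA r u v ↔ (G.Adj u v ∧ r u < r v) := by
  simp only [orientD]
  rw [if_neg (fun h => hvA h.2), if_neg (fun h => hvX h.2), if_neg (fun h => huX h.1),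
    if_neg (fun h => huC h.1), if_neg (fun h => h.2.2 heq), if_neg (fun h => huC h.1)]

lemma orientD_CA' (hu : u ∈ C) (hv : v ∈ A) (heq : v = f u)
    (huX : u ∉ X) (hvX : v ∉ X) (huA : u ∉ A) :
    orientD G X A C f iX iA r u v ↔ (G.Adj u v ∧ r u < r v) := by
  simp only [orientD]
  rw [if_neg (fun h => huX h.1), if_neg (fun h => hvX h.2), if_neg (fun h => huX h.1),
    if_neg (fun h => hvX h.2), if_neg (fun h => huA h.1), if_neg (fun h => h.2.2 heq)]

lemma orientD_XX (hu : u ∈ X) (hv : v ∈ X) (huA : u ∉ A) (hvA : v ∉ A)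
    (huC : u ∉ C) (hvC : v ∉ C) :
    orientD G X A C f iX iA r u v ↔ (G.Adj u v ∧ r u < r v) := by
  simp only [orientD]
  rw [if_neg (fun h => hvA h.2), if_neg (fun h => huA h.1), if_neg (fun h => hvC h.2),
    if_neg (fun h => huC h.1), if_neg (fun h => huA h.1), if_neg (fun h => huC h.1)]

lemma orientD_AA (hu : u ∈ A) (hv : v ∈ A) (huX : u ∉ X) (hvX : v ∉ X)
    (huC : u ∉ C) (hvC : v ∉ C) :
    orientD G X A C f iX iA r u v ↔ (G.Adj u v ∧ r u < r v) := by
  simp only [orientD]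
  rw [if_neg (fun h => huX h.1), if_neg (fun h => hvX h.2), if_neg (fun h => huX h.1),
    if_neg (fun h => huC h.1), if_neg (fun h => hvC h.2.1), if_neg (fun h => huC h.1)]

lemma orientD_CC (hu : u ∈ C) (hv : v ∈ C) (huX : u ∉ X) (hvX : v ∉ X)
    (huA : u ∉ A) (hvA : v ∉ A) :
    orientD G X A C f iX iA r u v ↔ (G.Adj u v ∧ r u < r v) := by
  simp only [orientD]
  rw [if_neg (fun h => huX h.1), if_neg (fun h => hvX h.2), if_neg (fun h => huX h.1),
    if_neg (fun h => hvX h.2), if_neg (fun h => huA h.1), if_neg (fun h => hvA h.2.1)]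

end Branches

/-- If `G` contains a spanning `K_{a,b}` with parts `X`, `Y` (`3 ≤ a ≤ b ≤ 2a`) and the
complement of `G` restricted to `Y` is a subgraph of `K_a ⊞ K_{b-a}`, then `G` has an
orientation in which vertices of the same part are at directed distance at most 2 and
every vertex has an in-neighbor and an out-neighbor. -/
theorem stmt3 {V : Type*} [Fintype V] [DecidableEq V] (a b : ℕ)
    (h3 : 3 ≤ a) (hab : a ≤ b) (hba : b ≤ 2 * a)
    (G : SimpleGraph V) (X Y : Finset V)
    (hdisj : Disjoint X Y) (huniv : X ∪ Y = Finset.univ)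
    (hX : X.card = a) (hY : Y.card = b)
    (hcross : ∀ x ∈ X, ∀ y ∈ Y, G.Adj x y)
    -- the complement of `G` restricted to `Y` is a subgraph of `K_a ⊞ K_{b-a}`:
    (A C : Finset V) (hAC : A ∪ C = Y) (hACdisj : Disjoint A C) (hA : A.card = a)
    (f : V → V) (hf : ∀ c ∈ C, f c ∈ A) (hfinj : Set.InjOn f ↑C)
    (hsub : ∀ y ∈ Y, ∀ z ∈ Y, y ≠ z → ¬ G.Adj y z →
      (y ∈ A ∧ z ∈ A) ∨ (y ∈ C ∧ z ∈ C) ∨ (y ∈ C ∧ z = f y) ∨ (z ∈ C ∧ y = f z)) :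
    ∃ D : V → V → Prop, IsOrientation G D ∧
      (∀ x y, x ≠ y → ((x ∈ X ∧ y ∈ X) ∨ (x ∈ Y ∧ y ∈ Y)) → DistLE2 D x y) ∧
      (∀ x, (∃ y, D y x) ∧ (∃ y, D x y)) := by
  classical
  haveI : NeZero a := ⟨by omega⟩
  -- membership facts
  have hAY : A ⊆ Y := by rw [← hAC]; exact Finset.subset_union_left
  have hCY : C ⊆ Y := by rw [← hAC]; exact Finset.subset_union_right
  have hXA : ∀ u ∈ X, u ∉ A := fun u hu h => Finset.disjoint_left.mp hdisj hu (hAY h)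
  have hXC : ∀ u ∈ X, u ∉ C := fun u hu h => Finset.disjoint_left.mp hdisj hu (hCY h)
  have hAX : ∀ u ∈ A, u ∉ X := fun u hu h => hXA u h hu
  have hCX : ∀ u ∈ C, u ∉ X := fun u hu h => hXC u h hu
  have hAnC : ∀ u ∈ A, u ∉ C := fun u hu => Finset.disjoint_left.mp hACdisj hu
  have hCnA : ∀ u ∈ C, u ∉ A := fun u hu h => hAnC u h hu
  have hmem : ∀ u : V, u ∈ X ∨ u ∈ A ∨ u ∈ C := by
    intro u
    have : u ∈ X ∪ Y := by rw [huniv]; exact Finset.mem_univ u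
    rcases Finset.mem_union.mp this with h | h
    · exact Or.inl h
    · rw [← hAC] at h
      exact Or.inr (Finset.mem_union.mp h)
  have memY : ∀ u ∈ Y, u ∈ A ∨ u ∈ C := by
    intro u hu; rw [← hAC] at hu; exact Finset.mem_union.mp hu
  -- indexings
  let eX : {x // x ∈ X} ≃ Fin a := X.equivFinOfCardEq hX
  let eA : {x // x ∈ A} ≃ Fin a := A.equivFinOfCardEq hA
  let iX : V → Fin a := fun v => if h : v ∈ X then eX ⟨v, h⟩ else 0
  let iA : V → Fin a := fun v => if h : v ∈ A then eA ⟨v, h⟩ else 0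
  let r : V → ℕ := fun v => (Fintype.equivFin V v : ℕ)
  have iXsymm : ∀ m : Fin a, iX (eX.symm m) = m := by
    intro m
    show (if h : (eX.symm m : V) ∈ X then eX ⟨(eX.symm m : V), h⟩ else 0) = m
    rw [dif_pos (eX.symm m).2]
    exact eX.apply_symm_apply m
  have iAsymm : ∀ m : Fin a, iA (eA.symm m) = m := by
    intro m
    show (if h : (eA.symm m : V) ∈ A then eA ⟨(eA.symm m : V), h⟩ else 0) = m
    rw [dif_pos (eA.symm m).2]
    exact eA.apply_symm_apply m
  have mX : ∀ m : Fin a, (eX.symm m : V) ∈ X := fun m => (eX.symm m).2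
  have mA : ∀ m : Fin a, (eA.symm m : V) ∈ A := fun m => (eA.symm m).2
  have iXinj : ∀ u ∈ X, ∀ v ∈ X, iX u = iX v → u = v := by
    intro u hu v hv h
    simp only [iX, dif_pos hu, dif_pos hv] at h
    exact congrArg Subtype.val (eX.injective h)
  have iAinj : ∀ u ∈ A, ∀ v ∈ A, iA u = iA v → u = v := by
    intro u hu v hv h
    simp only [iA, dif_pos hu, dif_pos hv] at h
    exact congrArg Subtype.val (eA.injective h)
  have rinj : ∀ u v : V, r u = r v → u = v := by
    intro u v h
    exact (Fintype.equivFin V).injective (Fin.val_injective h)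
  -- Fin a arithmetic
  have h1 : ((1 : Fin a) : ℕ) = 1 := by rw [Fin.val_one']; exact Nat.mod_eq_of_lt (by omega)
  have h2 : ((1 + 1 : Fin a) : ℕ) = 2 := by
    rw [Fin.val_add, h1]; exact Nat.mod_eq_of_lt (by omega)
  have fone : (1 : Fin a) ≠ 0 := by
    intro h; rw [Fin.ext_iff, h1] at h; simp at h
  have ftwo : (1 + 1 : Fin a) ≠ 0 := by
    intro h; rw [Fin.ext_iff, h2] at h; simp at h
  have L1 : ∀ i : Fin a, i + 1 ≠ i := by
    intro i h
    exact fone (add_left_cancel (a := i) (by rw [add_zero]; exact h))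
  have L2 : ∀ i : Fin a, i + 1 + 1 ≠ i := by
    intro i h
    rw [add_assoc] at h
    exact ftwo (add_left_cancel (a := i) (by rw [add_zero]; exact h))
  have L4 : ∀ i j : Fin a, i + 1 = j + 1 → i = j := fun i j h => add_right_cancel h
  have L5 : ∀ i : Fin a, i - 1 + 1 = i := fun i => sub_add_cancel i 1
  -- adjacency facts
  have adjXY : ∀ u ∈ X, ∀ v ∈ Y, G.Adj u v := hcross
  have adjAC : ∀ v ∈ A, ∀ c ∈ C, v ≠ f c → G.Adj v c := by
    intro v hvA c hcC hne
    by_contra hadj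
    have hne' : v ≠ c := fun h => hAnC v hvA (h ▸ hcC)
    rcases hsub v (hAY hvA) c (hCY hcC) hne' hadj with ⟨_, h⟩ | ⟨h, _⟩ | ⟨h, _⟩ | ⟨_, h⟩
    · exact hAnC c h hcC
    · exact hAnC v hvA h
    · exact hAnC v hvA h
    · exact hne h
  refine ⟨orientD G X A C f iX iA r, ⟨?_, ?_⟩, ?_, ?_⟩
  · -- arcs lie on edges
    intro u v hD
    rcases hmem u with huX | huA | huC <;> rcases hmem v with hvX | hvA | hvC
    · exact (((orientD_XX huX hvX (hXA u huX) (hXA v hvX) (hXC u huX) (hXC v hvX)).mp hD)).1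
    · exact adjXY u huX v (hAY hvA)
    · exact adjXY u huX v (hCY hvC)
    · exact (adjXY v hvX u (hAY huA)).symm
    · exact (((orientD_AA huA hvA (hAX u huA) (hAX v hvA) (hAnC u huA) (hAnC v hvA)).mp hD)).1
    · by_cases heq : u = f v
      · exact ((orientD_AC' huA hvC heq (hAX u huA) (hCX v hvC) (hCnA v hvC)
          (hAnC u huA)).mp hD).1
      · exact adjAC u huA v hvC heq
    · exact (adjXY v hvX u (hCY huC)).symm
    · by_cases heq : v = f u
      · exact ((orientD_CA' huC hvA heq (hCX u huC) (hAX v hvA) (hCnA u huC)).mp hD).1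
      · exact absurd ((orientD_CA huC hvA heq (hCX u huC) (hAX v hvA)
          (hCnA u huC)).mp hD) not_false
    · exact (((orientD_CC huC hvC (hCX u huC) (hCX v hvC) (hCnA u huC) (hCnA v hvC)).mp hD)).1
  · -- exactly one direction per edge
    intro u v hadj
    have defiff : ∀ w z : V, G.Adj w z → ((G.Adj w z ∧ r w < r z) ↔ ¬(G.Adj z w ∧ r z < r w)) := by
      intro w z h
      have hne : r w ≠ r z := fun he => G.ne_of_adj h (rinj w z he)
      rw [and_iff_right h, and_iff_right h.symm]
      omega
    rcases hmem u with huX | huA | huC <;> rcases hmem v with hvX | hvA | hvC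
    · rw [orientD_XX huX hvX (hXA u huX) (hXA v hvX) (hXC u huX) (hXC v hvX),
        orientD_XX hvX huX (hXA v hvX) (hXA u huX) (hXC v hvX) (hXC u huX)]
      exact defiff u v hadj
    · rw [orientD_XA huX hvA, orientD_AX hvA huX (hAX v hvA)]
      exact not_not.symm
    · rw [orientD_XC huX hvC (hCnA v hvC) (hXA u huX),
        orientD_CX hvC huX (hCX v hvC) (hCnA v hvC)]
      exact not_not.symm
    · rw [orientD_AX huA hvX (hAX u huA), orientD_XA hvX huA]
    · rw [orientD_AA huA hvA (hAX u huA) (hAX v hvA) (hAnC u huA) (hAnC v hvA),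
        orientD_AA hvA huA (hAX v hvA) (hAX u huA) (hAnC v hvA) (hAnC u huA)]
      exact defiff u v hadj
    · by_cases heq : u = f v
      · rw [orientD_AC' huA hvC heq (hAX u huA) (hCX v hvC) (hCnA v hvC) (hAnC u huA),
          orientD_CA' hvC huA heq (hCX v hvC) (hAX u huA) (hCnA v hvC)]
        exact defiff u v hadj
      · rw [orientD_AC huA hvC heq (hAX u huA) (hCX v hvC) (hCnA v hvC),
          orientD_CA hvC huA heq (hCX v hvC) (hAX u huA) (hCnA v hvC)]
        simp
    · rw [orientD_CX huC hvX (hCX u huC) (hCnA u huC),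
        orientD_XC hvX huC (hCnA u huC) (hXA v hvX)]
    · by_cases heq : v = f u
      · rw [orientD_CA' huC hvA heq (hCX u huC) (hAX v hvA) (hCnA u huC),
          orientD_AC' hvA huC heq (hAX v hvA) (hCX u huC) (hCnA u huC) (hAnC v hvA)]
        exact defiff u v hadj
      · rw [orientD_CA huC hvA heq (hCX u huC) (hAX v hvA) (hCnA u huC),
          orientD_AC hvA huC heq (hAX v hvA) (hCX u huC) (hCnA u huC)]
        simp
    · rw [orientD_CC huC hvC (hCX u huC) (hCX v hvC) (hCnA u huC) (hCnA v hvC),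
        orientD_CC hvC huC (hCX v hvC) (hCX u huC) (hCnA v hvC) (hCnA u huC)]
      exact defiff u v hadj
  · -- distance at most 2 within parts
    intro x y hne hcase
    rcases hcase with ⟨hxX, hyX⟩ | ⟨hxY, hyY⟩
    · -- both in X
      have hii : iX x ≠ iX y := fun h => hne (iXinj x hxX y hyX h)
      by_cases hc : iX x = iX y + 1
      · refine Or.inr ⟨eA.symm (iX x + 1), ?_, ?_⟩
        · rw [orientD_XA hxX (mA _), iAsymm]
          exact Or.inr rfl
        · rw [orientD_AX (mA _) hyX (hAX _ (mA _)), iAsymm]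
          rintro (h | h)
          · rw [hc] at h; exact L2 (iX y) h
          · exact hii (L4 _ _ h)
      · refine Or.inr ⟨eA.symm (iX x), ?_, ?_⟩
        · rw [orientD_XA hxX (mA _), iAsymm]
          exact Or.inl rfl
        · rw [orientD_AX (mA _) hyX (hAX _ (mA _)), iAsymm]
          rintro (h | h)
          · exact hii h
          · exact hc h
    · -- both in Y
      rcases memY x hxY with hxA | hxC <;> rcases memY y hyY with hyA | hyC
      · -- A, A
        have hjj : iA x ≠ iA y := fun h => hne (iAinj x hxA y hyA h)
        by_cases hc : iA x = iA y + 1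
        · refine Or.inr ⟨eX.symm (iA y - 1), ?_, ?_⟩
          · rw [orientD_AX hxA (mX _) (hAX x hxA), iXsymm]
            rintro (h | h)
            · -- iA x = iA y - 1, with iA x = iA y + 1
              rw [hc] at h
              have : iA y + 1 + 1 = iA y := by rw [h, L5]
              exact L2 (iA y) this
            · rw [L5] at h
              exact hjj h
          · rw [orientD_XA (mX _) hyA, iXsymm, L5]
            exact Or.inr rfl
        · refine Or.inr ⟨eX.symm (iA y), ?_, ?_⟩
          · rw [orientD_AX hxA (mX _) (hAX x hxA), iXsymm]
            rintro (h | h)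
            · exact hjj h
            · exact hc h
          · rw [orientD_XA (mX _) hyA, iXsymm]
            exact Or.inl rfl
      · -- A, C
        by_cases heq : x = f y
        · refine Or.inr ⟨eX.symm (iA (f y) + 1), ?_, ?_⟩
          · rw [orientD_AX hxA (mX _) (hAX x hxA), iXsymm, ← heq]
            rintro (h | h)
            · exact L1 (iA x) h.symm
            · exact L2 (iA x) h.symm
          · rw [orientD_XC (mX _) hyC (hCnA y hyC) (hXA _ (mX _)), iXsymm]
        · exact Or.inl ((orientD_AC hxA hyC heq (hAX x hxA) (hCX y hyC) (hCnA y hyC)).mpr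
            trivial)
      · -- C, A
        by_cases hc : iA y = iA (f x) + 1
        · refine Or.inr ⟨eX.symm (iA y - 1), ?_, ?_⟩
          · rw [orientD_CX hxC (mX _) (hCX x hxC) (hCnA x hxC), iXsymm]
            intro h
            have : iA y = iA (f x) + 1 + 1 := by rw [← h, L5]
            rw [hc] at this
            exact L1 (iA (f x) + 1) this.symm
          · rw [orientD_XA (mX _) hyA, iXsymm, L5]
            exact Or.inr rfl
        · refine Or.inr ⟨eX.symm (iA y), ?_, ?_⟩
          · rw [orientD_CX hxC (mX _) (hCX x hxC) (hCnA x hxC), iXsymm]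
            exact hc
          · rw [orientD_XA (mX _) hyA, iXsymm]
            exact Or.inl rfl
      · -- C, C
        refine Or.inr ⟨eX.symm (iA (f y) + 1), ?_, ?_⟩
        · rw [orientD_CX hxC (mX _) (hCX x hxC) (hCnA x hxC), iXsymm]
          intro h
          have hfy : f y = f x :=
            iAinj _ (hf y hyC) _ (hf x hxC) (L4 _ _ h)
          exact hne (hfinj hyC hxC hfy).symm
        · rw [orientD_XC (mX _) hyC (hCnA y hyC) (hXA _ (mX _)), iXsymm]
  · -- in- and out-neighbours
    intro x
    rcases hmem x with hxX | hxA | hxC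
    · constructor
      · refine ⟨eA.symm (iX x + 1 + 1), ?_⟩
        rw [orientD_AX (mA _) hxX (hAX _ (mA _)), iAsymm]
        rintro (h | h)
        · exact L2 (iX x) h
        · exact L1 (iX x + 1) h
      · refine ⟨eA.symm (iX x), ?_⟩
        rw [orientD_XA hxX (mA _), iAsymm]
        exact Or.inl rfl
    · constructor
      · refine ⟨eX.symm (iA x), ?_⟩
        rw [orientD_XA (mX _) hxA, iXsymm]
        exact Or.inl rfl
      · refine ⟨eX.symm (iA x + 1), ?_⟩
        rw [orientD_AX hxA (mX _) (hAX x hxA), iXsymm]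
        rintro (h | h)
        · exact L1 (iA x) h.symm
        · exact L2 (iA x) h.symm
    · constructor
      · refine ⟨eX.symm (iA (f x) + 1), ?_⟩
        rw [orientD_XC (mX _) hxC (hCnA x hxC) (hXA _ (mX _)), iXsymm]
      · refine ⟨eX.symm (iA (f x) + 1 + 1), ?_⟩
        rw [orientD_CX hxC (mX _) (hCX x hxC) (hCnA x hxC), iXsymm]
        exact L1 (iA (f x) + 1)
end

section
/- Let W be a set of vertices of a graph G such that the complement of G restricted to W is a disjoint union of paths whose components can be partitioned into two families X and Y with |X| = a components and |Y| = b components, where 3 ≤ a ≤ b ≤ 2a. Then the induced subgraph G[W] has an orientation in which any two vertices whose blue components lie in the same family are at directed distance at most 2, and every vertex of W has an in-neighbor and an out-neighbor. -/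
namespace Stmt4Aux


/-! ### Abstract tournament specs on initial segments of ℕ -/

/-- step from `x` to `y` is usable: the arc is present in `M` and the pair is not
a "missing" consecutive pair. -/
def Usable (bad : ℕ → Prop) (M : ℕ → ℕ → Prop) (x y : ℕ) : Prop :=
  M x y ∧ ¬(y = x + 1 ∧ bad x) ∧ ¬(x = y + 1 ∧ bad y)

def Spec (N : ℕ) (bad : ℕ → Prop) (M : ℕ → ℕ → Prop) : Prop :=
  (∀ i, i < N → ∀ j, j < N → i ≠ j → (M i j ↔ ¬ M j i)) ∧
  (∀ i, i < N → ∀ j, j < N → i ≠ j →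
    (Usable bad M i j ∨
      ∃ w, w < N ∧ w ≠ i ∧ w ≠ j ∧ Usable bad M i w ∧ Usable bad M w j))

/-- decidable version for small `N`, with missing pairs `(k,k+1)`, `(l,l+1)`. -/
def KlUsable (k l : ℕ) (M : ℕ → ℕ → Bool) (x y : ℕ) : Prop :=
  M x y = true ∧ ¬(y = x + 1 ∧ (x = k ∨ x = l)) ∧ ¬(x = y + 1 ∧ (y = k ∨ y = l))

def KlSpec (N k l : ℕ) (M : ℕ → ℕ → Bool) : Prop :=
  (∀ i, i < N → ∀ j, j < N → i ≠ j → (M i j = true ↔ ¬ M j i = true)) ∧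
  (∀ i, i < N → ∀ j, j < N → i ≠ j →
    (KlUsable k l M i j ∨
      ∃ w, w < N ∧ w ≠ i ∧ w ≠ j ∧ KlUsable k l M i w ∧ KlUsable k l M w j))

instance (k l : ℕ) (M : ℕ → ℕ → Bool) (x y : ℕ) : Decidable (KlUsable k l M x y) := by
  unfold KlUsable; infer_instance

lemma klSpec_spec {N k l : ℕ} {M : ℕ → ℕ → Bool} (h : KlSpec N k l M)
    {bad : ℕ → Prop} (hb : ∀ s, bad s → s = k ∨ s = l) :
    Spec N bad (fun i j => M i j = true) := by
  have hu : ∀ x y, KlUsable k l M x y → Usable bad (fun i j => M i j = true) x y := by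
    intro x y ⟨h1, h2, h3⟩
    exact ⟨h1, fun ⟨e, hbx⟩ => h2 ⟨e, hb x hbx⟩, fun ⟨e, hby⟩ => h3 ⟨e, hb y hby⟩⟩
  refine ⟨h.1, fun i hi j hj hne => ?_⟩
  rcases h.2 i hi j hj hne with h' | ⟨w, hw, hwi, hwj, h1, h2⟩
  · exact Or.inl (hu _ _ h')
  · exact Or.inr ⟨w, hw, hwi, hwj, hu _ _ h1, hu _ _ h2⟩

/-- strong spec: mediators are far (in ℕ distance) from both endpoints -/
def Far (x y : ℕ) : Prop := x + 2 ≤ y ∨ y + 2 ≤ x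

def Strong (N : ℕ) (M : ℕ → ℕ → Prop) : Prop :=
  (∀ i, i < N → ∀ j, j < N → i ≠ j → (M i j ↔ ¬ M j i)) ∧
  (∀ i, i < N → ∀ j, j < N → i ≠ j →
    ((M i j ∧ Far i j) ∨
      ∃ w, w < N ∧ Far w i ∧ Far w j ∧ M i w ∧ M w j))

lemma strong_spec {N : ℕ} {M : ℕ → ℕ → Prop} (h : Strong N M) (bad : ℕ → Prop) :
    Spec N bad M := by
  refine ⟨h.1, fun i hi j hj hne => ?_⟩
  rcases h.2 i hi j hj hne with ⟨h1, h2⟩ | ⟨w, hw, hwi, hwj, h1, h2⟩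
  · exact Or.inl ⟨h1, fun ⟨e, _⟩ => by unfold Far at h2; omega,
      fun ⟨e, _⟩ => by unfold Far at h2; omega⟩
  · refine Or.inr ⟨w, hw, by unfold Far at hwi; omega, by unfold Far at hwj; omega,
      ⟨h1, fun ⟨e, _⟩ => by unfold Far at hwi; omega, fun ⟨e, _⟩ => by unfold Far at hwi; omega⟩,
      ⟨h2, fun ⟨e, _⟩ => by unfold Far at hwj; omega, fun ⟨e, _⟩ => by unfold Far at hwj; omega⟩⟩

def StrongB (N : ℕ) (M : ℕ → ℕ → Bool) : Prop :=
  (∀ i, i < N → ∀ j, j < N → i ≠ j → (M i j = true ↔ ¬ M j i = true)) ∧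
  (∀ i, i < N → ∀ j, j < N → i ≠ j →
    ((M i j = true ∧ Far i j) ∨
      ∃ w, w < N ∧ Far w i ∧ Far w j ∧ M i w = true ∧ M w j = true))

instance (x y : ℕ) : Decidable (Far x y) := by unfold Far; infer_instance

lemma strongB_strong {N : ℕ} {M : ℕ → ℕ → Bool} (h : StrongB N M) :
    Strong N (fun i j => M i j = true) := h

/-! ### small matrices -/

def n6 : Nat := 6756823012394
def l7 : List Nat := [14090435962148168, 10706375594881372, 5715438627084390, 13543807119480938, 11837793245469028, 10430380995335226]
def l8 : List Nat := [2067589986313224612, 3286588290430518632, 2776851557996580236, 2060052864400199120, 5624927645464016022, 7350801363491691952, 7790456228890200246, 3286588290430518632, 988711122672732238, 5988328519680272708, 4843227287680330076, 4153175806847786014, 1622071463671114204, 1419347636743384392, 2776851557996580236, 5988328519680272708, 7067914365014445552, 3862208344129915962, 1924030099145952664, 6643536259572738508, 6210612517316680906, 2060052864400199120, 4843227287680330076, 3862208344129915962, 5985215068070034458, 8657069953575997646, 5265786067521022244, 4080574912430990474, 5624927645464016022, 4153175806847786014, 1924030099145952664, 8657069953575997646, 5204644414789761504, 7223241147020448192,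 5555423825880150376, 7350801363491691952, 1622071463671114204, 6643536259572738508, 5265786067521022244, 7223241147020448192, 3279278867576232034, 7788504450895812048, 7790456228890200246, 1419347636743384392, 6210612517316680906, 4080574912430990474, 5555423825880150376, 7788504450895812048, 6351065475053234354]
def n9 : Nat := 53764868429409725846218215589739833393448
def n10 : Nat := 9901588716290239011160524902723701711014200074

def mat6 (i j : ℕ) : Bool := Nat.testBit n6 (8 * i + j)
def mat7 (k : ℕ) (i j : ℕ) : Bool := Nat.testBit (l7.getD k 0) (8 * i + j)
def mat8 (k l : ℕ) (i j : ℕ) : Bool := Nat.testBit (l8.getD (7 * k + l) 0) (8 * i + j)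
def mat9 (i j : ℕ) : Bool := Nat.testBit n9 (16 * i + j)
def mat10 (i j : ℕ) : Bool := Nat.testBit n10 (16 * i + j)

set_option synthInstance.maxSize 2000 in
instance (N k l : ℕ) (M : ℕ → ℕ → Bool) : Decidable (KlSpec N k l M) := by
  unfold KlSpec; infer_instance

set_option synthInstance.maxSize 2000 in
instance (N : ℕ) (M : ℕ → ℕ → Bool) : Decidable (StrongB N M) := by
  unfold StrongB; infer_instance

set_option maxHeartbeats 4000000

lemma kl6 : KlSpec 6 0 0 mat6 := by decide
lemma kl7 : ∀ k, k < 6 → KlSpec 7 k k (mat7 k) := by decide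
lemma kl8 : ∀ k, k < 7 → ∀ l, l < 7 → KlSpec 8 k l (mat8 k l) := by decide
lemma st9 : StrongB 9 mat9 := by decide
lemma st10 : StrongB 10 mat10 := by decide





/-- cyclic distance set for odd `p = 2h+1`: `{1} ∪ [3,h] ∪ {p-2}` -/
def SS (p g : ℕ) : Prop := g = 1 ∨ (3 ≤ g ∧ 2 * g + 1 ≤ p) ∨ g + 2 = p

/-- cyclic gap from `i` to `j` (mod p), assuming both `< p` -/
def cgap (p i j : ℕ) : ℕ := if i < j then j - i else p - (i - j)

/-- the rotational tournament on odd `p` -/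
def MO (p : ℕ) (i j : ℕ) : Prop := if i < j then SS p (j - i) else ¬ SS p (i - j)

/-- extension to even `N = p+1`, with special vertex `N-1` -/
def ME (N : ℕ) (i j : ℕ) : Prop :=
  if j + 1 = N then ¬ (2 * i + 2 ≤ N)
  else if i + 1 = N then 2 * j + 2 ≤ N
  else MO (N - 1) i j

section Odd

variable {p h : ℕ} (hp : p = 2 * h + 1) (hh : 5 ≤ h)

include hp hh

lemma sxor {g : ℕ} (h1 : 1 ≤ g) (h2 : g ≤ p - 1) : SS p (p - g) ↔ ¬ SS p g := by
  unfold SS; omega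

lemma MO_of_gap {x y : ℕ} (hx : x < p) (hy : y < p) (hS : SS p (cgap p x y)) :
    MO p x y := by
  unfold MO cgap at *
  by_cases hxy : x < y
  · rw [if_pos hxy] at hS ⊢; exact hS
  · rw [if_neg hxy] at hS ⊢
    have hne : x ≠ y := by
      intro h; subst h
      simp only [Nat.sub_self, Nat.sub_zero] at hS
      unfold SS at hS; omega
    exact (sxor hp hh (g := x - y) (by omega) (by omega)).mp hS

lemma far_of_gap {x y : ℕ} (hx : x < p) (hy : y < p)
    (h1 : 2 ≤ cgap p x y) (h2 : cgap p x y ≤ p - 2) : Far x y := by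
  unfold cgap at *; unfold Far
  by_cases hxy : x < y
  · rw [if_pos hxy] at *; omega
  · rw [if_neg hxy] at *; omega

lemma gap_add {i c : ℕ} (hi : i < p) (h1 : 1 ≤ c) (h2 : c ≤ p - 1) :
    cgap p i (if i + c < p then i + c else i + c - p) = c ∧
    (if i + c < p then i + c else i + c - p) < p := by
  unfold cgap; split_ifs <;> omega

lemma gap_sub {i j w c1 c2 : ℕ} (hi : i < p) (hj : j < p) (hw : w < p)
    (hng : cgap p i w = c1) (hsum : c1 + c2 = cgap p i j ∨ c1 + c2 = cgap p i j + p)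
    (hc1a : 1 ≤ c1) (hc1b : c1 ≤ p - 1) (hc2a : 1 ≤ c2) (hc2b : c2 ≤ p - 1) :
    cgap p w j = c2 := by
  unfold cgap at *; split_ifs at * <;> omega

lemma strongOdd : Strong p (MO p) := by
  constructor
  · intro i _ j _ hne
    unfold MO
    rcases Nat.lt_or_ge i j with hij | hij
    · rw [if_pos hij, if_neg (by omega)]
      exact not_not.symm
    · have hij' : j < i := by omega
      rw [if_neg (by omega), if_pos hij']
  · intro i hi j hj hne
    have hgd : 1 ≤ cgap p i j ∧ cgap p i j ≤ p - 1 := by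
      unfold cgap; split_ifs <;> omega
    set d := cgap p i j with hd
    by_cases hdir : 3 ≤ d ∧ 2 * d + 1 ≤ p
    · left
      exact ⟨MO_of_gap hp hh hi hj (Or.inr (Or.inl hdir)),
        far_of_gap hp hh hi hj (by omega) (by omega)⟩
    · right
      have hc : ∃ c1 c2, 2 ≤ c1 ∧ c1 ≤ p - 2 ∧ 2 ≤ c2 ∧ c2 ≤ p - 2 ∧
          (c1 + c2 = d ∨ c1 + c2 = d + p) ∧ SS p c1 ∧ SS p c2 := by
        by_cases hd2 : d ≤ 2
        · exact ⟨p - 2, d + 2, by omega, by omega, by omega, by omega, by omega,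
            by unfold SS; omega, by unfold SS; omega⟩
        · by_cases hd3 : d ≤ h + 3
          · exact ⟨3, d - 3, by omega, by omega, by omega, by omega, by omega,
              by unfold SS; omega, by unfold SS; omega⟩
          · exact ⟨d - h, h, by omega, by omega, by omega, by omega, by omega,
              by unfold SS; omega, by unfold SS; omega⟩
      obtain ⟨c1, c2, h1, h2, h3, h4, h5, hS1, hS2⟩ := hc
      set w := if i + c1 < p then i + c1 else i + c1 - p with hwdef
      obtain ⟨hgw, hwp⟩ := gap_add hp hh (i := i) (c := c1) hi (by omega) (by omega)
      rw [← hwdef] at hgw hwp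
      have hgwj : cgap p w j = c2 :=
        gap_sub hp hh hi hj hwp hgw (by omega) (by omega) (by omega) (by omega) (by omega)
      refine ⟨w, hwp, ?_, ?_, MO_of_gap hp hh hi hwp (hgw ▸ hS1),
        MO_of_gap hp hh hwp hj (hgwj ▸ hS2)⟩
      · have := far_of_gap hp hh hi hwp (by omega) (by omega)
        unfold Far at *; omega
      · have := far_of_gap hp hh hwp hj (by omega) (by omega)
        unfold Far at *; omega

end Odd

section Even

variable {N h : ℕ} (hN : N = 2 * h + 2) (hh : 5 ≤ h)

include hN hh

lemma ME_lt {i j : ℕ} (hi : i < N - 1) (hj : j < N - 1) : ME N i j ↔ MO (N - 1) i j := by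
  unfold ME; rw [if_neg (by omega), if_neg (by omega)]

lemma strongEven : Strong N (ME N) := by
  have hp : N - 1 = 2 * h + 1 := by omega
  have hOdd := strongOdd hp hh
  constructor
  · intro i hi j hj hne
    by_cases hiN : i + 1 = N
    · unfold ME
      rw [if_neg (by omega), if_pos hiN, if_pos hiN]
      tauto
    · by_cases hjN : j + 1 = N
      · unfold ME
        rw [if_pos hjN, if_neg (by omega), if_pos hjN]
      · rw [ME_lt hN hh (by omega) (by omega), ME_lt hN hh (by omega) (by omega)]
        exact hOdd.1 i (by omega) j (by omega) hne
  · intro i hi j hj hne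
    by_cases hiN : i + 1 = N
    · -- i is the special vertex v* = N-1
      by_cases hjh : 2 * j + 2 ≤ N
      · -- direct arc
        left
        constructor
        · unfold ME; rw [if_neg (by omega), if_pos hiN]; exact hjh
        · unfold Far; omega
      · -- j ∈ [h+1, N-2] : mediator w ≤ h with gap w→j in [3,h]
        right
        set w := if j ≤ h + 3 then j - 3 else h with hw
        have hwh : w ≤ h ∧ 3 ≤ j - w ∧ j - w ≤ h ∧ w < j := by
          rw [hw]; split_ifs <;> omega
        refine ⟨w, by omega, ?_, ?_, ?_, ?_⟩
        · unfold Far; omega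
        · unfold Far; omega
        · unfold ME; rw [if_neg (by omega), if_pos hiN]; omega
        · rw [ME_lt hN hh (by omega) (by omega)]
          apply MO_of_gap hp hh (by omega) (by omega)
          unfold cgap; rw [if_pos (by omega)]
          unfold SS; omega
    · by_cases hjN : j + 1 = N
      · -- j is the special vertex
        by_cases hcase : h + 1 ≤ i ∧ i ≤ N - 3
        · left
          constructor
          · unfold ME; rw [if_pos hjN]; omega
          · unfold Far; omega
        · by_cases hitop : i = N - 2
          · -- i = p - 1: mediator w = p - 3 = N - 4
            right
            refine ⟨N - 4, by omega, ?_, ?_, ?_, ?_⟩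
            · unfold Far; omega
            · unfold Far; omega
            · rw [ME_lt hN hh (by omega) (by omega)]
              apply MO_of_gap hp hh (by omega) (by omega)
              unfold cgap; rw [if_neg (by omega)]
              unfold SS; omega
            · unfold ME; rw [if_pos hjN]; omega
          · -- i ≤ h
            have hih : i ≤ h := by omega
            by_cases hmid : 1 ≤ i ∧ i ≤ h - 1
            · -- mediator w = i + h
              right
              refine ⟨i + h, by omega, ?_, ?_, ?_, ?_⟩
              · unfold Far; omega
              · unfold Far; omega
              · rw [ME_lt hN hh (by omega) (by omega)]
                apply MO_of_gap hp hh (by omega) (by omega)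
                unfold cgap; rw [if_pos (by omega)]
                unfold SS; omega
              · unfold ME; rw [if_pos hjN]; omega
            · -- i = 0 or i = h: mediator w = N - 3 = p - 2
              right
              refine ⟨N - 3, by omega, ?_, ?_, ?_, ?_⟩
              · unfold Far; omega
              · unfold Far; omega
              · rw [ME_lt hN hh (by omega) (by omega)]
                apply MO_of_gap hp hh (by omega) (by omega)
                unfold cgap; rw [if_pos (by omega)]
                unfold SS; omega
              · unfold ME; rw [if_pos hjN]; omega
      · -- both i, j < N - 1: use odd spec
        rcases hOdd.2 i (by omega) j (by omega) hne with ⟨hM, hF⟩ | ⟨w, hw, f1, f2, m1, m2⟩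
        · left
          exact ⟨(ME_lt hN hh (by omega) (by omega)).mpr hM, hF⟩
        · right
          exact ⟨w, by omega, f1, f2, (ME_lt hN hh (by omega) (by omega)).mpr m1,
            (ME_lt hN hh (by omega) (by omega)).mpr m2⟩

end Even


lemma arith (N : ℕ) (h6 : 6 ≤ N) (bad : ℕ → Prop)
    (hsm : N ≤ 8 → ∃ k l, k ≤ l ∧ l + 2 ≤ N ∧ (N = 7 → k = l) ∧ (N = 6 → k = 0 ∧ l = 0) ∧
      ∀ s, bad s → s = k ∨ s = l) :
    ∃ M : ℕ → ℕ → Prop, Spec N bad M := by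
  by_cases hN8 : N ≤ 8
  · obtain ⟨k, l, hkl, hl, h7, h6', hsub⟩ := hsm hN8
    interval_cases N
    · obtain ⟨hk0, hl0⟩ := h6' rfl
      subst hk0; subst hl0
      exact ⟨_, klSpec_spec kl6 hsub⟩
    · have hkl' : k = l := h7 rfl
      subst hkl'
      exact ⟨_, klSpec_spec (kl7 k (by omega)) hsub⟩
    · exact ⟨_, klSpec_spec (kl8 k (by omega) l (by omega)) hsub⟩
  · by_cases hN10 : N ≤ 10
    · interval_cases N
      · exact ⟨_, strong_spec (strongB_strong st9) bad⟩
      · exact ⟨_, strong_spec (strongB_strong st10) bad⟩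
    · rcases Nat.even_or_odd N with he | ho
      · obtain ⟨t, ht⟩ := he
        exact ⟨_, strong_spec (strongEven (h := t - 1) (by omega) (by omega)) bad⟩
      · obtain ⟨t, ht⟩ := ho
        exact ⟨_, strong_spec (strongOdd (p := N) (h := t) (by omega) (by omega)) bad⟩

end Stmt4Aux

/-- If the complement of `G` restricted to `W` is a disjoint union of `a + b` paths
(components labelled by `comp`, the first `a` forming family `X`, the rest family `Y`),
with `3 ≤ a ≤ b ≤ 2a`, then `G[W]` has an orientation in which vertices whose components
lie in the same family are at directed distance at most 2, and every vertex of `W` has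
an in-neighbor and an out-neighbor. -/
theorem stmt4 {V : Type*} [Fintype V] (G : SimpleGraph V) (W : Set V)
    (a b : ℕ) (h3 : 3 ≤ a) (hab : a ≤ b) (hba : b ≤ 2 * a)
    (comp : V → ℕ)
    (hlt : ∀ v ∈ W, comp v < a + b)
    (hedges : ∀ u ∈ W, ∀ v ∈ W, u ≠ v → ¬ G.Adj u v → comp u = comp v)
    (hpath : ∀ i < a + b, ∃ m, 1 ≤ m ∧
      Nonempty ((Gᶜ.induce {v | v ∈ W ∧ comp v = i}) ≃g SimpleGraph.pathGraph m)) :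
    ∃ D : V → V → Prop, IsOrientationOn G W D ∧
      (∀ x ∈ W, ∀ y ∈ W, x ≠ y →
        ((comp x < a ∧ comp y < a) ∨ (a ≤ comp x ∧ a ≤ comp y)) → DistLE2 D x y) ∧
      (∀ x ∈ W, (∃ y, D y x) ∧ (∃ y, D x y)) := by
  classical
  choose! m hm hiso using hpath
  -- positions inside each component
  obtain ⟨pos, hP1, hP2, hP3, hP4⟩ :
      ∃ pos : ℕ → V → ℕ,
        (∀ i, i < a + b → ∀ v, v ∈ W → comp v = i → pos i v < m i) ∧
        (∀ i, i < a + b → ∀ u v, u ∈ W → comp u = i → v ∈ W → comp v = i →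
          pos i u = pos i v → u = v) ∧
        (∀ i, i < a + b → ∀ r, r < m i → ∃ v, v ∈ W ∧ comp v = i ∧ pos i v = r) ∧
        (∀ i, i < a + b → ∀ u v, u ∈ W → comp u = i → v ∈ W → comp v = i →
          u ≠ v → ¬ G.Adj u v → (pos i u = pos i v + 1 ∨ pos i v = pos i u + 1)) := by
    refine ⟨fun i v => if h : i < a + b ∧ v ∈ W ∧ comp v = i then
      ((hiso i h.1).some ⟨v, h.2.1, h.2.2⟩ : Fin (m i)).val else 0, ?_, ?_, ?_, ?_⟩
    · intro i hi v hvW hc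
      dsimp only
      rw [dif_pos ⟨hi, hvW, hc⟩]
      exact Fin.is_lt _
    · intro i hi u v huW hcu hvW hcv heq
      dsimp only at heq
      rw [dif_pos ⟨hi, huW, hcu⟩, dif_pos ⟨hi, hvW, hcv⟩] at heq
      have h2 : ((hiso i hi).some ⟨u, huW, hcu⟩ : Fin (m i)) =
          ((hiso i hi).some ⟨v, hvW, hcv⟩ : Fin (m i)) := Fin.ext heq
      have h3 := (hiso i hi).some.toEquiv.injective h2
      exact congrArg Subtype.val h3
    · intro i hi r hr
      refine ⟨((hiso i hi).some.symm ⟨r, hr⟩ : {v | v ∈ W ∧ comp v = i}).val,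
        ((hiso i hi).some.symm ⟨r, hr⟩).prop.1, ((hiso i hi).some.symm ⟨r, hr⟩).prop.2, ?_⟩
      dsimp only
      rw [dif_pos ⟨hi, ((hiso i hi).some.symm ⟨r, hr⟩).prop.1,
        ((hiso i hi).some.symm ⟨r, hr⟩).prop.2⟩]
      have : (⟨((hiso i hi).some.symm ⟨r, hr⟩ : {v | v ∈ W ∧ comp v = i}).val,
          ⟨((hiso i hi).some.symm ⟨r, hr⟩).prop.1, ((hiso i hi).some.symm ⟨r, hr⟩).prop.2⟩⟩ :
          {v | v ∈ W ∧ comp v = i}) = (hiso i hi).some.symm ⟨r, hr⟩ := rfl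
      rw [this, RelIso.apply_symm_apply]
    · intro i hi u v huW hcu hvW hcv hne hnadj
      dsimp only
      rw [dif_pos ⟨hi, huW, hcu⟩, dif_pos ⟨hi, hvW, hcv⟩]
      have hGc : (Gᶜ).Adj u v := (SimpleGraph.compl_adj G u v).mpr ⟨hne, hnadj⟩
      have hadj : (Gᶜ.induce {v | v ∈ W ∧ comp v = i}).Adj ⟨u, huW, hcu⟩ ⟨v, hvW, hcv⟩ := hGc
      have hpadj := ((hiso i hi).some.map_adj_iff).mpr hadj
      rw [SimpleGraph.pathGraph_adj] at hpadj
      rcases hpadj with h | h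
      · exact Or.inr (by omega)
      · exact Or.inl (by omega)
  set offset : ℕ → ℕ := fun i => ∑ k ∈ Finset.range i, m k with hoffdef
  have hoffsucc : ∀ i, offset (i + 1) = offset i + m i := fun i => Finset.sum_range_succ m i
  have hoffmono : ∀ i j, i ≤ j → offset i ≤ offset j := by
    intro i j hij
    exact Finset.sum_le_sum_of_subset (Finset.range_subset_range.mpr hij)
  set N : ℕ := offset (a + b) with hNdef
  set ρ : V → ℕ := fun v => offset (comp v) + pos (comp v) v with hρdef
  have hN6 : 6 ≤ N := by
    have h1 : a + b ≤ N := by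
      have := Finset.sum_le_sum (f := fun _ => 1) (g := m)
        (s := Finset.range (a + b)) (fun i hi => hm i (Finset.mem_range.mp hi))
      simpa using this
    omega
  have hρlt : ∀ v ∈ W, ρ v < N := by
    intro v hv
    have hc := hlt v hv
    have h1 : pos (comp v) v < m (comp v) := hP1 (comp v) hc v hv rfl
    have h2 := hoffsucc (comp v)
    have h3 := hoffmono (comp v + 1) (a + b) (by omega)
    simp only [hρdef, hNdef]
    omega
  have hρinj : ∀ u, u ∈ W → ∀ v, v ∈ W → ρ u = ρ v → u = v := by
    intro u hu v hv heq
    simp only [hρdef] at heq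
    rcases Nat.lt_trichotomy (comp u) (comp v) with hc | hc | hc
    · exfalso
      have h1 : pos (comp u) u < m (comp u) := hP1 _ (hlt u hu) u hu rfl
      have h2 := hoffsucc (comp u)
      have h3 := hoffmono (comp u + 1) (comp v) (by omega)
      omega
    · have h1 : pos (comp u) u = pos (comp u) v := by rw [hc] at heq ⊢; omega
      exact hP2 (comp u) (hlt u hu) u v hu rfl hv hc.symm h1
    · exfalso
      have h1 : pos (comp v) v < m (comp v) := hP1 _ (hlt v hv) v hv rfl
      have h2 := hoffsucc (comp v)
      have h3 := hoffmono (comp v + 1) (comp u) (by omega)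
      omega
  have hρsurj : ∀ n, n < N → ∃ v, v ∈ W ∧ ρ v = n := by
    have hdec : ∀ t n, n < offset t → ∃ i, i < t ∧ ∃ r, r < m i ∧ n = offset i + r := by
      intro t
      induction t with
      | zero => intro n hn; simp [hoffdef] at hn
      | succ t ih =>
        intro n hn
        rw [hoffsucc t] at hn
        by_cases hlt' : n < offset t
        · obtain ⟨i, hi, r, hr, he⟩ := ih n hlt'
          exact ⟨i, by omega, r, hr, he⟩
        · exact ⟨t, by omega, n - offset t, by omega, by omega⟩
    intro n hn
    obtain ⟨i, hi, r, hr, he⟩ := hdec (a + b) n hn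
    obtain ⟨v, hvW, hvc, hvpos⟩ := hP3 i hi r hr
    refine ⟨v, hvW, ?_⟩
    simp only [hρdef]
    rw [hvc, hvpos]
    omega
  have hcons : ∀ u, u ∈ W → ∀ v, v ∈ W → u ≠ v → ¬ G.Adj u v →
      (ρ u = ρ v + 1 ∨ ρ v = ρ u + 1) := by
    intro u hu v hv hne hnadj
    have hceq : comp u = comp v := hedges u hu v hv hne hnadj
    have := hP4 (comp u) (hlt u hu) u v hu rfl hv hceq.symm hne hnadj
    simp only [hρdef, hceq]
    rw [hceq] at this
    omega
  -- the set of missing (non-adjacent consecutive) positions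
  set P : ℕ → Prop := fun s => ∃ u, u ∈ W ∧ ∃ v, v ∈ W ∧ u ≠ v ∧ ¬ G.Adj u v ∧
    ρ u = s ∧ ρ v = s + 1 with hPdef
  have hPprop : ∀ s, P s → s + 2 ≤ N ∧ ∀ i, i < a + b → offset i ≠ s + 1 := by
    intro s ⟨u, hu, v, hv, hne, hnadj, hρu, hρv⟩
    have hceq : comp u = comp v := hedges u hu v hv hne hnadj
    have hvN := hρlt v hv
    constructor
    · omega
    · intro i hi hoff
      have hρu' : ρ u = offset (comp u) + pos (comp u) u := by simp only [hρdef]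
      have hρv' : ρ v = offset (comp u) + pos (comp u) v := by
        simp only [hρdef]; rw [hceq]
      have hpu : pos (comp u) u < m (comp u) := hP1 _ (hlt u hu) u hu rfl
      have hpv : pos (comp u) v < m (comp u) := by
        rw [hceq]; exact hP1 _ (hlt v hv) v hv rfl
      have hsucc := hoffsucc (comp u)
      rcases Nat.lt_or_ge i (comp u + 1) with hic | hic
      · have := hoffmono i (comp u) (by omega)
        omega
      · have := hoffmono (comp u + 1) i hic
        omega
  have hsm : N ≤ 8 → ∃ k l, k ≤ l ∧ l + 2 ≤ N ∧ (N = 7 → k = l) ∧ (N = 6 → k = 0 ∧ l = 0) ∧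
      ∀ s, P s → s = k ∨ s = l := by
    intro hN8
    set msF := (Finset.range N).filter P with hmsdef
    have hPmem : ∀ s, P s → s ∈ msF := by
      intro s hs
      exact Finset.mem_filter.mpr ⟨Finset.mem_range.mpr (by have := (hPprop s hs).1; omega), hs⟩
    have hcard : msF.card + (a + b) ≤ N := by
      have hOsub : ((Finset.range (a + b)).image offset) ⊆ Finset.range N := by
        intro x hx
        obtain ⟨i, hi, rfl⟩ := Finset.mem_image.mp hx
        have hi' := Finset.mem_range.mp hi
        have h1 := hoffsucc i
        have h2 := hoffmono (i + 1) (a + b) (by omega)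
        have h3 := hm i hi'
        exact Finset.mem_range.mpr (by omega)
      have hOcard : ((Finset.range (a + b)).image offset).card = a + b := by
        rw [Finset.card_image_of_injOn, Finset.card_range]
        intro i hi j hj heq
        by_contra hne
        rcases Nat.lt_or_ge i j with hij | hij
        · have h1 := hoffsucc i
          have h2 := hoffmono (i + 1) j (by omega)
          have h3 := hm i (Finset.mem_range.mp (Finset.mem_coe.mp hi))
          omega
        · have hij' : j < i := by omega
          have h1 := hoffsucc j
          have h2 := hoffmono (j + 1) i (by omega)
          have h3 := hm j (Finset.mem_range.mp (Finset.mem_coe.mp hj))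
          omega
      have hIcard : (msF.image (· + 1)).card = msF.card :=
        Finset.card_image_of_injective _ (fun x y h => by omega)
      have hIsub : msF.image (· + 1) ⊆ Finset.range N := by
        intro x hx
        obtain ⟨s, hs, rfl⟩ := Finset.mem_image.mp hx
        have := (hPprop s (Finset.mem_filter.mp hs).2).1
        exact Finset.mem_range.mpr (by omega)
      have hdisj : Disjoint (msF.image (· + 1)) ((Finset.range (a + b)).image offset) := by
        rw [Finset.disjoint_left]
        intro x hx hx'
        obtain ⟨s, hs, rfl⟩ := Finset.mem_image.mp hx
        obtain ⟨i, hi, heq⟩ := Finset.mem_image.mp hx'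
        exact (hPprop s (Finset.mem_filter.mp hs).2).2 i
          (Finset.mem_range.mp hi) heq
      calc msF.card + (a + b)
          = (msF.image (· + 1)).card + ((Finset.range (a + b)).image offset).card := by
            rw [hIcard, hOcard]
        _ = ((msF.image (· + 1)) ∪ ((Finset.range (a + b)).image offset)).card :=
            (Finset.card_union_of_disjoint hdisj).symm
        _ ≤ (Finset.range N).card :=
            Finset.card_le_card (Finset.union_subset hIsub hOsub)
        _ = N := Finset.card_range N
    have hc2 : msF.card ≤ 2 := by omega
    rcases Nat.lt_or_ge msF.card 1 with hcc | hcc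
    · refine ⟨0, 0, le_rfl, by omega, fun _ => rfl, fun _ => ⟨rfl, rfl⟩, ?_⟩
      intro s hs
      have := Finset.card_eq_zero.mp (by omega : msF.card = 0)
      rw [this] at hPmem
      exact absurd (hPmem s hs) (Finset.notMem_empty s)
    rcases Nat.lt_or_ge msF.card 2 with hcc2 | hcc2
    · obtain ⟨x, hx⟩ := Finset.card_eq_one.mp (by omega : msF.card = 1)
      refine ⟨x, x, le_rfl, ?_, fun _ => rfl, ?_, ?_⟩
      · have hxm : x ∈ msF := by rw [hx]; exact Finset.mem_singleton_self x
        have := (hPprop x (Finset.mem_filter.mp hxm).2).1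
        omega
      · intro h6'
        omega
      · intro s hs
        have := hPmem s hs
        rw [hx, Finset.mem_singleton] at this
        exact Or.inl this
    · obtain ⟨x, y, hxy, hset⟩ := Finset.card_eq_two.mp (by omega : msF.card = 2)
      refine ⟨min x y, max x y, min_le_max, ?_, ?_, ?_, ?_⟩
      · have hym : max x y ∈ msF := by
          rw [hset]
          rcases Nat.le_total x y with h | h
          · simp [Nat.max_eq_right h]
          · simp [Nat.max_eq_left h]
        have := (hPprop (max x y) (Finset.mem_filter.mp hym).2).1
        omega
      · intro h7; omega
      · intro h6'; omega
      · intro s hs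
        have := hPmem s hs
        rw [hset] at this
        rcases Finset.mem_insert.mp this with h | h
        · subst h
          rcases Nat.le_total s y with h | h
          · exact Or.inl (by omega)
          · exact Or.inr (by omega)
        · rw [Finset.mem_singleton] at h
          subst h
          rcases Nat.le_total x s with h | h
          · exact Or.inr (by omega)
          · exact Or.inl (by omega)
  obtain ⟨M, hspec⟩ := Stmt4Aux.arith N hN6 P hsm
  set D : V → V → Prop := fun x y => x ∈ W ∧ y ∈ W ∧ G.Adj x y ∧ M (ρ x) (ρ y) with hDdef
  have hρne : ∀ x, x ∈ W → ∀ y, y ∈ W → x ≠ y → ρ x ≠ ρ y := by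
    intro x hx y hy hne h
    exact hne (hρinj x hx y hy h)
  have hUD : ∀ x, x ∈ W → ∀ y, y ∈ W → x ≠ y →
      Stmt4Aux.Usable P M (ρ x) (ρ y) → D x y := by
    intro x hx y hy hne hU
    obtain ⟨hM, hnb1, hnb2⟩ := hU
    refine ⟨hx, hy, ?_, hM⟩
    by_contra hnadj
    rcases hcons x hx y hy hne hnadj with h | h
    · exact hnb2 ⟨h, ⟨y, hy, x, hx, hne.symm, fun h' => hnadj h'.symm, rfl, h⟩⟩
    · exact hnb1 ⟨h, ⟨x, hx, y, hy, hne, hnadj, rfl, h⟩⟩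
  refine ⟨D, ⟨?_, ?_⟩, ?_, ?_⟩
  · intro u v ⟨hu, hv, hadj, _⟩
    exact ⟨hu, hv, hadj⟩
  · intro u v hu hv hadj
    have hne : u ≠ v := G.ne_of_adj hadj
    have htour := hspec.1 (ρ u) (hρlt u hu) (ρ v) (hρlt v hv) (hρne u hu v hv hne)
    constructor
    · intro ⟨_, _, _, hM⟩ ⟨_, _, _, hM'⟩
      exact (htour.mp hM) hM'
    · intro hnD
      refine ⟨hu, hv, hadj, htour.mpr ?_⟩
      intro hM'
      exact hnD ⟨hv, hu, hadj.symm, hM'⟩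
  · intro x hx y hy hne _
    rcases hspec.2 (ρ x) (hρlt x hx) (ρ y) (hρlt y hy) (hρne x hx y hy hne) with
      hU | ⟨w, hwN, hwx, hwy, hU1, hU2⟩
    · exact Or.inl (hUD x hx y hy hne hU)
    · obtain ⟨z, hz, hzρ⟩ := hρsurj w hwN
      have hzx : z ≠ x := fun h => hwx (by rw [← hzρ, h])
      have hzy : z ≠ y := fun h => hwy (by rw [← hzρ, h])
      rw [← hzρ] at hU1 hU2
      exact Or.inr ⟨z, hUD x hx z hz (Ne.symm hzx) hU1, hUD z hz y hy hzy hU2⟩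
  · intro x hx
    have hrx := hρlt x hx
    set j0 := if ρ x = 0 then 1 else 0 with hj0
    have hj0N : j0 < N ∧ j0 ≠ ρ x := by rw [hj0]; split_ifs <;> omega
    obtain ⟨u, hu, huρ⟩ := hρsurj j0 hj0N.1
    have hux : u ≠ x := fun h => hj0N.2 (by rw [← huρ, h])
    constructor
    · rcases hspec.2 j0 hj0N.1 (ρ x) hrx hj0N.2 with hU | ⟨w, hwN, hwj0, hwρx, hU1, hU2⟩
      · rw [← huρ] at hU
        exact ⟨u, hUD u hu x hx hux hU⟩
      · obtain ⟨z, hz, hzρ⟩ := hρsurj w hwN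
        have hzx : z ≠ x := fun h => hwρx (by rw [← hzρ, h])
        rw [← hzρ] at hU2
        exact ⟨z, hUD z hz x hx hzx hU2⟩
    · rcases hspec.2 (ρ x) hrx j0 hj0N.1 (Ne.symm hj0N.2) with hU | ⟨w, hwN, hwρx, hwj0, hU1, hU2⟩
      · rw [← huρ] at hU
        exact ⟨u, hUD x hx u hu (Ne.symm hux) hU⟩
      · obtain ⟨z, hz, hzρ⟩ := hρsurj w hwN
        have hzx : z ≠ x := fun h => hwρx (by rw [← hzρ, h])
        rw [← hzρ] at hU1
        exact ⟨z, hUD x hx z hz (Ne.symm hzx) hU1⟩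
end

section
/- Suppose the vertex set of a graph G is partitioned into two nonempty sets W and Z such that every vertex of W is adjacent in G to every vertex of Z. Suppose G[W] has an orientation O_W together with a partition of W into U₁ and V₁ such that any two vertices both in U₁ or both in V₁ are at directed distance at most 2 in O_W, and every vertex of U₁ has both an in-neighbor and an out-neighbor in V₁ and vice versa. If |Z| = 2, then G has an orientation of diameter at most two. -/
/-!
Write `Z = {a, b}`. Keep the orientation of `G[W]`, orient the cycle `a → U₁ → b → V₁ → a`,
and orient `ab` from `a` to `b` if it is an edge. Two vertices in the same part are at distance
at most 2 by hypothesis; opposite parts are joined through `a` or `b`; a vertex of `W` reaches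
(and is reached from) `a` and `b` through a suitable neighbour in the opposite part; finally
`a → u → b` and `b → v → a` for any `u ∈ U₁`, `v ∈ V₁`.
-/

theorem IsOrientation.of_asymm {V : Type*} {G : SimpleGraph V} {O : V → V → Prop}
    (hadj : ∀ u v, O u v → G.Adj u v) (hasymm : ∀ u v, O u v → ¬ O v u)
    (htotal : ∀ u v, G.Adj u v → O u v ∨ O v u) : IsOrientation G O :=
  ⟨hadj, fun u v huv => ⟨hasymm u v, (htotal u v huv).resolve_right⟩⟩

theorem DistLE2.mono {V : Type*} {D O : V → V → Prop} (hDO : ∀ x y, D x y → O x y) {u v : V} :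
    DistLE2 D u v → DistLE2 O u v
  | .inl h => .inl (hDO _ _ h)
  | .inr ⟨w, huw, hwv⟩ => .inr ⟨w, hDO _ _ huw, hDO _ _ hwv⟩

theorem IsOrientationOn.asymm {V : Type*} {G : SimpleGraph V} {W : Set V} {D : V → V → Prop}
    (hD : IsOrientationOn G W D) {x y : V} (hxy : D x y) : ¬ D y x :=
  have ⟨hx, hy, hadj⟩ := hD.1 x y hxy
  (hD.2 x y hx hy hadj).1 hxy

theorem IsOrientationOn.total {V : Type*} {G : SimpleGraph V} {W : Set V} {D : V → V → Prop}
    (hD : IsOrientationOn G W D) {x y : V} (hx : x ∈ W) (hy : y ∈ W) (hxy : G.Adj x y) :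
    D x y ∨ D y x :=
  (em (D y x)).symm.imp_left (hD.2 x y hx hy hxy).2

section PairExtension

variable {V : Type*} (G : SimpleGraph V) (D : V → V → Prop) (U₁ V₁ : Set V) (a b : V)

def pairExtension : V → V → Prop := fun x y =>
  D x y ∨ (x = a ∧ y ∈ U₁) ∨ (x ∈ U₁ ∧ y = b) ∨ (x = b ∧ y ∈ V₁) ∨ (x ∈ V₁ ∧ y = a) ∨
    (x = a ∧ y = b ∧ G.Adj a b)

variable {G D U₁ V₁ a b}

theorem pairExtension_adj (hD : IsOrientationOn G (U₁ ∪ V₁) D)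
    (hcross : ∀ w ∈ U₁ ∪ V₁, ∀ z ∈ ({a, b} : Set V), G.Adj w z) {x y : V}
    (h : pairExtension G D U₁ V₁ a b x y) : G.Adj x y := by
  rcases h with h | ⟨rfl, hy⟩ | ⟨hx, rfl⟩ | ⟨rfl, hy⟩ | ⟨hx, rfl⟩ | ⟨rfl, rfl, h⟩
  · exact (hD.1 x y h).2.2
  · exact (hcross y (.inl hy) _ (.inl rfl)).symm
  · exact hcross x (.inl hx) _ (.inr rfl)
  · exact (hcross y (.inr hy) _ (.inr rfl)).symm
  · exact hcross x (.inr hx) _ (.inl rfl)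
  · exact h

theorem pairExtension_asymm (hD : IsOrientationOn G (U₁ ∪ V₁) D) (hdisj : Disjoint U₁ V₁)
    (ha : a ∉ U₁ ∪ V₁) (hb : b ∉ U₁ ∪ V₁) (hab : a ≠ b) {x y : V}
    (hxy : pairExtension G D U₁ V₁ a b x y) : ¬ pairExtension G D U₁ V₁ a b y x := by
  have hUV := Set.disjoint_left.mp hdisj
  have hDW := hD.1
  have hDasymm : ∀ x y, D x y → ¬ D y x := fun _ _ => hD.asymm
  unfold pairExtension at *
  grind

theorem pairExtension_total (hD : IsOrientationOn G (U₁ ∪ V₁) D)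
    (hcover : ∀ x, x ∈ U₁ ∨ x ∈ V₁ ∨ x = a ∨ x = b) {x y : V} (hxy : G.Adj x y) :
    pairExtension G D U₁ V₁ a b x y ∨ pairExtension G D U₁ V₁ a b y x := by
  have hDtotal : ∀ x y, x ∈ U₁ ∪ V₁ → y ∈ U₁ ∪ V₁ → G.Adj x y → D x y ∨ D y x :=
    fun _ _ => hD.total
  have hirrefl := G.loopless.irrefl
  have hsymm : ∀ u v, G.Adj u v → G.Adj v u := fun _ _ => G.adj_symm
  unfold pairExtension
  grind

theorem pairExtension_distLE2 (hcover : ∀ x, x ∈ U₁ ∨ x ∈ V₁ ∨ x = a ∨ x = b)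
    (hdist : ∀ x y, x ≠ y → ((x ∈ U₁ ∧ y ∈ U₁) ∨ (x ∈ V₁ ∧ y ∈ V₁)) → DistLE2 D x y)
    (hnt₁ : ∀ u ∈ U₁, (∃ v ∈ V₁, D v u) ∧ (∃ v ∈ V₁, D u v))
    (hnt₂ : ∀ u ∈ V₁, (∃ v ∈ U₁, D v u) ∧ (∃ v ∈ U₁, D u v))
    (hU : U₁.Nonempty) (hV : V₁.Nonempty) {x y : V} (hxy : x ≠ y) :
    DistLE2 (pairExtension G D U₁ V₁ a b) x y := by
  set O := pairExtension G D U₁ V₁ a b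
  have hDO : ∀ x y, D x y → O x y := fun _ _ => .inl
  have aU : ∀ u ∈ U₁, O a u := fun _ hu => .inr (.inl ⟨rfl, hu⟩)
  have Ub : ∀ u ∈ U₁, O u b := fun _ hu => .inr (.inr (.inl ⟨hu, rfl⟩))
  have bV : ∀ v ∈ V₁, O b v := fun _ hv => .inr (.inr (.inr (.inl ⟨rfl, hv⟩)))
  have Va : ∀ v ∈ V₁, O v a := fun _ hv => .inr (.inr (.inr (.inr (.inl ⟨hv, rfl⟩))))
  rcases hcover x with hx | hx | rfl | rfl <;> rcases hcover y with hy | hy | rfl | rfl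
  · exact (hdist x y hxy (.inl ⟨hx, hy⟩)).mono hDO
  · exact .inr ⟨b, Ub x hx, bV y hy⟩
  · obtain ⟨v, hv, hxv⟩ := (hnt₁ x hx).2
    exact .inr ⟨v, hDO _ _ hxv, Va v hv⟩
  · exact .inl (Ub x hx)
  · exact .inr ⟨a, Va x hx, aU y hy⟩
  · exact (hdist x y hxy (.inr ⟨hx, hy⟩)).mono hDO
  · exact .inl (Va x hx)
  · obtain ⟨u, hu, hxu⟩ := (hnt₂ x hx).2
    exact .inr ⟨u, hDO _ _ hxu, Ub u hu⟩
  · exact .inl (aU y hy)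
  · obtain ⟨u, hu, huy⟩ := (hnt₂ y hy).1
    exact .inr ⟨u, aU u hu, hDO _ _ huy⟩
  · exact absurd rfl hxy
  · obtain ⟨u, hu⟩ := hU
    exact .inr ⟨u, aU u hu, Ub u hu⟩
  · obtain ⟨v, hv, hvy⟩ := (hnt₁ y hy).1
    exact .inr ⟨v, bV v hv, hDO _ _ hvy⟩
  · exact .inl (bV y hy)
  · obtain ⟨v, hv⟩ := hV
    exact .inr ⟨v, bV v hv, Va v hv⟩
  · exact absurd rfl hxy

end PairExtension

theorem stmt5_general {V : Type*} (G : SimpleGraph V)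
    (W Z : Set V) (hWZ : Disjoint W Z) (huniv : W ∪ Z = Set.univ)
    (hWne : W.Nonempty) (hZcard : Nat.card Z = 2)
    (hcross : ∀ w ∈ W, ∀ z ∈ Z, G.Adj w z)
    (D : V → V → Prop) (hD : IsOrientationOn G W D)
    (U₁ V₁ : Set V) (hpart : U₁ ∪ V₁ = W) (hdisj : Disjoint U₁ V₁)
    (hdist : ∀ x y, x ≠ y → ((x ∈ U₁ ∧ y ∈ U₁) ∨ (x ∈ V₁ ∧ y ∈ V₁)) → DistLE2 D x y)
    (hnt₁ : ∀ u ∈ U₁, (∃ v ∈ V₁, D v u) ∧ (∃ v ∈ V₁, D u v))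
    (hnt₂ : ∀ u ∈ V₁, (∃ v ∈ U₁, D v u) ∧ (∃ v ∈ U₁, D u v)) :
    ∃ O : V → V → Prop, IsOrientation G O ∧ ∀ u v, u ≠ v → DistLE2 O u v := by
  obtain ⟨a, b, hab, rfl⟩ := Set.ncard_eq_two.mp (by rwa [← Nat.card_coe_set_eq])
  subst hpart
  obtain ⟨ha, hb⟩ : a ∉ U₁ ∪ V₁ ∧ b ∉ U₁ ∪ V₁ := by
    simpa [Set.disjoint_insert_right] using hWZ
  have hcover : ∀ x, x ∈ U₁ ∨ x ∈ V₁ ∨ x = a ∨ x = b := fun x => by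
    have hx := huniv.ge (Set.mem_univ x)
    simp only [Set.union_insert, Set.union_singleton, Set.mem_insert_iff, Set.mem_union] at hx
    tauto
  have hU : U₁.Nonempty := by
    obtain ⟨w, hw | hw⟩ := hWne
    exacts [⟨w, hw⟩, (hnt₂ w hw).1.imp fun _ => And.left]
  have hV : V₁.Nonempty := by
    obtain ⟨w, hw | hw⟩ := hWne
    exacts [(hnt₁ w hw).1.imp fun _ => And.left, ⟨w, hw⟩]
  refine ⟨pairExtension G D U₁ V₁ a b, .of_asymm ?_ ?_ ?_, ?_⟩
  · exact fun _ _ => pairExtension_adj hD hcross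
  · exact fun _ _ => pairExtension_asymm hD hdisj ha hb hab
  · exact fun _ _ => pairExtension_total hD hcover
  · exact fun _ _ => pairExtension_distLE2 hcover hdist hnt₁ hnt₂ hU hV

/-- If `V(G)` is partitioned into nonempty `W` and `Z` with all `W`–`Z` edges present,
`G[W]` has a non-trivial good orientation, and `|Z| = 2`, then `G` has an orientation of
diameter at most two. -/
theorem stmt5 {V : Type*} [Fintype V] (G : SimpleGraph V)
    (W Z : Set V) (hWZ : Disjoint W Z) (huniv : W ∪ Z = Set.univ)
    (hWne : W.Nonempty) (hZcard : Nat.card Z = 2)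
    (hcross : ∀ w ∈ W, ∀ z ∈ Z, G.Adj w z)
    (D : V → V → Prop) (hD : IsOrientationOn G W D)
    (U₁ V₁ : Set V) (hpart : U₁ ∪ V₁ = W) (hdisj : Disjoint U₁ V₁)
    (hdist : ∀ x y, x ≠ y → ((x ∈ U₁ ∧ y ∈ U₁) ∨ (x ∈ V₁ ∧ y ∈ V₁)) → DistLE2 D x y)
    (hnt₁ : ∀ u ∈ U₁, (∃ v ∈ V₁, D v u) ∧ (∃ v ∈ V₁, D u v))
    (hnt₂ : ∀ u ∈ V₁, (∃ v ∈ U₁, D v u) ∧ (∃ v ∈ U₁, D u v)) :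
    ∃ O : V → V → Prop, IsOrientation G O ∧ ∀ u v, u ≠ v → DistLE2 O u v :=
  stmt5_general G W Z hWZ huniv hWne hZcard hcross D hD U₁ V₁ hpart hdisj hdist hnt₁ hnt₂
end

section
/- Suppose the vertex set of a graph G is partitioned into two sets W and Z, each of size at least 2, such that every vertex of W is adjacent in G to every vertex of Z. Suppose G[W] has an orientation with a partition of W into U₁, V₁ such that vertices in the same class are at directed distance at most 2 and every vertex of U₁ has an in-neighbor and out-neighbor in V₁ and vice versa; and suppose G[Z] has an orientation with the analogous property for a partition U₂, V₂ of Z. Then G has an orientation of diameter at most two. -/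
/-- If `V(G)` is partitioned into `W` and `Z` (each of size at least 2) with all `W`–`Z`
edges present, and both `G[W]` and `G[Z]` have non-trivial good orientations, then `G`
has an orientation of diameter at most two. -/
theorem stmt6 {V : Type*} [Fintype V] (G : SimpleGraph V)
    (W Z : Set V) (hWZ : Disjoint W Z) (huniv : W ∪ Z = Set.univ)
    (hWcard : 2 ≤ Nat.card W) (hZcard : 2 ≤ Nat.card Z)
    (hcross : ∀ w ∈ W, ∀ z ∈ Z, G.Adj w z)
    (DW : V → V → Prop) (hDW : IsOrientationOn G W DW)
    (U₁ V₁ : Set V) (hpart₁ : U₁ ∪ V₁ = W) (hdisj₁ : Disjoint U₁ V₁)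
    (hdist₁ : ∀ x y, x ≠ y → ((x ∈ U₁ ∧ y ∈ U₁) ∨ (x ∈ V₁ ∧ y ∈ V₁)) → DistLE2 DW x y)
    (hnt₁ : ∀ u ∈ U₁, (∃ v ∈ V₁, DW v u) ∧ (∃ v ∈ V₁, DW u v))
    (hnt₁' : ∀ u ∈ V₁, (∃ v ∈ U₁, DW v u) ∧ (∃ v ∈ U₁, DW u v))
    (DZ : V → V → Prop) (hDZ : IsOrientationOn G Z DZ)
    (U₂ V₂ : Set V) (hpart₂ : U₂ ∪ V₂ = Z) (hdisj₂ : Disjoint U₂ V₂)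
    (hdist₂ : ∀ x y, x ≠ y → ((x ∈ U₂ ∧ y ∈ U₂) ∨ (x ∈ V₂ ∧ y ∈ V₂)) → DistLE2 DZ x y)
    (hnt₂ : ∀ u ∈ U₂, (∃ v ∈ V₂, DZ v u) ∧ (∃ v ∈ V₂, DZ u v))
    (hnt₂' : ∀ u ∈ V₂, (∃ v ∈ U₂, DZ v u) ∧ (∃ v ∈ U₂, DZ u v)) :
    ∃ O : V → V → Prop, IsOrientation G O ∧ ∀ u v, u ≠ v → DistLE2 O u v := by
  classical
  have hU1W : U₁ ⊆ W := hpart₁ ▸ Set.subset_union_left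
  have hV1W : V₁ ⊆ W := hpart₁ ▸ Set.subset_union_right
  have hU2Z : U₂ ⊆ Z := hpart₂ ▸ Set.subset_union_left
  have hV2Z : V₂ ⊆ Z := hpart₂ ▸ Set.subset_union_right
  have hWnZ : ∀ x, x ∈ W → x ∉ Z := fun x hx hz => (hWZ.ne_of_mem hx hz) rfl
  have hU1nV1 : ∀ x, x ∈ U₁ → x ∉ V₁ := fun x hx hz => (hdisj₁.ne_of_mem hx hz) rfl
  have hU2nV2 : ∀ x, x ∈ U₂ → x ∉ V₂ := fun x hx hz => (hdisj₂.ne_of_mem hx hz) rfl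
  have hWne : W.Nonempty := Set.nonempty_coe_sort.mp (Nat.card_pos_iff.mp (by omega)).1
  have hZne : Z.Nonempty := Set.nonempty_coe_sort.mp (Nat.card_pos_iff.mp (by omega)).1
  obtain ⟨w0, hw0⟩ := hWne
  obtain ⟨z0, hz0⟩ := hZne
  have hU1ne : ∃ x, x ∈ U₁ := by
    have : w0 ∈ U₁ ∪ V₁ := hpart₁.symm ▸ hw0
    rcases this with h | h
    · exact ⟨w0, h⟩
    · obtain ⟨x, hx, -⟩ := (hnt₁' w0 h).1; exact ⟨x, hx⟩
  have hV1ne : ∃ x, x ∈ V₁ := by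
    have : w0 ∈ U₁ ∪ V₁ := hpart₁.symm ▸ hw0
    rcases this with h | h
    · obtain ⟨x, hx, -⟩ := (hnt₁ w0 h).1; exact ⟨x, hx⟩
    · exact ⟨w0, h⟩
  have hU2ne : ∃ x, x ∈ U₂ := by
    have : z0 ∈ U₂ ∪ V₂ := hpart₂.symm ▸ hz0
    rcases this with h | h
    · exact ⟨z0, h⟩
    · obtain ⟨x, hx, -⟩ := (hnt₂' z0 h).1; exact ⟨x, hx⟩
  have hV2ne : ∃ x, x ∈ V₂ := by
    have : z0 ∈ U₂ ∪ V₂ := hpart₂.symm ▸ hz0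
    rcases this with h | h
    · obtain ⟨x, hx, -⟩ := (hnt₂ z0 h).1; exact ⟨x, hx⟩
    · exact ⟨z0, h⟩
  obtain ⟨a₁, ha₁⟩ := hU1ne
  obtain ⟨b₁, hb₁⟩ := hV1ne
  obtain ⟨a₂, ha₂⟩ := hU2ne
  obtain ⟨b₂, hb₂⟩ := hV2ne
  set O : V → V → Prop := fun u v =>
    (u ∈ W ∧ v ∈ W ∧ DW u v) ∨ (u ∈ Z ∧ v ∈ Z ∧ DZ u v) ∨
    (u ∈ U₁ ∧ v ∈ U₂) ∨ (u ∈ U₂ ∧ v ∈ V₁) ∨ (u ∈ V₁ ∧ v ∈ V₂) ∨ (u ∈ V₂ ∧ v ∈ U₁)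
    with hO
  have oW : ∀ {x y}, DW x y → O x y := fun {x y} h =>
    Or.inl ⟨(hDW.1 x y h).1, (hDW.1 x y h).2.1, h⟩
  have oZ : ∀ {x y}, DZ x y → O x y := fun {x y} h =>
    Or.inr (Or.inl ⟨(hDZ.1 x y h).1, (hDZ.1 x y h).2.1, h⟩)
  have oc1 : ∀ {x y}, x ∈ U₁ → y ∈ U₂ → O x y := fun hx hy =>
    Or.inr (Or.inr (Or.inl ⟨hx, hy⟩))
  have oc2 : ∀ {x y}, x ∈ U₂ → y ∈ V₁ → O x y := fun hx hy =>
    Or.inr (Or.inr (Or.inr (Or.inl ⟨hx, hy⟩)))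
  have oc3 : ∀ {x y}, x ∈ V₁ → y ∈ V₂ → O x y := fun hx hy =>
    Or.inr (Or.inr (Or.inr (Or.inr (Or.inl ⟨hx, hy⟩))))
  have oc4 : ∀ {x y}, x ∈ V₂ → y ∈ U₁ → O x y := fun hx hy =>
    Or.inr (Or.inr (Or.inr (Or.inr (Or.inr ⟨hx, hy⟩))))
  have hmem : ∀ x, (x ∈ U₁ ∧ x ∈ W ∧ x ∉ V₁ ∧ x ∉ U₂ ∧ x ∉ V₂ ∧ x ∉ Z) ∨
      (x ∈ V₁ ∧ x ∈ W ∧ x ∉ U₁ ∧ x ∉ U₂ ∧ x ∉ V₂ ∧ x ∉ Z) ∨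
      (x ∈ U₂ ∧ x ∈ Z ∧ x ∉ U₁ ∧ x ∉ V₁ ∧ x ∉ V₂ ∧ x ∉ W) ∨
      (x ∈ V₂ ∧ x ∈ Z ∧ x ∉ U₁ ∧ x ∉ V₁ ∧ x ∉ U₂ ∧ x ∉ W) := by
    intro x
    have hx : x ∈ W ∪ Z := huniv.symm ▸ Set.mem_univ x
    rcases hx with hx | hx
    · have hxZ := hWnZ x hx
      have : x ∈ U₁ ∪ V₁ := hpart₁.symm ▸ hx
      rcases this with h | h
      · exact Or.inl ⟨h, hx, hU1nV1 x h, fun c => hxZ (hU2Z c), fun c => hxZ (hV2Z c), hxZ⟩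
      · exact Or.inr (Or.inl ⟨h, hx, fun c => hU1nV1 x c h, fun c => hxZ (hU2Z c),
          fun c => hxZ (hV2Z c), hxZ⟩)
    · have hxW : x ∉ W := fun c => hWnZ x c hx
      have : x ∈ U₂ ∪ V₂ := hpart₂.symm ▸ hx
      rcases this with h | h
      · exact Or.inr (Or.inr (Or.inl ⟨h, hx, fun c => hxW (hU1W c), fun c => hxW (hV1W c),
          hU2nV2 x h, hxW⟩))
      · exact Or.inr (Or.inr (Or.inr ⟨h, hx, fun c => hxW (hU1W c), fun c => hxW (hV1W c),
          fun c => hU2nV2 x c h, hxW⟩))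
  have hOW : ∀ {u v}, u ∈ W → v ∈ W → (O u v ↔ DW u v) := by
    intro u v hu hv
    constructor
    · rintro (⟨-, -, h⟩ | ⟨huZ, -, -⟩ | ⟨h1, h2⟩ | ⟨h1, h2⟩ | ⟨h1, h2⟩ | ⟨h1, h2⟩)
      · exact h
      · exact absurd huZ (hWnZ u hu)
      · exact absurd (hU2Z h2) (hWnZ v hv)
      · exact absurd (hU2Z h1) (hWnZ u hu)
      · exact absurd (hV2Z h2) (hWnZ v hv)
      · exact absurd (hV2Z h1) (hWnZ u hu)
    · exact oW
  have hOZ : ∀ {u v}, u ∈ Z → v ∈ Z → (O u v ↔ DZ u v) := by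
    intro u v hu hv
    have huW : u ∉ W := fun c => hWnZ u c hu
    have hvW : v ∉ W := fun c => hWnZ v c hv
    constructor
    · rintro (⟨huW', -, -⟩ | ⟨-, -, h⟩ | ⟨h1, h2⟩ | ⟨h1, h2⟩ | ⟨h1, h2⟩ | ⟨h1, h2⟩)
      · exact absurd huW' huW
      · exact h
      · exact absurd (hU1W h1) huW
      · exact absurd (hV1W h2) hvW
      · exact absurd (hV1W h1) huW
      · exact absurd (hU1W h2) hvW
    · exact oZ
  have hOWZ : ∀ {u v}, u ∈ W → v ∈ Z →
      (O u v ↔ (u ∈ U₁ ∧ v ∈ U₂) ∨ (u ∈ V₁ ∧ v ∈ V₂)) := by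
    intro u v hu hv
    have hvW : v ∉ W := fun c => hWnZ v c hv
    have huZ : u ∉ Z := hWnZ u hu
    constructor
    · rintro (⟨-, hvW', -⟩ | ⟨huZ', -, -⟩ | ⟨h1, h2⟩ | ⟨h1, h2⟩ | ⟨h1, h2⟩ | ⟨h1, h2⟩)
      · exact absurd hvW' hvW
      · exact absurd huZ' huZ
      · exact Or.inl ⟨h1, h2⟩
      · exact absurd (hU2Z h1) huZ
      · exact Or.inr ⟨h1, h2⟩
      · exact absurd (hV2Z h1) huZ
    · rintro (⟨h1, h2⟩ | ⟨h1, h2⟩)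
      · exact oc1 h1 h2
      · exact oc3 h1 h2
  have hOZW : ∀ {u v}, u ∈ Z → v ∈ W →
      (O u v ↔ (u ∈ U₂ ∧ v ∈ V₁) ∨ (u ∈ V₂ ∧ v ∈ U₁)) := by
    intro u v hu hv
    have huW : u ∉ W := fun c => hWnZ u c hu
    have hvZ : v ∉ Z := hWnZ v hv
    constructor
    · rintro (⟨huW', -, -⟩ | ⟨-, hvZ', -⟩ | ⟨h1, h2⟩ | ⟨h1, h2⟩ | ⟨h1, h2⟩ | ⟨h1, h2⟩)
      · exact absurd huW' huW
      · exact absurd hvZ' hvZ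
      · exact absurd (hU1W h1) huW
      · exact Or.inl ⟨h1, h2⟩
      · exact absurd (hV1W h1) huW
      · exact Or.inr ⟨h1, h2⟩
    · rintro (⟨h1, h2⟩ | ⟨h1, h2⟩)
      · exact oc2 h1 h2
      · exact oc4 h1 h2
  refine ⟨O, ⟨?_, ?_⟩, ?_⟩
  · rintro u v (⟨-, -, h⟩ | ⟨-, -, h⟩ | ⟨hu, hv⟩ | ⟨hu, hv⟩ | ⟨hu, hv⟩ | ⟨hu, hv⟩)
    · exact (hDW.1 u v h).2.2
    · exact (hDZ.1 u v h).2.2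
    · exact hcross u (hU1W hu) v (hU2Z hv)
    · exact (hcross v (hV1W hv) u (hU2Z hu)).symm
    · exact hcross u (hV1W hu) v (hV2Z hv)
    · exact (hcross v (hU1W hv) u (hV2Z hu)).symm
  · intro u v hadj
    have hu : u ∈ W ∪ Z := huniv.symm ▸ Set.mem_univ u
    have hv : v ∈ W ∪ Z := huniv.symm ▸ Set.mem_univ v
    rcases hu with hu | hu <;> rcases hv with hv | hv
    · rw [hOW hu hv, hOW hv hu]
      exact hDW.2 u v hu hv hadj
    · rw [hOWZ hu hv, hOZW hv hu]
      have hu' : u ∈ U₁ ∪ V₁ := hpart₁.symm ▸ hu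
      have hv' : v ∈ U₂ ∪ V₂ := hpart₂.symm ▸ hv
      rcases hu' with h1 | h1 <;> rcases hv' with g1 | g1
      · have := hU1nV1 u h1; have := hU2nV2 v g1; tauto
      · have := hU1nV1 u h1; have := fun c => hU2nV2 v c g1; tauto
      · have := fun c => hU1nV1 u c h1; have := hU2nV2 v g1; tauto
      · have := fun c => hU1nV1 u c h1; have := fun c => hU2nV2 v c g1; tauto
    · rw [hOZW hu hv, hOWZ hv hu]
      have hu' : u ∈ U₂ ∪ V₂ := hpart₂.symm ▸ hu
      have hv' : v ∈ U₁ ∪ V₁ := hpart₁.symm ▸ hv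
      rcases hu' with h1 | h1 <;> rcases hv' with g1 | g1
      · have := hU2nV2 u h1; have := hU1nV1 v g1; tauto
      · have := hU2nV2 u h1; have := fun c => hU1nV1 v c g1; tauto
      · have := fun c => hU2nV2 u c h1; have := hU1nV1 v g1; tauto
      · have := fun c => hU2nV2 u c h1; have := fun c => hU1nV1 v c g1; tauto
    · rw [hOZ hu hv, hOZ hv hu]
      exact hDZ.2 u v hu hv hadj
  · intro u v hne
    rcases hmem u with ⟨h1,h2,-,-,-,-⟩ | ⟨h1,h2,-,-,-,-⟩ | ⟨h1,h2,-,-,-,-⟩ | ⟨h1,h2,-,-,-,-⟩ <;>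
      rcases hmem v with ⟨g1,g2,-,-,-,-⟩ | ⟨g1,g2,-,-,-,-⟩ | ⟨g1,g2,-,-,-,-⟩ | ⟨g1,g2,-,-,-,-⟩
    · rcases hdist₁ u v hne (Or.inl ⟨h1, g1⟩) with h | ⟨x, hx1, hx2⟩
      · exact Or.inl (oW h)
      · exact Or.inr ⟨x, oW hx1, oW hx2⟩
    · exact Or.inr ⟨a₂, oc1 h1 ha₂, oc2 ha₂ g1⟩
    · exact Or.inl (oc1 h1 g1)
    · obtain ⟨x, hx, hxd⟩ := (hnt₂' v g1).1
      exact Or.inr ⟨x, oc1 h1 hx, oZ hxd⟩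
    · exact Or.inr ⟨b₂, oc3 h1 hb₂, oc4 hb₂ g1⟩
    · rcases hdist₁ u v hne (Or.inr ⟨h1, g1⟩) with h | ⟨x, hx1, hx2⟩
      · exact Or.inl (oW h)
      · exact Or.inr ⟨x, oW hx1, oW hx2⟩
    · obtain ⟨x, hx, hxd⟩ := (hnt₂ v g1).1
      exact Or.inr ⟨x, oc3 h1 hx, oZ hxd⟩
    · exact Or.inl (oc3 h1 g1)
    · obtain ⟨x, hx, hxd⟩ := (hnt₁ v g1).1
      exact Or.inr ⟨x, oc2 h1 hx, oW hxd⟩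
    · exact Or.inl (oc2 h1 g1)
    · rcases hdist₂ u v hne (Or.inl ⟨h1, g1⟩) with h | ⟨x, hx1, hx2⟩
      · exact Or.inl (oZ h)
      · exact Or.inr ⟨x, oZ hx1, oZ hx2⟩
    · exact Or.inr ⟨b₁, oc2 h1 hb₁, oc3 hb₁ g1⟩
    · exact Or.inl (oc4 h1 g1)
    · obtain ⟨x, hx, hxd⟩ := (hnt₁' v g1).1
      exact Or.inr ⟨x, oc4 h1 hx, oW hxd⟩
    · exact Or.inr ⟨a₁, oc4 h1 ha₁, oc1 ha₁ g1⟩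
    · rcases hdist₂ u v hne (Or.inr ⟨h1, g1⟩) with h | ⟨x, hx1, hx2⟩
      · exact Or.inl (oZ h)
      · exact Or.inr ⟨x, oZ hx1, oZ hx2⟩
end

section
/- Every graph on n vertices with 5 ≤ n ≤ 7 and at least C(n,2) − n + 5 edges has an orientation of diameter at most two. -/
/- Fixed tournaments found by computer search. -/
def T5 : Fin 5 → Fin 5 → Bool := fun a b =>
  (a.val, b.val) ∈ [(0,1),(0,2),(0,4),(1,3),(1,4),(2,1),(2,3),(3,0),(4,2),(4,3)]

def T6 : Fin 6 → Fin 6 → Bool := fun a b =>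
  (a.val, b.val) ∈ [(0,3),(0,5),(1,2),(1,4),(2,0),(2,3),(3,1),(3,4),(3,5),(4,0),(4,2),(4,5),(5,1),(5,2)]

def T7a : Fin 7 → Fin 7 → Bool := fun a b =>
  (a.val, b.val) ∈ [(0,5),(0,6),(1,3),(1,6),(2,1),(2,3),(3,0),(3,4),(3,5),(4,0),(4,1),(4,2),(5,1),(5,2),(5,4),(5,6),(6,2),(6,3),(6,4)]

def T7b : Fin 7 → Fin 7 → Bool := fun a b =>
  (a.val, b.val) ∈ [(0,2),(0,3),(1,3),(1,5),(1,6),(2,1),(2,4),(3,4),(3,5),(3,6),(4,0),(4,1),(4,5),(5,0),(5,2),(5,6),(6,0),(6,2),(6,4)]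

def M5 : Fin 5 → Fin 5 → Prop := fun _ _ => False
def M6 : Fin 6 → Fin 6 → Prop := fun p q => (p, q) = (0, 1)
def M7a : Fin 7 → Fin 7 → Prop := fun p q => (p, q) = (0, 1) ∨ (p, q) = (0, 2)
def M7b : Fin 7 → Fin 7 → Prop := fun p q => (p, q) = (0, 1) ∨ (p, q) = (2, 3)

instance : DecidableRel M5 := fun _ _ => by unfold M5; infer_instance
instance : DecidableRel M6 := fun _ _ => by unfold M6; infer_instance
instance : DecidableRel M7a := fun _ _ => by unfold M7a; infer_instance
instance : DecidableRel M7b := fun _ _ => by unfold M7b; infer_instance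

lemma hT5_1 : ∀ u v, T5 u v = true → u ≠ v ∧ ¬ M5 u v ∧ ¬ M5 v u := by decide
lemma hT5_2 : ∀ u v : Fin 5, u ≠ v → ¬ M5 u v → ¬ M5 v u → (T5 u v = true ↔ ¬ T5 v u = true) := by decide
lemma hT5_3 : ∀ u v : Fin 5, u ≠ v → DistLE2 (fun a b => T5 a b = true) u v := by
  unfold DistLE2; decide
lemma hM5 : ∀ p q, M5 p q → ¬ M5 q p := by decide

lemma hT6_1 : ∀ u v, T6 u v = true → u ≠ v ∧ ¬ M6 u v ∧ ¬ M6 v u := by decide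
lemma hT6_2 : ∀ u v : Fin 6, u ≠ v → ¬ M6 u v → ¬ M6 v u → (T6 u v = true ↔ ¬ T6 v u = true) := by decide
lemma hT6_3 : ∀ u v : Fin 6, u ≠ v → DistLE2 (fun a b => T6 a b = true) u v := by
  unfold DistLE2; decide
lemma hM6 : ∀ p q, M6 p q → ¬ M6 q p := by decide

lemma hT7a_1 : ∀ u v, T7a u v = true → u ≠ v ∧ ¬ M7a u v ∧ ¬ M7a v u := by decide
lemma hT7a_2 : ∀ u v : Fin 7, u ≠ v → ¬ M7a u v → ¬ M7a v u → (T7a u v = true ↔ ¬ T7a v u = true) := by decide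
lemma hT7a_3 : ∀ u v : Fin 7, u ≠ v → DistLE2 (fun a b => T7a a b = true) u v := by
  unfold DistLE2; decide
lemma hM7a : ∀ p q, M7a p q → ¬ M7a q p := by decide

lemma hT7b_1 : ∀ u v, T7b u v = true → u ≠ v ∧ ¬ M7b u v ∧ ¬ M7b v u := by decide
lemma hT7b_2 : ∀ u v : Fin 7, u ≠ v → ¬ M7b u v → ¬ M7b v u → (T7b u v = true ↔ ¬ T7b v u = true) := by decide
lemma hT7b_3 : ∀ u v : Fin 7, u ≠ v → DistLE2 (fun a b => T7b a b = true) u v := by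
  unfold DistLE2; decide
lemma hM7b : ∀ p q, M7b p q → ¬ M7b q p := by decide

/-- Generic construction lemma. -/
lemma build {n : ℕ} (G : SimpleGraph (Fin n)) (T : Fin n → Fin n → Bool)
    (M : Fin n → Fin n → Prop) (σ : Equiv.Perm (Fin n))
    (hT1 : ∀ u v, T u v = true → u ≠ v ∧ ¬ M u v ∧ ¬ M v u)
    (hT2 : ∀ u v, u ≠ v → ¬ M u v → ¬ M v u → (T u v = true ↔ ¬ T v u = true))
    (hT3 : ∀ u v : Fin n, u ≠ v → DistLE2 (fun a b => T a b = true) u v)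
    (hM : ∀ p q, M p q → ¬ M q p)
    (hNE : ∀ u v, u ≠ v → ¬ G.Adj u v → M (σ u) (σ v) ∨ M (σ v) (σ u)) :
    ∃ D : Fin n → Fin n → Prop, IsOrientation G D ∧ ∀ u v, u ≠ v → DistLE2 D u v := by
  refine ⟨fun u v => T (σ u) (σ v) = true ∨ (G.Adj u v ∧ M (σ u) (σ v)), ⟨?_, ?_⟩, ?_⟩
  · intro u v h
    rcases h with h | h
    · obtain ⟨hσne, hm1, hm2⟩ := hT1 _ _ h
      by_contra hadj
      have hne : u ≠ v := fun e => hσne (by rw [e])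
      rcases hNE u v hne hadj with h' | h'
      · exact hm1 h'
      · exact hm2 h'
    · exact h.1
  · intro u v hadj
    have hne : u ≠ v := hadj.ne
    have hσ : σ u ≠ σ v := fun e => hne (σ.injective e)
    by_cases h1 : M (σ u) (σ v)
    · have t1 : ¬ T (σ u) (σ v) = true := fun ht => (hT1 _ _ ht).2.1 h1
      have t2 : ¬ T (σ v) (σ u) = true := fun ht => (hT1 _ _ ht).2.2 h1
      have h2 := hM _ _ h1
      constructor
      · rintro _ (h | h)
        · exact t2 h
        · exact h2 h.2
      · intro _
        exact Or.inr ⟨hadj, h1⟩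
    · by_cases h2 : M (σ v) (σ u)
      · have t1 : ¬ T (σ u) (σ v) = true := fun ht => (hT1 _ _ ht).2.2 h2
        have t2 : ¬ T (σ v) (σ u) = true := fun ht => (hT1 _ _ ht).2.1 h2
        constructor
        · rintro (h | h)
          · exact absurd h t1
          · exact absurd h.2 h1
        · intro hD
          exact absurd (Or.inr ⟨hadj.symm, h2⟩) hD
      · have hiff := hT2 _ _ hσ h1 h2
        constructor
        · rintro (h | h)
          · rintro (h' | h')
            · exact hiff.mp h h'
            · exact h2 h'.2
          · exact absurd h.2 h1
        · intro hD
          left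
          refine hiff.mpr fun ht => hD (Or.inl ht)
  · intro u v hne
    have hσ : σ u ≠ σ v := fun e => hne (σ.injective e)
    rcases hT3 _ _ hσ with h | ⟨w, h1, h2⟩
    · exact Or.inl (Or.inl h)
    · refine Or.inr ⟨σ.symm w, Or.inl ?_, Or.inl ?_⟩
      · simpa using h1
      · simpa using h2

/-- Extend a partially prescribed injection to a permutation. -/
lemma extend_perm {n : ℕ} {s : Finset (Fin n)} {f : Fin n → Fin n} (hf : Set.InjOn f s) :
    ∃ σ : Equiv.Perm (Fin n), ∀ i ∈ s, σ i = f i := by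
  obtain ⟨g, hg⟩ := Finset.exists_equiv_extend_of_card_eq (t := (Finset.univ : Finset (Fin n)))
    (by simp) (Finset.image_subset_iff.mpr fun x _ => Finset.mem_univ _) hf
  exact ⟨g.trans (Equiv.subtypeUnivEquiv fun x => Finset.mem_univ x),
    fun i hi => by simpa using hg i hi⟩


/-- The case of `n = 6` (and `n = 5` by analogy): all non-edges lie on one pair. -/
lemma case6 (G : SimpleGraph (Fin 6)) (a b : Fin 6) (hab : a ≠ b)
    (h : ∀ u v : Fin 6, u ≠ v → ¬ G.Adj u v → s(u, v) = s(a, b)) :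
    ∃ D : Fin 6 → Fin 6 → Prop, IsOrientation G D ∧ ∀ u v, u ≠ v → DistLE2 D u v := by
  have hinj : Set.InjOn (fun i => if i = a then (0 : Fin 6) else 1) ({a, b} : Finset (Fin 6)) := by
    intro x hx y hy hxy
    simp only [Finset.coe_insert, Set.mem_insert_iff, Finset.coe_singleton,
      Set.mem_singleton_iff] at hx hy
    rcases hx with rfl | rfl <;> rcases hy with rfl | rfl <;>
      simp_all [hab, Ne.symm hab]
  obtain ⟨σ, hσ⟩ := extend_perm hinj
  have hσa : σ a = 0 := by simpa using hσ a (by simp)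
  have hσb : σ b = 1 := by
    have := hσ b (by simp)
    simpa [Ne.symm hab, hab] using this
  apply build G T6 M6 σ hT6_1 hT6_2 hT6_3 hM6
  intro u v hne hadj
  rcases Sym2.eq_iff.mp (h u v hne hadj) with ⟨rfl, rfl⟩ | ⟨rfl, rfl⟩
  · left; rw [hσa, hσb]; rfl
  · right; rw [hσa, hσb]; rfl

/-- `n = 7`, non-edges among `{a,b}` and `{a,c}` (sharing vertex `a`). -/
lemma case7shared (G : SimpleGraph (Fin 7)) (a b c : Fin 7) (hab : a ≠ b) (hac : a ≠ c)
    (hbc : b ≠ c)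
    (h : ∀ u v : Fin 7, u ≠ v → ¬ G.Adj u v → s(u, v) = s(a, b) ∨ s(u, v) = s(a, c)) :
    ∃ D : Fin 7 → Fin 7 → Prop, IsOrientation G D ∧ ∀ u v, u ≠ v → DistLE2 D u v := by
  have hinj : Set.InjOn (fun i => if i = a then (0 : Fin 7) else if i = b then 1 else 2)
      ({a, b, c} : Finset (Fin 7)) := by
    intro x hx y hy hxy
    simp only [Finset.coe_insert, Set.mem_insert_iff, Finset.coe_singleton,
      Set.mem_singleton_iff] at hx hy
    rcases hx with rfl | rfl | rfl <;> rcases hy with rfl | rfl | rfl <;>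
      simp_all [hab, hac, hbc, Ne.symm hab, Ne.symm hac, Ne.symm hbc]
  obtain ⟨σ, hσ⟩ := extend_perm hinj
  have hσa : σ a = 0 := by simpa using hσ a (by simp)
  have hσb : σ b = 1 := by
    have := hσ b (by simp)
    simpa [Ne.symm hab] using this
  have hσc : σ c = 2 := by
    have := hσ c (by simp)
    simpa [Ne.symm hac, Ne.symm hbc] using this
  apply build G T7a M7a σ hT7a_1 hT7a_2 hT7a_3 hM7a
  intro u v hne hadj
  rcases h u v hne hadj with h' | h'
  · rcases Sym2.eq_iff.mp h' with ⟨rfl, rfl⟩ | ⟨rfl, rfl⟩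
    · left; left; rw [hσa, hσb]
    · right; left; rw [hσa, hσb]
  · rcases Sym2.eq_iff.mp h' with ⟨rfl, rfl⟩ | ⟨rfl, rfl⟩
    · left; right; rw [hσa, hσc]
    · right; right; rw [hσa, hσc]

/-- `n = 7`, non-edges among `{a,b}` and `{c,d}` (disjoint pairs). -/
lemma case7disj (G : SimpleGraph (Fin 7)) (a b c d : Fin 7) (hab : a ≠ b) (hac : a ≠ c)
    (had : a ≠ d) (hbc : b ≠ c) (hbd : b ≠ d) (hcd : c ≠ d)
    (h : ∀ u v : Fin 7, u ≠ v → ¬ G.Adj u v → s(u, v) = s(a, b) ∨ s(u, v) = s(c, d)) :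
    ∃ D : Fin 7 → Fin 7 → Prop, IsOrientation G D ∧ ∀ u v, u ≠ v → DistLE2 D u v := by
  have hinj : Set.InjOn
      (fun i => if i = a then (0 : Fin 7) else if i = b then 1 else if i = c then 2 else 3)
      ({a, b, c, d} : Finset (Fin 7)) := by
    intro x hx y hy hxy
    simp only [Finset.coe_insert, Set.mem_insert_iff, Finset.coe_singleton,
      Set.mem_singleton_iff] at hx hy
    rcases hx with rfl | rfl | rfl | rfl <;> rcases hy with rfl | rfl | rfl | rfl <;>
      simp_all [hab, hac, had, hbc, hbd, hcd,
        Ne.symm hab, Ne.symm hac, Ne.symm had, Ne.symm hbc, Ne.symm hbd, Ne.symm hcd]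
  obtain ⟨σ, hσ⟩ := extend_perm hinj
  have hσa : σ a = 0 := by simpa using hσ a (by simp)
  have hσb : σ b = 1 := by
    have := hσ b (by simp)
    simpa [Ne.symm hab] using this
  have hσc : σ c = 2 := by
    have := hσ c (by simp)
    simpa [Ne.symm hac, Ne.symm hbc] using this
  have hσd : σ d = 3 := by
    have := hσ d (by simp)
    simpa [Ne.symm had, Ne.symm hbd, Ne.symm hcd] using this
  apply build G T7b M7b σ hT7b_1 hT7b_2 hT7b_3 hM7b
  intro u v hne hadj
  rcases h u v hne hadj with h' | h'
  · rcases Sym2.eq_iff.mp h' with ⟨rfl, rfl⟩ | ⟨rfl, rfl⟩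
    · left; left; rw [hσa, hσb]
    · right; left; rw [hσa, hσb]
  · rcases Sym2.eq_iff.mp h' with ⟨rfl, rfl⟩ | ⟨rfl, rfl⟩
    · left; right; rw [hσc, hσd]
    · right; right; rw [hσc, hσd]

lemma card_add_card_compl {V : Type*} [Fintype V] [DecidableEq V] (G : SimpleGraph V)
    [DecidableRel G.Adj] [DecidableRel Gᶜ.Adj] :
    G.edgeFinset.card + Gᶜ.edgeFinset.card = (Fintype.card V).choose 2 := by
  classical
  rw [← Finset.card_union_of_disjoint (SimpleGraph.disjoint_edgeFinset.mpr disjoint_compl_right),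
    ← SimpleGraph.edgeFinset_sup, ← SimpleGraph.card_edgeFinset_top_eq_card_choose_two]
  congr 1
  exact SimpleGraph.edgeFinset_inj.mpr sup_compl_eq_top


/-- Every graph on `n` vertices with `5 ≤ n ≤ 7` and at least `C(n,2) - n + 5` edges has
an orientation of diameter at most two. -/
theorem stmt9 (n : ℕ) (hn5 : 5 ≤ n) (hn7 : n ≤ 7) (G : SimpleGraph (Fin n))
    (hm : Nat.choose n 2 - n + 5 ≤ Nat.card G.edgeSet) :
    ∃ D : Fin n → Fin n → Prop, IsOrientation G D ∧
      ∀ u v, u ≠ v → DistLE2 D u v := by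
  classical
  have hmem : ∀ u v : Fin n, u ≠ v → ¬ G.Adj u v → s(u, v) ∈ Gᶜ.edgeFinset := by
    intro u v hne hadj
    rw [SimpleGraph.mem_edgeFinset, SimpleGraph.mem_edgeSet]
    exact ⟨hne, hadj⟩
  have h1 : Nat.card G.edgeSet = G.edgeFinset.card := by
    rw [Nat.card_eq_fintype_card, SimpleGraph.edgeFinset_card]
  have h2 := card_add_card_compl G
  rw [Fintype.card_fin] at h2
  rw [h1] at hm
  interval_cases n
  · -- n = 5 : G is complete
    have hS : Gᶜ.edgeFinset.card = 0 := by
      have : Nat.choose 5 2 = 10 := by decide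
      omega
    apply build G T5 M5 1 hT5_1 hT5_2 hT5_3 hM5
    intro u v hne hadj
    exact absurd (hmem u v hne hadj) (by simp [Finset.card_eq_zero.mp hS])
  · -- n = 6 : at most one non-edge
    have hS : Gᶜ.edgeFinset.card ≤ 1 := by
      have : Nat.choose 6 2 = 15 := by decide
      omega
    rcases Nat.le_one_iff_eq_zero_or_eq_one.mp hS with h0 | h1'
    · apply case6 G 0 1 (by decide)
      intro u v hne hadj
      exact absurd (hmem u v hne hadj) (by simp [Finset.card_eq_zero.mp h0])
    · obtain ⟨e, he⟩ := Finset.card_eq_one.mp h1'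
      revert he
      induction e using Sym2.ind with
      | _ a b =>
        intro he
        have hab : Gᶜ.Adj a b := by
          rw [← SimpleGraph.mem_edgeSet, ← SimpleGraph.mem_edgeFinset, he]
          exact Finset.mem_singleton_self _
        apply case6 G a b hab.ne
        intro u v hne hadj
        have := hmem u v hne hadj
        rw [he, Finset.mem_singleton] at this
        exact this
  · -- n = 7 : at most two non-edges
    have hS : Gᶜ.edgeFinset.card ≤ 2 := by
      have : Nat.choose 7 2 = 21 := by decide
      omega
    have hS' : Gᶜ.edgeFinset.card = 0 ∨ Gᶜ.edgeFinset.card = 1 ∨ Gᶜ.edgeFinset.card = 2 := by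
      omega
    rcases hS' with h0 | h1' | h2'
    · apply case7disj G 0 1 2 3 (by decide) (by decide) (by decide) (by decide) (by decide)
        (by decide)
      intro u v hne hadj
      exact absurd (hmem u v hne hadj) (by simp [Finset.card_eq_zero.mp h0])
    · obtain ⟨e, he⟩ := Finset.card_eq_one.mp h1'
      revert he
      induction e using Sym2.ind with
      | _ a b =>
        intro he
        have hab : Gᶜ.Adj a b := by
          rw [← SimpleGraph.mem_edgeSet, ← SimpleGraph.mem_edgeFinset, he]
          exact Finset.mem_singleton_self _
        have hcompl : 1 < (({a, b}ᶜ : Finset (Fin 7))).card := by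
          rw [Finset.card_compl]
          have h3 := Finset.card_insert_le a ({b} : Finset (Fin 7))
          rw [Finset.card_singleton] at h3
          rw [Fintype.card_fin]
          omega
        obtain ⟨c, hc, d, hd, hcd⟩ := Finset.one_lt_card.mp hcompl
        simp only [Finset.mem_compl, Finset.mem_insert, Finset.mem_singleton, not_or] at hc hd
        apply case7disj G a b c d hab.ne (Ne.symm hc.1) (Ne.symm hd.1) (Ne.symm hc.2)
          (Ne.symm hd.2) hcd
        intro u v hne hadj
        have := hmem u v hne hadj
        rw [he, Finset.mem_singleton] at this
        exact Or.inl this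
    · obtain ⟨e, f, hef, hS2⟩ := Finset.card_eq_two.mp h2'
      revert hef hS2
      induction e using Sym2.ind with
      | _ a b =>
        induction f using Sym2.ind with
        | _ c d =>
          intro hef hS2
          have hab : Gᶜ.Adj a b := by
            rw [← SimpleGraph.mem_edgeSet, ← SimpleGraph.mem_edgeFinset, hS2]
            exact Finset.mem_insert_self _ _
          have hcd' : Gᶜ.Adj c d := by
            rw [← SimpleGraph.mem_edgeSet, ← SimpleGraph.mem_edgeFinset, hS2]
            exact Finset.mem_insert_of_mem (Finset.mem_singleton_self _)
          have memS : ∀ u v : Fin 7, u ≠ v → ¬ G.Adj u v →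
              s(u, v) = s(a, b) ∨ s(u, v) = s(c, d) := by
            intro u v hne hadj
            have := hmem u v hne hadj
            rw [hS2] at this
            simpa using this
          by_cases hac : a = c
          · subst hac
            have hbd : b ≠ d := by
              intro h; exact hef (by rw [h])
            exact case7shared G a b d hab.ne hcd'.ne hbd memS
          · by_cases had : a = d
            · subst had
              have hbc : b ≠ c := by
                intro h
                exact hef (by rw [h, Sym2.eq_swap])
              refine case7shared G a b c hab.ne hac hbc ?_
              intro u v hne hadj
              rcases memS u v hne hadj with h' | h'
              · exact Or.inl h'
              · exact Or.inr (h'.trans Sym2.eq_swap)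
            · by_cases hbc : b = c
              · subst hbc
                have had' : a ≠ d := by
                  intro h
                  exact hef (by rw [h, Sym2.eq_swap])
                refine case7shared G b a d (Ne.symm hab.ne) hcd'.ne had' ?_
                intro u v hne hadj
                rcases memS u v hne hadj with h' | h'
                · exact Or.inl (h'.trans Sym2.eq_swap)
                · exact Or.inr h'
              · by_cases hbd : b = d
                · subst hbd
                  refine case7shared G b a c (Ne.symm hab.ne) (Ne.symm hcd'.ne) hac ?_
                  · intro u v hne hadj
                    rcases memS u v hne hadj with h' | h'
                    · exact Or.inl (h'.trans Sym2.eq_swap)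
                    · exact Or.inr (h'.trans Sym2.eq_swap)
                · exact case7disj G a b c d hab.ne hac had hbc hbd hcd'.ne memS
end

section
/- Let B be a graph that contains at least t connected components which are trees, each of these trees having at most m₀ edges, where t and m₀ are positive integers. Then there exists a subset of the tree components of B whose union F satisfies t ≤ |V(F)| ≤ t + m₀ and (number of edges of F) − (number of vertices of F) ≥ −t. -/
/-!
A tree with `n` vertices has `n - 1` edges, so the union of `k` tree components has
(edges) − (vertices) = −k. Take a family of tree components that is inclusion-minimal among those
covering at least `t` vertices. Dropping any one component `c` leaves fewer than `t` vertices, so the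
family covers at most `t - 1 + |c| ≤ t + m₀` vertices; and as every component has a vertex, the
family has at most `t` members.
-/

open SimpleGraph Finset

theorem Finset.exists_subset_le_sum_le_add_of_le_sum {α : Type*} [DecidableEq α] {S : Finset α}
    {f : α → ℕ} {t m : ℕ} (ht : 0 < t) (hf_pos : ∀ c ∈ S, 1 ≤ f c)
    (hf_le : ∀ c ∈ S, f c ≤ m + 1) (hS : t ≤ ∑ c ∈ S, f c) :
    ∃ T ⊆ S, T.Nonempty ∧ #T ≤ t ∧ t ≤ ∑ c ∈ T, f c ∧ ∑ c ∈ T, f c ≤ t + m := by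
  obtain ⟨T, hTS, hTmin⟩ := exists_minimal_le_of_wellFoundedLT (fun T => t ≤ ∑ c ∈ T, f c) S hS
  obtain ⟨c, hc⟩ : T.Nonempty := by
    rw [nonempty_iff_ne_empty]
    rintro rfl
    exact ht.ne' (Nat.le_zero.mp (by simpa using hTmin.1))
  have h_erase : ∑ x ∈ T.erase c, f x < t :=
    not_le.mp fun h => notMem_erase c T (hTmin.2 h (erase_subset c T) hc)
  have h_card : #(T.erase c) ≤ ∑ x ∈ T.erase c, f x := by
    simpa using card_nsmul_le_sum _ f 1 fun x hx => hf_pos x (hTS (mem_of_mem_erase hx))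
  have h_sum := sum_erase_add T f hc
  have h_cardT := card_erase_add_one hc
  have h_fc := hf_le c (hTS hc)
  exact ⟨T, hTS, ⟨c, hc⟩, by omega, hTmin.1, by omega⟩

namespace SimpleGraph

variable {V : Type*} {G : SimpleGraph V}

lemma image_edgeSet_induce (s : Set V) :
    Sym2.map (↑) '' (G.induce s).edgeSet = G.edgeSet ∩ s.sym2 := by
  ext e
  constructor
  · rintro ⟨e, he, rfl⟩
    induction e using Sym2.ind with
    | _ x y => exact ⟨he, x.2, y.2⟩
  · induction e using Sym2.ind with
    | _ u v =>
      rintro ⟨he, hu, hv⟩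
      exact ⟨s(⟨u, hu⟩, ⟨v, hv⟩), he, rfl⟩

lemma card_edgeSet_induce (s : Set V) :
    Nat.card (G.induce s).edgeSet = (G.edgeSet ∩ s.sym2).ncard := by
  rw [← image_edgeSet_induce, Set.ncard_image_of_injective _
    (Sym2.map.injective Subtype.val_injective), Nat.card_coe_set_eq]

namespace ConnectedComponent

lemma setOf_exists_mem_supp_eq (T : Finset G.ConnectedComponent) :
    {v | ∃ c ∈ T, v ∈ c.supp} = ⋃ c ∈ T, c.supp := by
  ext; simp

lemma edgeSet_inter_sym2_biUnion_supp (T : Finset G.ConnectedComponent) :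
    G.edgeSet ∩ (⋃ c ∈ T, c.supp).sym2 = ⋃ c ∈ T, G.edgeSet ∩ c.supp.sym2 := by
  ext e
  induction e using Sym2.ind with
  | _ u v =>
    simp only [Set.mem_inter_iff, Set.mem_iUnion, Set.mk_mem_sym2_iff, mem_edgeSet]
    constructor
    · rintro ⟨h, ⟨c, hc, hu⟩, -⟩
      exact ⟨c, hc, h, hu, c.mem_supp_of_adj_mem_supp hu h⟩
    · rintro ⟨c, hc, h, hu, hv⟩
      exact ⟨h, ⟨c, hc, hu⟩, ⟨c, hc, hv⟩⟩

variable [Finite V]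

lemma card_biUnion_supp (T : Finset G.ConnectedComponent) :
    Nat.card (⋃ c ∈ T, c.supp) = ∑ c ∈ T, Nat.card c.supp := by
  rw [Nat.card_coe_set_eq, ← set_biUnion_coe, T.finite_toSet.ncard_biUnion
    (fun _ _ => Set.toFinite _) (G.pairwise_disjoint_supp_connectedComponent.set_pairwise _),
    finsum_mem_coe_finset]
  simp_rw [Nat.card_coe_set_eq]

lemma card_edgeSet_induce_biUnion_supp (T : Finset G.ConnectedComponent) :
    Nat.card (G.induce (⋃ c ∈ T, c.supp)).edgeSet =
      ∑ c ∈ T, Nat.card (G.induce c.supp).edgeSet := by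
  have h_disj : (T : Set G.ConnectedComponent).PairwiseDisjoint (G.edgeSet ∩ ·.supp.sym2) := by
    intro c _ d _ hcd
    refine Set.disjoint_left.mpr fun e he he' => ?_
    induction e using Sym2.ind with
    | _ u v =>
      exact Set.disjoint_left.mp (G.pairwise_disjoint_supp_connectedComponent hcd) he.2.1 he'.2.1
  rw [card_edgeSet_induce, edgeSet_inter_sym2_biUnion_supp, ← set_biUnion_coe,
    T.finite_toSet.ncard_biUnion (fun _ _ => Set.toFinite _) h_disj, finsum_mem_coe_finset]
  simp_rw [card_edgeSet_induce]

lemma card_edgeSet_induce_biUnion_supp_add_card (T : Finset G.ConnectedComponent)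
    (hT : ∀ c ∈ T, (G.induce c.supp).IsTree) :
    Nat.card (G.induce (⋃ c ∈ T, c.supp)).edgeSet + #T = Nat.card (⋃ c ∈ T, c.supp) := by
  rw [card_edgeSet_induce_biUnion_supp, card_biUnion_supp, card_eq_sum_ones, ← sum_add_distrib]
  exact sum_congr rfl fun c hc => (isTree_iff_connected_and_card.mp (hT c hc)).2

end ConnectedComponent

end SimpleGraph

open SimpleGraph.ConnectedComponent in
theorem stmt11_general {V : Type*} [Fintype V] (B : SimpleGraph V) (t m₀ : ℕ)
    (ht : 1 ≤ t)
    (S : Finset B.ConnectedComponent)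
    (hS : ∀ c ∈ S, (B.induce c.supp).IsTree ∧ Nat.card (B.induce c.supp).edgeSet ≤ m₀)
    (hScard : t ≤ S.card) :
    ∃ T ⊆ S, T.Nonempty ∧
      t ≤ Nat.card {v : V | ∃ c ∈ T, v ∈ c.supp} ∧
      Nat.card {v : V | ∃ c ∈ T, v ∈ c.supp} ≤ t + m₀ ∧
      -(t : ℤ) ≤ (Nat.card (B.induce {v : V | ∃ c ∈ T, v ∈ c.supp}).edgeSet : ℤ)
        - (Nat.card {v : V | ∃ c ∈ T, v ∈ c.supp} : ℤ) := by
  classical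
  have h_card_supp : ∀ c ∈ S, Nat.card (B.induce c.supp).edgeSet + 1 = Nat.card c.supp :=
    fun c hc => (isTree_iff_connected_and_card.mp (hS c hc).1).2
  have h_pos : ∀ c ∈ S, 1 ≤ Nat.card c.supp := fun c hc => by
    have := h_card_supp c hc; omega
  have h_le : ∀ c ∈ S, Nat.card c.supp ≤ m₀ + 1 := fun c hc => by
    have := h_card_supp c hc; have := (hS c hc).2; omega
  have h_sum : t ≤ ∑ c ∈ S, Nat.card c.supp :=
    hScard.trans (by simpa using card_nsmul_le_sum S _ 1 h_pos)
  obtain ⟨T, hTS, hT_ne, hT_card, h_lo, h_hi⟩ :=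
    exists_subset_le_sum_le_add_of_le_sum ht h_pos h_le h_sum
  have h_forest := card_edgeSet_induce_biUnion_supp_add_card T fun c hc => (hS c (hTS hc)).1
  rw [card_biUnion_supp] at h_forest
  refine ⟨T, hTS, hT_ne, ?_⟩
  rw [setOf_exists_mem_supp_eq, card_biUnion_supp]
  exact ⟨h_lo, h_hi, by omega⟩

/-- If `B` has at least `t` tree components, each with at most `m₀` edges, then some
subset of these tree components forms a forest `F` with `t ≤ |V(F)| ≤ t + m₀` and
`ex(F) ≥ -t`. -/
theorem stmt11 {V : Type*} [Fintype V] (B : SimpleGraph V) (t m₀ : ℕ)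
    (ht : 1 ≤ t) (hm₀ : 1 ≤ m₀)
    (S : Finset B.ConnectedComponent)
    (hS : ∀ c ∈ S, (B.induce c.supp).IsTree ∧ Nat.card (B.induce c.supp).edgeSet ≤ m₀)
    (hScard : t ≤ S.card) :
    ∃ T ⊆ S, T.Nonempty ∧
      t ≤ Nat.card {v : V | ∃ c ∈ T, v ∈ c.supp} ∧
      Nat.card {v : V | ∃ c ∈ T, v ∈ c.supp} ≤ t + m₀ ∧
      -(t : ℤ) ≤ (Nat.card (B.induce {v : V | ∃ c ∈ T, v ∈ c.supp}).edgeSet : ℤ)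
        - (Nat.card {v : V | ∃ c ∈ T, v ∈ c.supp} : ℤ) :=
  stmt11_general B t m₀ ht S hS hScard
end

section
/- Let B be a connected graph that contains no independent set of three vertices and in which any two non-adjacent vertices have at most one common neighbor. Then B is a complete graph, a dumbbell, a short dumbbell, or a 5-cycle. -/
/-- `B` is a complete graph. -/
def IsCompleteGraph {V : Type*} (B : SimpleGraph V) : Prop :=
  ∀ u v, u ≠ v → B.Adj u v

/-- `B` is a `(k,ℓ)`-dumbbell: two disjoint cliques joined by a single edge. -/
def IsDumbbell {V : Type*} (B : SimpleGraph V) : Prop :=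
  ∃ (K L : Set V) (x y : V), K ∪ L = Set.univ ∧ Disjoint K L ∧ x ∈ K ∧ y ∈ L ∧
    ∀ u v, B.Adj u v ↔ u ≠ v ∧
      ((u ∈ K ∧ v ∈ K) ∨ (u ∈ L ∧ v ∈ L) ∨ (u = x ∧ v = y) ∨ (u = y ∧ v = x))

/-- `B` is a short dumbbell: two cliques sharing exactly one vertex. -/
def IsShortDumbbell {V : Type*} (B : SimpleGraph V) : Prop :=
  ∃ (K L : Set V) (y : V), K ∪ L = Set.univ ∧ K ∩ L = {y} ∧
    ∀ u v, B.Adj u v ↔ u ≠ v ∧ ((u ∈ K ∧ v ∈ K) ∨ (u ∈ L ∧ v ∈ L))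

/-- `B` is a 5-cycle. -/
def IsFiveCycle {V : Type*} (B : SimpleGraph V) : Prop :=
  ∃ f : Fin 5 → V, Function.Bijective f ∧
    ∀ i j, B.Adj (f i) (f j) ↔ (j = i + 1 ∨ i = j + 1)

namespace SimpleGraph

variable {V : Type*} {G : SimpleGraph V}

def NoIndepTriple (G : SimpleGraph V) : Prop :=
  ∀ x y z : V, x ≠ y → x ≠ z → y ≠ z → ¬ G.Adj x y → ¬ G.Adj x z → ¬ G.Adj y z → False

def NonadjAtMostOneCommonNeighbor (G : SimpleGraph V) : Prop :=
  ∀ u v : V, u ≠ v → ¬ G.Adj u v →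
    ∀ w₁ w₂, G.Adj u w₁ → G.Adj v w₁ → G.Adj u w₂ → G.Adj v w₂ → w₁ = w₂

theorem NoIndepTriple.adj (hind : G.NoIndepTriple) {b u v : V} (hub : u ≠ b) (hvb : v ≠ b)
    (huv : u ≠ v) (hbu : ¬ G.Adj b u) (hbv : ¬ G.Adj b v) : G.Adj u v := by
  by_contra h
  exact hind u v b huv hub hvb h (mt G.adj_symm hbu) (mt G.adj_symm hbv)

theorem NoIndepTriple.isClique_compl_closedNeighborSet (hind : G.NoIndepTriple) (a : V) :
    G.IsClique (insert a (G.neighborSet a))ᶜ := by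
  intro u hu v hv huv
  simp only [Set.mem_compl_iff, Set.mem_insert_iff, mem_neighborSet, not_or] at hu hv
  exact hind.adj hu.1 hv.1 huv hu.2 hv.2

theorem NonadjAtMostOneCommonNeighbor.eq_of_adj_of_adj_of_isClique
    (hcn : G.NonadjAtMostOneCommonNeighbor)
    {L : Set V} (hL : G.IsClique L) {x b y v : V} (hb : b ∈ L) (hxb : x ≠ b)
    (hnxb : ¬ G.Adj x b) (hy : y ∈ L) (hv : v ∈ L) (hxy : G.Adj x y) (hxv : G.Adj x v) :
    y = v :=
  hcn x b hxb hnxb y v hxy (hL hb hy (by rintro rfl; exact hnxb hxy)) hxv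
    (hL hb hv (by rintro rfl; exact hnxb hxv))

theorem NonadjAtMostOneCommonNeighbor.eq_and_eq_of_adj_of_isClique_compl
    (hcn : G.NonadjAtMostOneCommonNeighbor) {K : Set V} (hK : G.IsClique K)
    (hKc : G.IsClique Kᶜ) (hKL : ∀ x ∈ K, ∃ y ∉ K, ¬ G.Adj x y)
    (hLK : ∀ y ∉ K, ∃ x ∈ K, ¬ G.Adj x y) {x y u v : V} (hx : x ∈ K) (hy : y ∉ K)
    (hxy : G.Adj x y) (hu : u ∈ K) (hv : v ∉ K) (huv : G.Adj u v) : u = x ∧ v = y := by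
  have hright : ∀ {x}, x ∈ K → ∀ {y v}, y ∉ K → v ∉ K → G.Adj x y → G.Adj x v → y = v := by
    intro x hx y v hy hv hxy hxv
    obtain ⟨b, hb, hxb⟩ := hKL x hx
    exact hcn.eq_of_adj_of_adj_of_isClique hKc hb (ne_of_mem_of_not_mem hx hb) hxb hy hv hxy hxv
  have hleft : ∀ {y}, y ∉ K → ∀ {x u}, x ∈ K → u ∈ K → G.Adj y x → G.Adj y u → x = u := by
    intro y hy x u hx hu hyx hyu
    obtain ⟨a, ha, hay⟩ := hLK y hy
    exact hcn.eq_of_adj_of_adj_of_isClique hK ha (ne_of_mem_of_not_mem ha hy).symm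
      (mt G.adj_symm hay) hx hu hyx hyu
  by_cases hux : u = x
  · subst hux
    exact ⟨rfl, hright hu hv hy huv hxy⟩
  by_cases hvy : v = y
  · subst hvy
    exact ⟨hleft hv hu hx huv.symm hxy.symm, rfl⟩
  have hxv : ¬ G.Adj x v := fun h => hvy (hright hx hv hy h hxy)
  -- `u` and `y` would be two common neighbours of `x` and `v`
  exact (ne_of_mem_of_not_mem hu hy <| hcn x v (ne_of_mem_of_not_mem hx hv) hxv u y
    (hK hx hu (Ne.symm hux)) huv.symm hxy (hKc hv hy hvy)).elim

theorem NonadjAtMostOneCommonNeighbor.isDumbbell (hcn : G.NonadjAtMostOneCommonNeighbor)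
    {K : Set V} (hK : G.IsClique K) (hKc : G.IsClique Kᶜ)
    (hKL : ∀ x ∈ K, ∃ y ∉ K, ¬ G.Adj x y) (hLK : ∀ y ∉ K, ∃ x ∈ K, ¬ G.Adj x y)
    {x y : V} (hx : x ∈ K) (hy : y ∉ K) (hxy : G.Adj x y) : IsDumbbell G := by
  have hcross : ∀ {u v}, u ∈ K → v ∉ K → G.Adj u v → u = x ∧ v = y :=
    hcn.eq_and_eq_of_adj_of_isClique_compl hK hKc hKL hLK hx hy hxy
  refine ⟨K, Kᶜ, x, y, Set.union_compl_self K, disjoint_compl_right, hx, hy,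
    fun u v => ⟨fun huv => ⟨huv.ne, ?_⟩, ?_⟩⟩
  · by_cases hu : u ∈ K <;> by_cases hv : v ∈ K
    · exact Or.inl ⟨hu, hv⟩
    · exact Or.inr (Or.inr (Or.inl (hcross hu hv huv)))
    · obtain ⟨rfl, rfl⟩ := hcross hv hu huv.symm
      exact Or.inr (Or.inr (Or.inr ⟨rfl, rfl⟩))
    · exact Or.inr (Or.inl ⟨hu, hv⟩)
  · rintro ⟨huv, ⟨hu, hv⟩ | ⟨hu, hv⟩ | ⟨rfl, rfl⟩ | ⟨rfl, rfl⟩⟩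
    exacts [hK hu hv huv, hKc hu hv huv, hxy, hxy.symm]

theorem NonadjAtMostOneCommonNeighbor.isShortDumbbell (hcn : G.NonadjAtMostOneCommonNeighbor)
    {K : Set V} (hK : G.IsClique K) (hKc : G.IsClique Kᶜ) {a b c : V} (ha : a ∈ K)
    (hb : b ∉ K) (hab : ¬ G.Adj a b) (hc : c ∈ K) (hcL : ∀ y ∉ K, G.Adj c y) :
    IsShortDumbbell G := by
  have hcross : ∀ u ∈ K, ∀ v ∉ K, G.Adj u v → u = c := by
    intro u hu v hv huv
    by_contra huc
    -- either `u`, `c` are two common neighbours of `a`, `b`, or `c`, `v` are two of `u`, `b`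
    by_cases hub : G.Adj u b
    · have hua : u ≠ a := by rintro rfl; exact hab hub
      have hac : a ≠ c := by rintro rfl; exact hab (hcL b hb)
      exact huc (hcn a b (ne_of_mem_of_not_mem ha hb) hab u c (hK ha hu hua.symm) hub.symm
        (hK ha hc hac) (hcL b hb).symm)
    · have hvb : v ≠ b := by rintro rfl; exact hub huv
      exact ne_of_mem_of_not_mem hc hv (hcn u b (ne_of_mem_of_not_mem hu hb) hub c v
        (hK hu hc huc) (hcL b hb).symm huv (hKc hb hv (Ne.symm hvb)))
  have hKL : K ∩ insert c Kᶜ = {c} := by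
    rw [Set.inter_insert_of_mem hc, Set.inter_compl_self, insert_empty_eq]
  refine ⟨K, insert c Kᶜ, c, by simp, hKL, fun u v => ⟨fun huv => ⟨huv.ne, ?_⟩, ?_⟩⟩
  · by_cases hu : u ∈ K <;> by_cases hv : v ∈ K
    · exact Or.inl ⟨hu, hv⟩
    · exact Or.inr ⟨Or.inl (hcross u hu v hv huv), Or.inr hv⟩
    · exact Or.inr ⟨Or.inr hu, Or.inl (hcross v hv u hu huv.symm)⟩
    · exact Or.inr ⟨Or.inr hu, Or.inr hv⟩
  · rintro ⟨huv, ⟨hu, hv⟩ | ⟨rfl | hu, rfl | hv⟩⟩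
    · exact hK hu hv huv
    · exact absurd rfl huv
    · exact hcL v hv
    · exact (hcL u hu).symm
    · exact hKc hu hv huv

theorem isDumbbell_or_isShortDumbbell_of_isClique_closedNeighborSet (hconn : G.Connected)
    (hind : G.NoIndepTriple) (hcn : G.NonadjAtMostOneCommonNeighbor) {a b : V} (hne : a ≠ b)
    (hab : ¬ G.Adj a b) (hK : G.IsClique (insert a (G.neighborSet a))) :
    IsDumbbell G ∨ IsShortDumbbell G := by
  set K := insert a (G.neighborSet a)
  have ha : a ∈ K := Set.mem_insert a _
  have hb : b ∉ K := by
    rintro (h | h)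
    exacts [hne h.symm, hab h]
  have hKc := hind.isClique_compl_closedNeighborSet a
  by_cases hKL : ∀ x ∈ K, ∃ y ∉ K, ¬ G.Adj x y
  · obtain ⟨d, -, hd, hd'⟩ := (hconn.preconnected a b).some.exists_boundary_dart K ha hb
    refine Or.inl (hcn.isDumbbell hK hKc hKL (fun y hy => ⟨a, ha, fun h => hy ?_⟩) hd hd' d.adj)
    exact Set.mem_insert_of_mem a h
  · push Not at hKL
    obtain ⟨c, hc, hcL⟩ := hKL
    exact Or.inr (hcn.isShortDumbbell hK hKc ha hb hab hc hcL)

theorem exists_of_not_isClique_closedNeighborSet (hind : G.NoIndepTriple)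
    (hcn : G.NonadjAtMostOneCommonNeighbor) {a b : V} (hne : a ≠ b) (hab : ¬ G.Adj a b)
    (h : ¬ G.IsClique (insert a (G.neighborSet a))) :
    ∃ c u, G.Adj a c ∧ G.Adj b c ∧ G.Adj a u ∧ ¬ G.Adj b u ∧ ¬ G.Adj c u := by
  have h' : ¬ G.IsClique (G.neighborSet a) := fun h' =>
    h (isClique_insert.2 ⟨h', fun _ hx _ => hx⟩)
  obtain ⟨x, hax, y, hay, hxy, hnxy⟩ : ∃ x, G.Adj a x ∧ ∃ y, G.Adj a y ∧ x ≠ y ∧ ¬ G.Adj x y := by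
    simpa [IsClique, Set.Pairwise] using h'
  have hxb : x ≠ b := by rintro rfl; exact hab hax
  have hyb : y ≠ b := by rintro rfl; exact hab hay
  by_cases hbx : G.Adj b x <;> by_cases hby : G.Adj b y
  · exact absurd (hcn a b hne hab x y hax hbx hay hby) hxy
  · exact ⟨x, y, hax, hbx, hay, hby, hnxy⟩
  · exact ⟨y, x, hay, hby, hax, hbx, mt G.adj_symm hnxy⟩
  · exact absurd (hind.adj hxb hyb hxy hbx hby) hnxy

theorem eq_of_adj_of_not_adj_of_pentagon (hind : G.NoIndepTriple)
    (hcn : G.NonadjAtMostOneCommonNeighbor) {a b c u v w : V} (hab : ¬ G.Adj a b)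
    (hac : G.Adj a c) (hbc : G.Adj b c) (hau : G.Adj a u) (hbu : ¬ G.Adj b u)
    (hcu : ¬ G.Adj c u) (hav : ¬ G.Adj a v) (hcv : ¬ G.Adj c v) (haw : G.Adj a w)
    (hbw : ¬ G.Adj b w) : w = u := by
  -- otherwise `w`, `u` are two common neighbours of `a` and `v`, both being non-neighbours of `c`
  by_contra hwu
  have hwu' : G.Adj w u :=
    hind.adj (by rintro rfl; exact hab haw) (by rintro rfl; exact hab hau) hwu hbw hbu
  have hcw : ¬ G.Adj c w := fun hcw =>
    haw.ne (hcn c u (by rintro rfl; exact hbu hbc) hcu a w hac.symm hau.symm hcw hwu'.symm)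
  have hadj_v : ∀ x, G.Adj a x → ¬ G.Adj b x → ¬ G.Adj c x → G.Adj x v := fun x hax hbx hcx =>
    hind.adj (by rintro rfl; exact hbx hbc) (by rintro rfl; exact hav hac)
      (fun h => hav (h ▸ hax)) hcx hcv
  exact hwu (hcn v a (fun h => hcv (h ▸ hac.symm)) (mt G.adj_symm hav) w u
    (hadj_v w haw hbw hcw).symm haw (hadj_v u hau hbu hcu).symm hau)

theorem isFiveCycle_of_surjective (f : Fin 5 → V) (hf : Function.Surjective f)
    (hedge : ∀ i, G.Adj (f i) (f (i + 1))) (hnon : ∀ i, ¬ G.Adj (f i) (f (i + 2))) :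
    IsFiveCycle G := by
  have hadj : ∀ i j, G.Adj (f i) (f j) ↔ (j = i + 1 ∨ i = j + 1) := by
    intro i j
    obtain ⟨d, rfl⟩ : ∃ d, j = i + d := ⟨j - i, by abel⟩
    have hd : ∀ i d : Fin 5, (i + d = i + 1 ∨ i = i + d + 1) ↔ (d = 1 ∨ d = 4) := by decide
    rw [hd]
    fin_cases d
    · simp
    · simpa using hedge i
    · simpa using hnon i
    · simpa [add_assoc] using mt G.adj_symm (hnon (i + 3))
    · simpa [add_assoc] using (hedge (i + 4)).symm
  -- distinct vertices of the 5-cycle have distinct neighbourhoods in it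
  have hinj : ∀ i j : Fin 5,
      (∀ k : Fin 5, (k = i + 1 ∨ i = k + 1) ↔ (k = j + 1 ∨ j = k + 1)) → i = j := by
    decide
  refine ⟨f, ⟨fun i j hij => hinj i j fun k => ?_, hf⟩, hadj⟩
  rw [← hadj, ← hadj, hij]

theorem isFiveCycle_of_pentagon (hind : G.NoIndepTriple) (hcn : G.NonadjAtMostOneCommonNeighbor)
    {a b c u v : V} (hne : a ≠ b) (hab : ¬ G.Adj a b) (hac : G.Adj a c) (hbc : G.Adj b c)
    (hau : G.Adj a u) (hbu : ¬ G.Adj b u) (hcu : ¬ G.Adj c u) (hav : ¬ G.Adj a v)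
    (hbv : G.Adj b v) (hcv : ¬ G.Adj c v) : IsFiveCycle G := by
  have huv : G.Adj u v := hind.adj (by rintro rfl; exact hbu hbc) (by rintro rfl; exact hav hac)
    (by rintro rfl; exact hav hau) hcu hcv
  refine isFiveCycle_of_surjective ![a, u, v, b, c] (fun w => ?_) (fun i => ?_) (fun i => ?_)
  · by_cases hwa : w = a
    · exact ⟨0, hwa.symm⟩
    by_cases hwb : w = b
    · exact ⟨3, hwb.symm⟩
    by_cases haw : G.Adj a w <;> by_cases hbw : G.Adj b w
    · exact ⟨4, hcn a b hne hab c w hac hbc haw hbw⟩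
    · exact ⟨1, (eq_of_adj_of_not_adj_of_pentagon hind hcn hab hac hbc hau hbu hcu hav hcv
        haw hbw).symm⟩
    · exact ⟨2, (eq_of_adj_of_not_adj_of_pentagon hind hcn (mt G.adj_symm hab) hbc hac hbv hav
        hcv hbu hcu hbw haw).symm⟩
    · exact (hind a b w hne (Ne.symm hwa) (Ne.symm hwb) hab haw hbw).elim
  · fin_cases i
    exacts [hau, huv, hbv.symm, hbc, hac.symm]
  · fin_cases i
    exacts [hav, mt G.adj_symm hbu, mt G.adj_symm hcv, mt G.adj_symm hab, hcu]

end SimpleGraph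

open SimpleGraph in
theorem stmt12_general {V : Type*} (B : SimpleGraph V) (hconn : B.Connected)
    (hind : ∀ x y z : V, x ≠ y → x ≠ z → y ≠ z →
      ¬ B.Adj x y → ¬ B.Adj x z → ¬ B.Adj y z → False)
    (hcn : ∀ u v : V, u ≠ v → ¬ B.Adj u v →
      ∀ w₁ w₂, B.Adj u w₁ → B.Adj v w₁ → B.Adj u w₂ → B.Adj v w₂ → w₁ = w₂) :
    IsCompleteGraph B ∨ IsDumbbell B ∨ IsShortDumbbell B ∨ IsFiveCycle B := by
  by_cases hcomplete : IsCompleteGraph B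
  · exact Or.inl hcomplete
  obtain ⟨a, b, hne, hab⟩ : ∃ a b, a ≠ b ∧ ¬ B.Adj a b := by
    simpa [IsCompleteGraph] using hcomplete
  right
  by_cases hKa : B.IsClique (insert a (B.neighborSet a))
  · exact (isDumbbell_or_isShortDumbbell_of_isClique_closedNeighborSet hconn hind hcn hne hab
      hKa).elim Or.inl (Or.inr ∘ Or.inl)
  have hba : ¬ B.Adj b a := mt B.adj_symm hab
  by_cases hKb : B.IsClique (insert b (B.neighborSet b))
  · exact (isDumbbell_or_isShortDumbbell_of_isClique_closedNeighborSet hconn hind hcn hne.symm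
      hba hKb).elim Or.inl (Or.inr ∘ Or.inl)
  obtain ⟨c, u, hac, hbc, hau, hbu, hcu⟩ :=
    exists_of_not_isClique_closedNeighborSet hind hcn hne hab hKa
  obtain ⟨c', v, hbc', hac', hbv, hav, hcv⟩ :=
    exists_of_not_isClique_closedNeighborSet hind hcn hne.symm hba hKb
  obtain rfl : c' = c := hcn a b hne hab c' c hac' hbc' hac hbc
  exact Or.inr (Or.inr (isFiveCycle_of_pentagon hind hcn hne hab hac hbc hau hbu hcu hav hbv hcv))

/-- A connected graph with no independent set of three vertices, in which any two
non-adjacent vertices have at most one common neighbor, is a complete graph, a dumbbell,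
a short dumbbell, or a 5-cycle. -/
theorem stmt12 {V : Type*} [Fintype V] (B : SimpleGraph V) (hconn : B.Connected)
    (hind : ∀ x y z : V, x ≠ y → x ≠ z → y ≠ z →
      ¬ B.Adj x y → ¬ B.Adj x z → ¬ B.Adj y z → False)
    (hcn : ∀ u v : V, u ≠ v → ¬ B.Adj u v →
      ∀ w₁ w₂, B.Adj u w₁ → B.Adj v w₁ → B.Adj u w₂ → B.Adj v w₂ → w₁ = w₂) :
    IsCompleteGraph B ∨ IsDumbbell B ∨ IsShortDumbbell B ∨ IsFiveCycle B :=
  stmt12_general B hconn hind hcn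
end

section
/- For every integer n₁ ≥ 2, among all graphs of order n₁ that are complete graphs, dumbbells, or short dumbbells, every such graph has at least ⌈n₁²/4 − n₁/2 + 1⌉ edges; consequently its excess (edges minus vertices) is at least ⌈((n₁−3)² − 5)/4⌉. -/
lemma Finset.disjoint_image_offDiag {V : Type*} [DecidableEq V] {s t : Finset V}
    (hst : (↑s ∩ ↑t : Set V).Subsingleton) :
    Disjoint (s.offDiag.image Sym2.mk.uncurry) (t.offDiag.image Sym2.mk.uncurry) := by
  simp only [Finset.disjoint_left, Finset.mem_image, Finset.mem_offDiag, not_exists, not_and]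
  rintro _ ⟨⟨a, b⟩, ⟨ha, hb, hab⟩, rfl⟩ ⟨c, d⟩ ⟨hc, hd, -⟩ hcd
  have hab' : a ∈ t ∧ b ∈ t := by
    rcases Sym2.eq_iff.mp hcd with ⟨rfl, rfl⟩ | ⟨rfl, rfl⟩ <;> simp [*]
  exact hab (hst ⟨ha, hab'.1⟩ ⟨hb, hab'.2⟩)

lemma Finset.mk_notMem_image_offDiag {V : Type*} [DecidableEq V] {s : Finset V} {x y : V}
    (hy : y ∉ s) : s(x, y) ∉ s.offDiag.image Sym2.mk.uncurry := by
  simp only [Finset.mem_image, Finset.mem_offDiag, not_exists, not_and]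
  rintro ⟨a, b⟩ ⟨ha, hb, -⟩ hab
  rcases Sym2.eq_iff.mp hab with ⟨-, rfl⟩ | ⟨rfl, -⟩ <;> contradiction

namespace SimpleGraph

variable {V : Type*} {G : SimpleGraph V}

lemma card_le_card_edgeSet [Finite V] {A : Finset (Sym2 V)} (hA : ↑A ⊆ G.edgeSet) :
    A.card ≤ Nat.card G.edgeSet := by
  rw [Nat.card_coe_set_eq, ← Set.ncard_coe_finset]
  exact Set.ncard_le_ncard hA

lemma IsClique.image_offDiag_subset_edgeSet [DecidableEq V] {s : Finset V}
    (hs : G.IsClique (s : Set V)) :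
    ↑(s.offDiag.image Sym2.mk.uncurry) ⊆ G.edgeSet := by
  intro e he
  simp only [Finset.coe_image, Finset.coe_offDiag, Set.mem_image] at he
  obtain ⟨⟨a, b⟩, ⟨ha, hb, hab⟩, rfl⟩ := he
  exact hs ha hb hab

lemma IsClique.choose_two_le_card_edgeSet [Finite V] {s : Finset V}
    (hs : G.IsClique (s : Set V)) : s.card.choose 2 ≤ Nat.card G.edgeSet := by
  classical
  exact Sym2.card_image_offDiag s ▸ card_le_card_edgeSet hs.image_offDiag_subset_edgeSet

lemma choose_two_add_choose_two_le_card_edgeSet [Finite V] {s t : Finset V}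
    (hs : G.IsClique (s : Set V)) (ht : G.IsClique (t : Set V))
    (hst : (↑s ∩ ↑t : Set V).Subsingleton) :
    s.card.choose 2 + t.card.choose 2 ≤ Nat.card G.edgeSet := by
  classical
  rw [← Sym2.card_image_offDiag, ← Sym2.card_image_offDiag,
    ← Finset.card_union_of_disjoint (Finset.disjoint_image_offDiag hst)]
  apply card_le_card_edgeSet
  rw [Finset.coe_union]
  exact Set.union_subset hs.image_offDiag_subset_edgeSet ht.image_offDiag_subset_edgeSet

lemma choose_two_add_choose_two_add_one_le_card_edgeSet [Finite V] {s t : Finset V} {x y : V}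
    (hs : G.IsClique (s : Set V)) (ht : G.IsClique (t : Set V)) (hst : Disjoint s t)
    (hx : x ∈ s) (hy : y ∈ t) (hxy : G.Adj x y) :
    s.card.choose 2 + t.card.choose 2 + 1 ≤ Nat.card G.edgeSet := by
  classical
  have hnot : s(x, y) ∉ s.offDiag.image Sym2.mk.uncurry ∪ t.offDiag.image Sym2.mk.uncurry := by
    rw [Finset.mem_union, not_or]
    exact ⟨Finset.mk_notMem_image_offDiag (Finset.disjoint_right.1 hst hy),
      Sym2.eq_swap ▸ Finset.mk_notMem_image_offDiag (Finset.disjoint_left.1 hst hx)⟩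
  rw [← Sym2.card_image_offDiag, ← Sym2.card_image_offDiag,
    ← Finset.card_union_of_disjoint (Finset.disjoint_image_offDiag
      ((Finset.disjoint_coe.2 hst).inter_eq ▸ Set.subsingleton_empty)),
    ← Finset.card_insert_of_notMem hnot]
  apply card_le_card_edgeSet
  rw [Finset.coe_insert, Finset.coe_union]
  exact Set.insert_subset hxy
    (Set.union_subset hs.image_offDiag_subset_edgeSet ht.image_offDiag_subset_edgeSet)

end SimpleGraph

section Dumbbells

variable {V : Type*} [Fintype V] {H : SimpleGraph V}

lemma IsCompleteGraph.choose_two_le_card_edgeSet (hH : IsCompleteGraph H) :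
    (Fintype.card V).choose 2 ≤ Nat.card H.edgeSet :=
  Finset.card_univ (α := V) ▸
    SimpleGraph.IsClique.choose_two_le_card_edgeSet fun u _ v _ huv => hH u v huv

lemma IsDumbbell.exists_choose_two_add_choose_two_add_one_le_card_edgeSet (hH : IsDumbbell H) :
    ∃ k l, k + l = Fintype.card V ∧ k.choose 2 + l.choose 2 + 1 ≤ Nat.card H.edgeSet := by
  classical
  obtain ⟨K, L, x, y, hunion, hdisj, hx, hy, hadj⟩ := hH
  have hK : H.IsClique (K.toFinset : Set V) := by
    rw [Set.coe_toFinset]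
    exact fun u hu v hv huv => (hadj u v).2 ⟨huv, .inl ⟨hu, hv⟩⟩
  have hL : H.IsClique (L.toFinset : Set V) := by
    rw [Set.coe_toFinset]
    exact fun u hu v hv huv => (hadj u v).2 ⟨huv, .inr (.inl ⟨hu, hv⟩)⟩
  have hxy : H.Adj x y := (hadj x y).2 ⟨hdisj.ne_of_mem hx hy, .inr (.inr (.inl ⟨rfl, rfl⟩))⟩
  have hdisj' : Disjoint K.toFinset L.toFinset := Set.disjoint_toFinset.2 hdisj
  refine ⟨K.toFinset.card, L.toFinset.card, ?_,
    SimpleGraph.choose_two_add_choose_two_add_one_le_card_edgeSet hK hL hdisj'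
      (Set.mem_toFinset.2 hx) (Set.mem_toFinset.2 hy) hxy⟩
  rw [← Finset.card_union_of_disjoint hdisj', ← Set.toFinset_union]
  simp only [hunion, Set.toFinset_univ, Finset.card_univ]

lemma IsShortDumbbell.exists_choose_two_add_choose_two_le_card_edgeSet
    (hH : IsShortDumbbell H) :
    ∃ k l, k + l = Fintype.card V + 1 ∧ k.choose 2 + l.choose 2 ≤ Nat.card H.edgeSet := by
  classical
  obtain ⟨K, L, y, hunion, hinter, hadj⟩ := hH
  have hK : H.IsClique (K.toFinset : Set V) := by
    rw [Set.coe_toFinset]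
    exact fun u hu v hv huv => (hadj u v).2 ⟨huv, .inl ⟨hu, hv⟩⟩
  have hL : H.IsClique (L.toFinset : Set V) := by
    rw [Set.coe_toFinset]
    exact fun u hu v hv huv => (hadj u v).2 ⟨huv, .inr ⟨hu, hv⟩⟩
  refine ⟨K.toFinset.card, L.toFinset.card, ?_,
    SimpleGraph.choose_two_add_choose_two_le_card_edgeSet hK hL
      (by simp only [Set.coe_toFinset, hinter, Set.subsingleton_singleton])⟩
  rw [← Finset.card_union_add_card_inter, ← Set.toFinset_union, ← Set.toFinset_inter]
  simp only [hunion, hinter, Set.toFinset_univ, Set.toFinset_singleton, Finset.card_univ,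
    Finset.card_singleton]

end Dumbbells

lemma sq_div_four_sub_half_add_one_le_choose_two_add_choose_two_add_one {n k l : ℕ}
    (hkl : k + l = n) :
    (n : ℚ) ^ 2 / 4 - n / 2 + 1 ≤ k.choose 2 + l.choose 2 + 1 := by
  rw [Nat.cast_choose_two, Nat.cast_choose_two, ← hkl]
  push_cast
  nlinarith [sq_nonneg ((k : ℚ) - l)]

lemma sq_div_four_sub_half_add_one_le_choose_two_add_choose_two {n k l : ℕ} (hn : 2 ≤ n)
    (hkl : k + l = n + 1) :
    (n : ℚ) ^ 2 / 4 - n / 2 + 1 ≤ k.choose 2 + l.choose 2 := by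
  -- `k = l` forces `n` to be odd, hence `n ≥ 3`
  have key : 5 ≤ ((k : ℤ) - l) ^ 2 + 2 * n := by
    rcases eq_or_ne k l with rfl | hne
    · simp only [sub_self]
      omega
    · nlinarith [Int.one_le_abs (sub_ne_zero.2 (Int.ofNat_inj.not.2 hne)), sq_abs ((k : ℤ) - l)]
  have key' : (5 : ℚ) ≤ ((k : ℚ) - l) ^ 2 + 2 * n := by exact_mod_cast key
  have hkl' : (k : ℚ) + l = n + 1 := by exact_mod_cast hkl
  rw [Nat.cast_choose_two, Nat.cast_choose_two]
  nlinarith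

/-- Every complete graph, dumbbell, or short dumbbell of order `n₁ ≥ 2` has at least
`⌈n₁²/4 - n₁/2 + 1⌉` edges, and hence excess at least `⌈((n₁ - 3)² - 5)/4⌉`. -/
theorem stmt13 {V : Type*} [Fintype V] (n₁ : ℕ) (hn : 2 ≤ n₁)
    (H : SimpleGraph V) (hcard : Fintype.card V = n₁)
    (hH : IsCompleteGraph H ∨ IsDumbbell H ∨ IsShortDumbbell H) :
    ⌈(n₁ : ℚ) ^ 2 / 4 - (n₁ : ℚ) / 2 + 1⌉ ≤ (Nat.card H.edgeSet : ℤ) ∧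
    ⌈(((n₁ : ℚ) - 3) ^ 2 - 5) / 4⌉ ≤ (Nat.card H.edgeSet : ℤ) - (n₁ : ℤ) := by
  have hbound : (n₁ : ℚ) ^ 2 / 4 - n₁ / 2 + 1 ≤ Nat.card H.edgeSet := by
    subst hcard
    rcases hH with hc | hd | hs
    · refine (sq_div_four_sub_half_add_one_le_choose_two_add_choose_two (l := 1) hn rfl).trans ?_
      exact_mod_cast hc.choose_two_le_card_edgeSet
    · obtain ⟨k, l, hkl, hle⟩ :=
        hd.exists_choose_two_add_choose_two_add_one_le_card_edgeSet
      exact (sq_div_four_sub_half_add_one_le_choose_two_add_choose_two_add_one hkl).trans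
        (mod_cast hle)
    · obtain ⟨k, l, hkl, hle⟩ := hs.exists_choose_two_add_choose_two_le_card_edgeSet
      exact (sq_div_four_sub_half_add_one_le_choose_two_add_choose_two hn hkl).trans
        (mod_cast hle)
  have hceil : ⌈(n₁ : ℚ) ^ 2 / 4 - (n₁ : ℚ) / 2 + 1⌉ ≤ (Nat.card H.edgeSet : ℤ) :=
    Int.ceil_le.2 (mod_cast hbound)
  refine ⟨hceil, ?_⟩
  have hexcess : (((n₁ : ℚ) - 3) ^ 2 - 5) / 4 = ((n₁ : ℚ) ^ 2 / 4 - (n₁ : ℚ) / 2 + 1) - n₁ := by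
    ring
  rw [hexcess, Int.ceil_sub_natCast]
  omega
end

section
/- Let B be a graph with no independent set of three vertices in any single connected component, in which any two non-adjacent vertices of B have at most one common neighbor, and suppose B contains an induced 5-cycle C inside some component B₁. Then B₁ is exactly the 5-cycle, i.e., V(B₁) = V(C). -/
/- The vertex set of the 5-cycle is closed under adjacency, hence it is the whole component.
By rotating the cycle it suffices to treat an outside neighbour `v` of `s 0`. Non-adjacent cycle
vertices already have a common neighbour on the cycle, so `v` cannot see `s 2` or `s 3`; the
independence hypothesis then forces `v` to see `s 1` and `s 4`, making `v` a second common
neighbour of `s 1` and `s 4`. -/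

namespace SimpleGraph

variable {V : Type*} {G : SimpleGraph V}

theorem Reachable.mem_of_adj_closed {S : Set V} (hS : ∀ u w, u ∈ S → G.Adj u w → w ∈ S)
    {u v : V} (huv : G.Reachable u v) (hu : u ∈ S) : v ∈ S := by
  obtain ⟨p⟩ := huv
  induction p with
  | nil => exact hu
  | cons h _ ih => exact ih (hS _ _ hu h)

def IsInducedPentagon (G : SimpleGraph V) (s : Fin 5 → V) : Prop :=
  Function.Injective s ∧ ∀ i j, G.Adj (s i) (s j) ↔ (j = i + 1 ∨ i = j + 1)

namespace IsInducedPentagon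

variable {s : Fin 5 → V}

theorem rotate (hC : G.IsInducedPentagon s) (k : Fin 5) :
    G.IsInducedPentagon (fun i => s (k + i)) := by
  refine ⟨hC.1.comp (add_right_injective k), fun i j => ?_⟩
  rw [hC.2, add_assoc, add_assoc, add_left_cancel_iff, add_left_cancel_iff]

theorem reachable_zero (hC : G.IsInducedPentagon s) (i : Fin 5) : G.Reachable (s 0) (s i) := by
  induction i using Fin.induction with
  | zero => rfl
  | succ k ih =>
    exact ih.trans ((hC.2 _ _).mpr (Or.inl (by clear ih; revert k; decide))).reachable

variable (hind : ∀ x y z : V, G.Reachable x y → G.Reachable x z →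
      x ≠ y → x ≠ z → y ≠ z → ¬ G.Adj x y → ¬ G.Adj x z → ¬ G.Adj y z → False)
    (hcn : ∀ u v : V, u ≠ v → ¬ G.Adj u v →
      ∀ w₁ w₂, G.Adj u w₁ → G.Adj v w₁ → G.Adj u w₂ → G.Adj v w₂ → w₁ = w₂)
include hind hcn

theorem mem_range_of_adj_zero (hC : G.IsInducedPentagon s) {v : V} (hv : G.Adj (s 0) v) :
    v ∈ Set.range s := by
  by_contra hvs
  have hne (i : Fin 5) : v ≠ s i := fun h => hvs ⟨i, h.symm⟩
  have reach (i : Fin 5) : G.Reachable v (s i) := hv.symm.reachable.trans (hC.reachable_zero i)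
  have h2 : ¬ G.Adj v (s 2) := fun h => hne 1 <|
    (hcn (s 0) (s 2) (hC.1.ne (by decide)) ((hC.2 0 2).not.mpr (by decide)) (s 1) v
      ((hC.2 0 1).mpr (by decide)) ((hC.2 2 1).mpr (by decide)) hv h.symm).symm
  have h3 : ¬ G.Adj v (s 3) := fun h => hne 4 <|
    (hcn (s 0) (s 3) (hC.1.ne (by decide)) ((hC.2 0 3).not.mpr (by decide)) (s 4) v
      ((hC.2 0 4).mpr (by decide)) ((hC.2 3 4).mpr (by decide)) hv h.symm).symm
  have h1 : G.Adj v (s 1) := by_contra fun h => hind v (s 1) (s 3) (reach 1) (reach 3)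
    (hne 1) (hne 3) (hC.1.ne (by decide)) h h3 ((hC.2 1 3).not.mpr (by decide))
  have h4 : G.Adj v (s 4) := by_contra fun h => hind v (s 2) (s 4) (reach 2) (reach 4)
    (hne 2) (hne 4) (hC.1.ne (by decide)) h2 h ((hC.2 2 4).not.mpr (by decide))
  exact hne 0 <| (hcn (s 1) (s 4) (hC.1.ne (by decide)) ((hC.2 1 4).not.mpr (by decide)) (s 0) v
    ((hC.2 1 0).mpr (by decide)) ((hC.2 4 0).mpr (by decide)) h1.symm h4.symm).symm

theorem mem_range_of_reachable (hC : G.IsInducedPentagon s) {v : V} (hv : G.Reachable (s 0) v) :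
    v ∈ Set.range s := by
  refine hv.mem_of_adj_closed ?_ ⟨0, rfl⟩
  rintro _ w ⟨k, rfl⟩ hw
  obtain ⟨i, rfl⟩ := (hC.rotate k).mem_range_of_adj_zero hind hcn (by simpa using hw)
  exact ⟨k + i, rfl⟩

end IsInducedPentagon

end SimpleGraph

theorem stmt14_general {V : Type*} (B : SimpleGraph V)
    (hind : ∀ x y z : V, B.Reachable x y → B.Reachable x z →
      x ≠ y → x ≠ z → y ≠ z → ¬ B.Adj x y → ¬ B.Adj x z → ¬ B.Adj y z → False)
    (hcn : ∀ u v : V, u ≠ v → ¬ B.Adj u v →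
      ∀ w₁ w₂, B.Adj u w₁ → B.Adj v w₁ → B.Adj u w₂ → B.Adj v w₂ → w₁ = w₂)
    (s : Fin 5 → V) (hs : Function.Injective s)
    (hcyc : ∀ i j : Fin 5, B.Adj (s i) (s j) ↔ (j = i + 1 ∨ i = j + 1)) :
    ∀ v : V, B.Reachable (s 0) v → ∃ i, v = s i := by
  intro v hv
  obtain ⟨i, rfl⟩ := SimpleGraph.IsInducedPentagon.mem_range_of_reachable hind hcn ⟨hs, hcyc⟩ hv
  exact ⟨i, rfl⟩

/-- If no component of `B` contains three independent vertices, any two non-adjacent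
vertices of `B` have at most one common neighbor, and `B` contains an induced 5-cycle,
then the component containing the 5-cycle is exactly the 5-cycle. -/
theorem stmt14 {V : Type*} [Fintype V] (B : SimpleGraph V)
    (hind : ∀ x y z : V, B.Reachable x y → B.Reachable x z →
      x ≠ y → x ≠ z → y ≠ z → ¬ B.Adj x y → ¬ B.Adj x z → ¬ B.Adj y z → False)
    (hcn : ∀ u v : V, u ≠ v → ¬ B.Adj u v →
      ∀ w₁ w₂, B.Adj u w₁ → B.Adj v w₁ → B.Adj u w₂ → B.Adj v w₂ → w₁ = w₂)
    (s : Fin 5 → V) (hs : Function.Injective s)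
    (hcyc : ∀ i j : Fin 5, B.Adj (s i) (s j) ↔ (j = i + 1 ∨ i = j + 1)) :
    ∀ v : V, B.Reachable (s 0) v → ∃ i, v = s i :=
  stmt14_general B hind hcn s hs hcyc
end

section
/- Let G be a graph whose complement is the disjoint union of two paths of equal order i (with i ≥ 1) and three further paths P_j, P_k, P_ℓ with j ≥ k ≥ ℓ ≥ 1, 3 ≤ j ≤ 4, and j ≤ k + ℓ ≤ 2j or k + ℓ ≤ j. If the total number of vertices is at least 10, then G has an orientation of diameter at most two. -/
open SimpleGraph in
def twoPlusThreePaths (i j k l : ℕ) :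
    SimpleGraph ((Fin 2 × Fin i) ⊕ (Fin j ⊕ (Fin k ⊕ Fin l))) :=
  ((⊥ : SimpleGraph (Fin 2)) □ pathGraph i) ⊕g (pathGraph j ⊕g (pathGraph k ⊕g pathGraph l))

open SimpleGraph

section Main

variable {i j k l : ℕ}

/-- The explicit orientation. -/
def bigD (i j k l : ℕ) (DR : (Fin j ⊕ (Fin k ⊕ Fin l)) → (Fin j ⊕ (Fin k ⊕ Fin l)) → Prop)
    (h : Fin j ⊕ (Fin k ⊕ Fin l)) :
    ((Fin 2 × Fin i) ⊕ (Fin j ⊕ (Fin k ⊕ Fin l))) →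
    ((Fin 2 × Fin i) ⊕ (Fin j ⊕ (Fin k ⊕ Fin l))) → Prop
  | Sum.inl (c, s), Sum.inl (c', t) =>
      if c = c' then s.val + 2 ≤ t.val
      else if c = 0 then s = t ∧ 2 ≤ i
      else ¬ (s = t ∧ 2 ≤ i)
  | Sum.inl (c, _), Sum.inr r => if c = 0 then r ≠ h else r = h
  | Sum.inr r, Sum.inl (c, _) => if c = 0 then r = h else r ≠ h
  | Sum.inr r, Sum.inr r' => DR r r'

variable {DR : (Fin j ⊕ (Fin k ⊕ Fin l)) → (Fin j ⊕ (Fin k ⊕ Fin l)) → Prop}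
variable {h : Fin j ⊕ (Fin k ⊕ Fin l)}

lemma bigD_ll {c c' : Fin 2} {s t : Fin i} :
    bigD i j k l DR h (Sum.inl (c, s)) (Sum.inl (c', t)) =
      if c = c' then s.val + 2 ≤ t.val
      else if c = 0 then s = t ∧ 2 ≤ i
      else ¬ (s = t ∧ 2 ≤ i) := rfl

lemma bigD_lr {c : Fin 2} {s : Fin i} {r : Fin j ⊕ (Fin k ⊕ Fin l)} :
    bigD i j k l DR h (Sum.inl (c, s)) (Sum.inr r) =
      if c = 0 then r ≠ h else r = h := rfl

lemma bigD_rl {c : Fin 2} {s : Fin i} {r : Fin j ⊕ (Fin k ⊕ Fin l)} :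
    bigD i j k l DR h (Sum.inr r) (Sum.inl (c, s)) =
      if c = 0 then r = h else r ≠ h := rfl

lemma bigD_rr {r r' : Fin j ⊕ (Fin k ⊕ Fin l)} :
    bigD i j k l DR h (Sum.inr r) (Sum.inr r') = DR r r' := rfl

lemma adj_ll_same {c : Fin 2} {s t : Fin i} :
    (twoPlusThreePaths i j k l)ᶜ.Adj (Sum.inl (c, s)) (Sum.inl (c, t)) ↔
      s ≠ t ∧ ¬ (pathGraph i).Adj s t := by
  simp only [twoPlusThreePaths, compl_adj, SimpleGraph.sum_adj, boxProd_adj, ne_eq,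
    Sum.inl.injEq, Prod.mk.injEq, bot_adj, false_and, false_or, true_and, and_true]

lemma adj_ll_diff {c c' : Fin 2} {s t : Fin i} (hc : c ≠ c') :
    (twoPlusThreePaths i j k l)ᶜ.Adj (Sum.inl (c, s)) (Sum.inl (c', t)) := by
  simp only [twoPlusThreePaths, compl_adj, SimpleGraph.sum_adj, boxProd_adj, ne_eq,
    Sum.inl.injEq, Prod.mk.injEq, bot_adj, false_and, false_or]
  tauto

lemma adj_lr {p : Fin 2 × Fin i} {r : Fin j ⊕ (Fin k ⊕ Fin l)} :
    (twoPlusThreePaths i j k l)ᶜ.Adj (Sum.inl p) (Sum.inr r) := by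
  simp [twoPlusThreePaths, compl_adj, SimpleGraph.sum_adj]

lemma adj_rl {p : Fin 2 × Fin i} {r : Fin j ⊕ (Fin k ⊕ Fin l)} :
    (twoPlusThreePaths i j k l)ᶜ.Adj (Sum.inr r) (Sum.inl p) := by
  simp [twoPlusThreePaths, compl_adj, SimpleGraph.sum_adj]

lemma adj_rr {r r' : Fin j ⊕ (Fin k ⊕ Fin l)} :
    (twoPlusThreePaths i j k l)ᶜ.Adj (Sum.inr r) (Sum.inr r') ↔
      (pathGraph j ⊕g (pathGraph k ⊕g pathGraph l))ᶜ.Adj r r' := by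
  simp only [twoPlusThreePaths, compl_adj, SimpleGraph.sum_adj, ne_eq, Sum.inr.injEq]

lemma fin2cases (c : Fin 2) : c = 0 ∨ c = 1 := by
  fin_cases c
  · exact Or.inl rfl
  · exact Or.inr rfl

theorem main (i j k l : ℕ) (hi : 1 ≤ i) (hj : 1 ≤ j)
    (DR : (Fin j ⊕ (Fin k ⊕ Fin l)) → (Fin j ⊕ (Fin k ⊕ Fin l)) → Prop)
    (h : Fin j ⊕ (Fin k ⊕ Fin l))
    (hh : h ≠ Sum.inl ⟨0, hj⟩)
    (hDR1 : ∀ r r', DR r r' → (pathGraph j ⊕g (pathGraph k ⊕g pathGraph l))ᶜ.Adj r r')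
    (hDR2 : ∀ r r', (pathGraph j ⊕g (pathGraph k ⊕g pathGraph l))ᶜ.Adj r r' →
      (DR r r' ↔ ¬ DR r' r))
    (hC1 : ∃ r, DR r h) (hC2 : ∃ r, DR h r)
    (hC3 : ∀ r r', r ≠ h → r' ≠ h → r ≠ r' → DR r r' ∨ ∃ w, DR r w ∧ DR w r') :
    ∃ D, IsOrientation (twoPlusThreePaths i j k l)ᶜ D ∧
      ∀ u v, u ≠ v → DistLE2 D u v := by
  refine ⟨bigD i j k l DR h, ⟨?_, ?_⟩, ?_⟩
  · -- arcs lie on edges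
    rintro (⟨c, s⟩ | r) (⟨c', t⟩ | r') hD
    · by_cases hc : c = c'
      · subst hc
        rw [bigD_ll, if_pos rfl] at hD
        rw [adj_ll_same, pathGraph_adj]
        refine ⟨fun hst => ?_, by omega⟩
        have := congrArg Fin.val hst
        omega
      · exact adj_ll_diff hc
    · exact adj_lr
    · exact adj_rl
    · exact (adj_rr).2 (hDR1 _ _ (by rwa [bigD_rr] at hD))
  · -- exactly one direction per edge
    rintro (⟨c, s⟩ | r) (⟨c', t⟩ | r') hA
    · by_cases hc : c = c'
      · subst hc
        rw [adj_ll_same, pathGraph_adj] at hA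
        obtain ⟨hst, hp⟩ := hA
        have hst' : s.val ≠ t.val := fun he => hst (Fin.ext he)
        rw [bigD_ll, if_pos rfl, bigD_ll, if_pos rfl]
        constructor
        · intro h1 h2; omega
        · intro h1; omega
      · rcases fin2cases c with rfl | rfl <;> rcases fin2cases c' with rfl | rfl
        · exact absurd rfl hc
        · rw [bigD_ll, if_neg (by decide), if_pos rfl,
            bigD_ll, if_neg (by decide), if_neg (by decide), not_not]
          constructor
          · rintro ⟨he, h2⟩; exact ⟨he.symm, h2⟩
          · rintro ⟨he, h2⟩; exact ⟨he.symm, h2⟩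
        · rw [bigD_ll, if_neg (by decide), if_neg (by decide),
            bigD_ll, if_neg (by decide), if_pos rfl]
          constructor
          · exact fun hn hx => hn ⟨hx.1.symm, hx.2⟩
          · exact fun hn hx => hn ⟨hx.1.symm, hx.2⟩
        · exact absurd rfl hc
    · rw [bigD_lr, bigD_rl]
      rcases fin2cases c with rfl | rfl
      · rw [if_pos rfl, if_pos rfl]
      · rw [if_neg (by decide), if_neg (by decide)]
        exact ⟨fun h1 h2 => h2 h1, fun h1 => Decidable.not_not.1 h1⟩
    · rw [bigD_lr, bigD_rl]
      rcases fin2cases c' with rfl | rfl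
      · rw [if_pos rfl, if_pos rfl]
        exact ⟨fun h1 h2 => h2 h1, fun h1 => Decidable.not_not.1 h1⟩
      · rw [if_neg (by decide), if_neg (by decide)]
    · exact hDR2 _ _ ((adj_rr).1 hA)
  · -- distance at most two
    have r0ne : (Sum.inl ⟨0, hj⟩ : Fin j ⊕ (Fin k ⊕ Fin l)) ≠ h := fun he => hh he.symm
    rintro (⟨c, s⟩ | r) (⟨c', t⟩ | r') huv
    · by_cases hc : c = c'
      · subst hc
        have hst : s ≠ t := by intro he; exact huv (by rw [he])
        have hst' : s.val ≠ t.val := fun he => hst (Fin.ext he)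
        have h2i : 2 ≤ i := by
          have h1 := s.isLt; have h2 := t.isLt; omega
        rcases fin2cases c with rfl | rfl
        · refine Or.inr ⟨Sum.inl (1, s), ?_, ?_⟩
          · rw [bigD_ll, if_neg (by decide), if_pos rfl]; exact ⟨rfl, h2i⟩
          · rw [bigD_ll, if_neg (by decide), if_neg (by decide)]
            rintro ⟨he, _⟩; exact hst he
        · refine Or.inr ⟨Sum.inl (0, t), ?_, ?_⟩
          · rw [bigD_ll, if_neg (by decide), if_neg (by decide)]
            rintro ⟨he, _⟩; exact hst he
          · rw [bigD_ll, if_neg (by decide), if_pos rfl]; exact ⟨rfl, h2i⟩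
      · rcases fin2cases c with rfl | rfl <;> rcases fin2cases c' with rfl | rfl
        · exact absurd rfl hc
        · refine Or.inr ⟨Sum.inr (Sum.inl ⟨0, hj⟩), ?_, ?_⟩
          · rw [bigD_lr, if_pos rfl]; exact r0ne
          · rw [bigD_rl, if_neg (by decide)]; exact r0ne
        · refine Or.inr ⟨Sum.inr h, ?_, ?_⟩
          · rw [bigD_lr, if_neg (by decide)]
          · rw [bigD_rl, if_pos rfl]
        · exact absurd rfl hc
    · -- from the A-side to the R-side
      rcases fin2cases c with rfl | rfl
      · by_cases hr : r' = h
        · by_cases h2i : 2 ≤ i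
          · refine Or.inr ⟨Sum.inl (1, s), ?_, ?_⟩
            · rw [bigD_ll, if_neg (by decide), if_pos rfl]; exact ⟨rfl, h2i⟩
            · rw [bigD_lr, if_neg (by decide)]; exact hr
          · obtain ⟨r1, hr1⟩ := hC1
            have hr1h : r1 ≠ h := (hDR1 _ _ hr1).ne
            refine Or.inr ⟨Sum.inr r1, ?_, ?_⟩
            · rw [bigD_lr, if_pos rfl]; exact hr1h
            · rw [bigD_rr, hr]; exact hr1
        · refine Or.inl ?_
          rw [bigD_lr, if_pos rfl]; exact hr
      · by_cases hr : r' = h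
        · refine Or.inl ?_
          rw [bigD_lr, if_neg (by decide)]; exact hr
        · by_cases h2i : 2 ≤ i
          · have hex : ∃ s' : Fin i, s'.val ≠ s.val := by
              rcases Nat.lt_or_ge s.val 1 with hs | hs
              · exact ⟨⟨1, by omega⟩, by show (1:ℕ) ≠ _; omega⟩
              · exact ⟨⟨0, by omega⟩, by show (0:ℕ) ≠ _; omega⟩
            obtain ⟨s', hs'⟩ := hex
            refine Or.inr ⟨Sum.inl (0, s'), ?_, ?_⟩
            · rw [bigD_ll, if_neg (by decide), if_neg (by decide)]
              rintro ⟨he, _⟩; exact hs' (congrArg Fin.val he).symm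
            · rw [bigD_lr, if_pos rfl]; exact hr
          · refine Or.inr ⟨Sum.inl (0, s), ?_, ?_⟩
            · rw [bigD_ll, if_neg (by decide), if_neg (by decide)]
              rintro ⟨_, hcon⟩; exact h2i hcon
            · rw [bigD_lr, if_pos rfl]; exact hr
    · -- from the R-side to the A-side
      by_cases hr : r = h
      · rcases fin2cases c' with rfl | rfl
        · refine Or.inl ?_
          rw [bigD_rl, if_pos rfl]; exact hr
        · by_cases h2i : 2 ≤ i
          · refine Or.inr ⟨Sum.inl (0, t), ?_, ?_⟩
            · rw [bigD_rl, if_pos rfl]; exact hr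
            · rw [bigD_ll, if_neg (by decide), if_pos rfl]; exact ⟨rfl, h2i⟩
          · obtain ⟨r2, hr2⟩ := hC2
            have hr2h : r2 ≠ h := (hDR1 _ _ hr2).ne.symm
            refine Or.inr ⟨Sum.inr r2, ?_, ?_⟩
            · rw [bigD_rr, hr]; exact hr2
            · rw [bigD_rl, if_neg (by decide)]; exact hr2h
      · rcases fin2cases c' with rfl | rfl
        · by_cases h2i : 2 ≤ i
          · have hex : ∃ t' : Fin i, t'.val ≠ t.val := by
              rcases Nat.lt_or_ge t.val 1 with hs | hs
              · exact ⟨⟨1, by omega⟩, by show (1:ℕ) ≠ _; omega⟩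
              · exact ⟨⟨0, by omega⟩, by show (0:ℕ) ≠ _; omega⟩
            obtain ⟨t', ht'⟩ := hex
            refine Or.inr ⟨Sum.inl (1, t'), ?_, ?_⟩
            · rw [bigD_rl, if_neg (by decide)]; exact hr
            · rw [bigD_ll, if_neg (by decide), if_neg (by decide)]
              rintro ⟨he, _⟩; exact ht' (congrArg Fin.val he)
          · refine Or.inr ⟨Sum.inl (1, t), ?_, ?_⟩
            · rw [bigD_rl, if_neg (by decide)]; exact hr
            · rw [bigD_ll, if_neg (by decide), if_neg (by decide)]
              rintro ⟨_, hcon⟩; exact h2i hcon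
        · refine Or.inl ?_
          rw [bigD_rl, if_neg (by decide)]; exact hr
    · -- both on the R-side
      have hne : r ≠ r' := fun he => huv (by rw [he])
      by_cases hr : r = h
      · refine Or.inr ⟨Sum.inl (0, ⟨0, hi⟩), ?_, ?_⟩
        · rw [bigD_rl, if_pos rfl]; exact hr
        · rw [bigD_lr, if_pos rfl]
          intro he; exact hne (hr.trans he.symm)
      · by_cases hr' : r' = h
        · refine Or.inr ⟨Sum.inl (1, ⟨0, hi⟩), ?_, ?_⟩
          · rw [bigD_rl, if_neg (by decide)]; exact hr
          · rw [bigD_lr, if_neg (by decide)]; exact hr'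
        · rcases hC3 r r' hr hr' hne with hd | ⟨w, hw1, hw2⟩
          · exact Or.inl (by rw [bigD_rr]; exact hd)
          · exact Or.inr ⟨Sum.inr w, by rw [bigD_rr]; exact hw1, by rw [bigD_rr]; exact hw2⟩

end Main

/-- Arithmetic description of the adjacency relation of `(P_j ∪ P_k ∪ P_l)ᶜ`
in the coordinates given by `encR`. -/
def adjN (j k l : ℕ) (a b : ℕ) : Prop :=
  a ≠ b ∧ ¬ ((a < j ∧ b < j ∧ (a + 1 = b ∨ b + 1 = a)) ∨
      (j ≤ a ∧ a < j + k ∧ j ≤ b ∧ b < j + k ∧ (a + 1 = b ∨ b + 1 = a)) ∨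
      (j + k ≤ a ∧ a < j + k + l ∧ j + k ≤ b ∧ b < j + k + l ∧ (a + 1 = b ∨ b + 1 = a)))

instance (j k l a b : ℕ) : Decidable (adjN j k l a b) := by unfold adjN; infer_instance

/-- Encode the vertices of the three fixed paths as natural numbers. -/
def encR (j k l : ℕ) : (Fin j ⊕ (Fin k ⊕ Fin l)) → ℕ :=
  Sum.elim Fin.val (Sum.elim (fun c => j + c.val) (fun d => j + k + d.val))

lemma encR_adj {j k l : ℕ} (r r' : Fin j ⊕ (Fin k ⊕ Fin l)) :
    (pathGraph j ⊕g (pathGraph k ⊕g pathGraph l))ᶜ.Adj r r' ↔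
      adjN j k l (encR j k l r) (encR j k l r') := by
  obtain (a | b | c) := r <;> obtain (a' | b' | c') := r' <;>
    simp only [encR, Sum.elim_inl, Sum.elim_inr, compl_adj, SimpleGraph.sum_adj,
      pathGraph_adj, adjN, ne_eq, Sum.inl.injEq, Sum.inr.injEq, Fin.ext_iff,
      reduceCtorEq, not_false_eq_true, true_and, true_iff, iff_true] <;>
    (try have := a.isLt) <;> (try have := a'.isLt) <;> (try have := b.isLt) <;>
    (try have := b'.isLt) <;> (try have := c.isLt) <;> (try have := c'.isLt) <;>
    omega

theorem main' (i j k l : ℕ) (hi : 1 ≤ i) (hj : 1 ≤ j)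
    (DR : (Fin j ⊕ (Fin k ⊕ Fin l)) → (Fin j ⊕ (Fin k ⊕ Fin l)) → Prop)
    (h : Fin j ⊕ (Fin k ⊕ Fin l))
    (hh : h ≠ Sum.inl ⟨0, hj⟩)
    (hDR1 : ∀ r r', DR r r' → adjN j k l (encR j k l r) (encR j k l r'))
    (hDR2 : ∀ r r', adjN j k l (encR j k l r) (encR j k l r') → (DR r r' ↔ ¬ DR r' r))
    (hC1 : ∃ r, DR r h) (hC2 : ∃ r, DR h r)
    (hC3 : ∀ r r', r ≠ h → r' ≠ h → r ≠ r' → DR r r' ∨ ∃ w, DR r w ∧ DR w r') :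
    ∃ D, IsOrientation (twoPlusThreePaths i j k l)ᶜ D ∧
      ∀ u v, u ≠ v → DistLE2 D u v :=
  main i j k l hi hj DR h hh
    (fun r r' hd => (encR_adj r r').2 (hDR1 r r' hd))
    (fun r r' ha => hDR2 r r' ((encR_adj r r').1 ha))
    hC1 hC2 hC3

set_option maxHeartbeats 1000000 in
/-- If the complement of `G` is `2P_i ∪ P_j ∪ P_k ∪ P_ℓ` with `i ≥ 1`, `j ≥ k ≥ ℓ ≥ 1`,
`3 ≤ j ≤ 4`, and `j ≤ k + ℓ ≤ 2j` or `k + ℓ ≤ j`, and the total order is at least 10,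
then `G` has an orientation of diameter at most two. -/
theorem stmt15 (i j k l : ℕ) (hi : 1 ≤ i) (hl : 1 ≤ l) (hlk : l ≤ k) (hkj : k ≤ j)
    (hj3 : 3 ≤ j) (hj4 : j ≤ 4)
    (hkl : (j ≤ k + l ∧ k + l ≤ 2 * j) ∨ k + l ≤ j)
    (htot : 10 ≤ 2 * i + j + k + l) :
    ∃ D, IsOrientation (twoPlusThreePaths i j k l)ᶜ D ∧
      ∀ u v, u ≠ v → DistLE2 D u v := by
  clear hkl htot
  have hk1 : 1 ≤ k := le_trans hl hlk
  interval_cases j <;> interval_cases k <;> interval_cases l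
  · exact main' i 3 1 1 hi (by norm_num)
      (fun r r' => (encR 3 1 1 r, encR 3 1 1 r') ∈ ([(0,3), (0,4), (1,4), (2,0), (3,1), (3,2), (4,2), (4,3)] : List (ℕ × ℕ)))
      (Sum.inl 1) (by decide) (by decide) (by decide) (by decide) (by decide) (by decide)
  · exact main' i 3 2 1 hi (by norm_num)
      (fun r r' => (encR 3 2 1 r, encR 3 2 1 r') ∈ ([(0,4), (0,5), (1,3), (2,0), (2,5), (3,0), (3,2), (4,1), (4,2), (5,1), (5,3), (5,4)] : List (ℕ × ℕ)))
      (Sum.inl 1) (by decide) (by decide) (by decide) (by decide) (by decide) (by decide)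
  · exact main' i 3 2 2 hi (by norm_num)
      (fun r r' => (encR 3 2 2 r, encR 3 2 2 r') ∈ ([(0,4), (0,5), (1,3), (1,5), (2,0), (2,5), (2,6), (3,0), (3,2), (3,6), (4,1), (4,2), (5,3), (5,4), (6,0), (6,1), (6,4)] : List (ℕ × ℕ)))
      (Sum.inr (Sum.inr 1)) (by decide) (by decide) (by decide) (by decide) (by decide) (by decide)
  · exact main' i 3 3 1 hi (by norm_num)
      (fun r r' => (encR 3 3 1 r, encR 3 3 1 r') ∈ ([(0,3), (0,4), (0,5), (1,5), (1,6), (2,0), (2,3), (3,1), (3,6), (4,1), (4,2), (5,2), (5,3), (5,6), (6,0), (6,2), (6,4)] : List (ℕ × ℕ)))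
      (Sum.inr (Sum.inr 0)) (by decide) (by decide) (by decide) (by decide) (by decide) (by decide)
  · exact main' i 3 3 2 hi (by norm_num)
      (fun r r' => (encR 3 3 2 r, encR 3 3 2 r') ∈ ([(0,2), (0,6), (0,7), (1,3), (1,5), (1,7), (2,3), (2,4), (2,5), (3,0), (3,6), (3,7), (4,0), (4,1), (5,0), (5,3), (5,6), (6,1), (6,2), (6,4), (7,2), (7,4), (7,5)] : List (ℕ × ℕ)))
      (Sum.inr (Sum.inr 1)) (by decide) (by decide) (by decide) (by decide) (by decide) (by decide)
  · exact main' i 3 3 3 hi (by norm_num)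
      (fun r r' => (encR 3 3 3 r, encR 3 3 3 r') ∈ ([(0,4), (0,5), (0,7), (1,3), (1,4), (1,5), (1,8), (2,0), (2,6), (2,7), (2,8), (3,0), (3,2), (3,6), (4,2), (4,7), (4,8), (5,2), (5,3), (5,6), (5,7), (6,0), (6,1), (6,4), (6,8), (7,1), (7,3), (8,0), (8,3), (8,5)] : List (ℕ × ℕ)))
      (Sum.inr (Sum.inr 2)) (by decide) (by decide) (by decide) (by decide) (by decide) (by decide)
  · exact main' i 4 1 1 hi (by norm_num)
      (fun r r' => (encR 4 1 1 r, encR 4 1 1 r') ∈ ([(0,2), (0,4), (1,5), (2,5), (3,0), (3,1), (4,1), (4,2), (4,3), (5,0), (5,3), (5,4)] : List (ℕ × ℕ)))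
      (Sum.inl 1) (by decide) (by decide) (by decide) (by decide) (by decide) (by decide)
  · exact main' i 4 2 1 hi (by norm_num)
      (fun r r' => (encR 4 2 1 r, encR 4 2 1 r') ∈ ([(0,2), (0,3), (1,4), (1,6), (2,4), (2,5), (3,1), (3,6), (4,0), (4,3), (4,6), (5,0), (5,1), (5,3), (6,0), (6,2), (6,5)] : List (ℕ × ℕ)))
      (Sum.inr (Sum.inr 0)) (by decide) (by decide) (by decide) (by decide) (by decide) (by decide)
  · exact main' i 4 2 2 hi (by norm_num)
      (fun r r' => (encR 4 2 2 r, encR 4 2 2 r') ∈ ([(0,3), (0,4), (0,6), (1,6), (1,7), (2,0), (2,5), (3,1), (3,4), (3,5), (3,7), (4,1), (4,2), (4,6), (5,0), (5,1), (5,6), (6,2), (6,3), (7,0), (7,2), (7,4), (7,5)] : List (ℕ × ℕ)))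
      (Sum.inr (Sum.inr 1)) (by decide) (by decide) (by decide) (by decide) (by decide) (by decide)
  · exact main' i 4 3 1 hi (by norm_num)
      (fun r r' => (encR 4 3 1 r, encR 4 3 1 r') ∈ ([(0,3), (0,5), (0,6), (1,3), (1,7), (2,0), (2,4), (2,6), (3,4), (3,6), (3,7), (4,0), (4,1), (4,7), (5,1), (5,2), (5,3), (6,1), (6,4), (6,7), (7,0), (7,2), (7,5)] : List (ℕ × ℕ)))
      (Sum.inr (Sum.inr 0)) (by decide) (by decide) (by decide) (by decide) (by decide) (by decide)
  · exact main' i 4 3 2 hi (by norm_num)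
      (fun r r' => (encR 4 3 2 r, encR 4 3 2 r') ∈ ([(0,2), (0,4), (0,5), (0,7), (1,3), (1,4), (1,8), (2,6), (2,7), (2,8), (3,0), (3,6), (4,2), (4,3), (4,7), (4,8), (5,1), (5,2), (5,3), (6,0), (6,1), (6,4), (7,1), (7,3), (7,5), (7,6), (8,0), (8,3), (8,5), (8,6)] : List (ℕ × ℕ)))
      (Sum.inr (Sum.inr 1)) (by decide) (by decide) (by decide) (by decide) (by decide) (by decide)
  · exact main' i 4 3 3 hi (by norm_num)
      (fun r r' => (encR 4 3 3 r, encR 4 3 3 r') ∈ ([(0,5), (0,6), (0,7), (0,9), (1,3), (1,6), (1,7), (1,9), (2,0), (2,4), (2,5), (2,7), (3,0), (3,8), (3,9), (4,0), (4,1), (4,3), (4,9), (5,1), (5,3), (5,7), (5,8), (6,2), (6,3), (6,4), (6,8), (7,3), (7,4), (7,6), (7,9), (8,0), (8,1), (8,2), (8,4), (9,2), (9,5), (9,6)] : List (ℕ × ℕ)))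
      (Sum.inr (Sum.inr 2)) (by decide) (by decide) (by decide) (by decide) (by decide) (by decide)
  · exact main' i 4 4 1 hi (by norm_num)
      (fun r r' => (encR 4 4 1 r, encR 4 4 1 r') ∈ ([(0,2), (0,4), (0,5), (0,7), (1,4), (1,8), (2,6), (2,7), (3,0), (3,1), (3,6), (3,8), (4,2), (4,3), (4,7), (4,8), (5,1), (5,2), (5,3), (6,0), (6,1), (6,4), (7,1), (7,3), (7,5), (7,8), (8,0), (8,2), (8,5), (8,6)] : List (ℕ × ℕ)))
      (Sum.inr (Sum.inr 0)) (by decide) (by decide) (by decide) (by decide) (by decide) (by decide)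
  · exact main' i 4 4 2 hi (by norm_num)
      (fun r r' => (encR 4 4 2 r, encR 4 4 2 r') ∈ ([(0,5), (0,6), (0,7), (0,9), (1,3), (1,6), (1,7), (1,9), (2,0), (2,4), (2,5), (2,7), (3,0), (3,8), (3,9), (4,0), (4,1), (4,3), (4,9), (5,1), (5,3), (5,8), (6,2), (6,3), (6,4), (7,3), (7,4), (7,5), (7,9), (8,0), (8,1), (8,2), (8,4), (8,6), (8,7), (9,2), (9,5), (9,6)] : List (ℕ × ℕ)))
      (Sum.inr (Sum.inr 1)) (by decide) (by decide) (by decide) (by decide) (by decide) (by decide)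
  · exact main' i 4 4 3 hi (by norm_num)
      (fun r r' => (encR 4 4 3 r, encR 4 4 3 r') ∈ ([(0,4), (0,5), (0,6), (1,5), (1,6), (1,8), (2,0), (2,5), (2,7), (3,0), (3,1), (3,5), (3,6), (3,10), (4,1), (4,2), (4,3), (4,7), (4,10), (5,7), (5,8), (5,10), (6,2), (6,4), (6,8), (6,9), (7,0), (7,1), (7,3), (7,9), (8,0), (8,2), (8,3), (8,4), (8,7), (8,10), (9,0), (9,1), (9,2), (9,3), (9,4), (9,5), (10,0), (10,1), (10,2), (10,6), (10,7)] : List (ℕ × ℕ)))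
      (Sum.inr (Sum.inr 2)) (by decide) (by decide) (by decide) (by decide) (by decide) (by decide)
  · exact main' i 4 4 4 hi (by norm_num)
      (fun r r' => (encR 4 4 4 r, encR 4 4 4 r') ∈ ([(0,4), (0,5), (0,10), (0,11), (1,4), (1,5), (1,6), (1,9), (2,0), (2,5), (2,9), (2,10), (2,11), (3,0), (3,1), (3,5), (3,7), (3,9), (3,11), (4,2), (4,3), (4,7), (4,11), (5,7), (5,8), (5,9), (5,10), (6,0), (6,2), (6,3), (6,4), (6,8), (6,10), (7,0), (7,1), (7,2), (7,10), (7,11), (8,0), (8,1), (8,2), (8,3), (8,4), (8,7), (9,0), (9,4), (9,6), (9,7), (10,1), (10,3), (10,4), (10,8), (11,1), (11,5), (11,6), (11,8), (11,9)] : List (ℕ × ℕ)))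
      (Sum.inr (Sum.inr 3)) (by decide) (by decide) (by decide) (by decide) (by decide) (by decide)
end
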